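/- arXiv:2510.15057 — 8 statements merged into one kernel-verified Lean document; each statement's English description precedes it below -/
import Mathlib

section
/- The stationary density is nondecreasing near the left boundary of its support: there exists x₀ ∈ (0, x₀'] such that φ is nondecreasing on [0, x₀] (indeed φ is differentiable with φ'(x) > 0 for all x ∈ (0, x₀)). -/
open MeasureTheory Filter Set
open intervalIntegral Asymptotics Topology

lemma moving_endpoint (Θ : ℝ → ℝ → ℝ) (hΘ : Continuous fun q : ℝ × ℝ => Θ q.1 q.2)
    (u : ℝ → ℝ) (hu_cont : Continuous u) (x₁ u' : ℝ) (hu : HasDerivAt u u' x₁) :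
    HasDerivAt (fun x => ∫ y in (u x₁)..(u x), Θ x y) (u' * Θ x₁ (u x₁)) x₁ := by
  set c := Θ x₁ (u x₁) with hc
  rw [hasDerivAt_iff_isLittleO]
  have hB0 : (∫ y in (u x₁)..(u x₁), Θ x₁ y) = 0 := intervalIntegral.integral_same
  have key : (fun x => (∫ y in (u x₁)..(u x), Θ x y) - c * (u x - u x₁))
      =o[𝓝 x₁] (fun x => x - x₁) := by
    have h1 : (fun x => (∫ y in (u x₁)..(u x), Θ x y) - c * (u x - u x₁))
        =o[𝓝 x₁] (fun x => u x - u x₁) := by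
      rw [Asymptotics.isLittleO_iff]
      intro η hη
      have hcont : ContinuousAt (fun q : ℝ × ℝ => Θ q.1 q.2) (x₁, u x₁) := hΘ.continuousAt
      rw [Metric.continuousAt_iff] at hcont
      obtain ⟨ρ, hρ, hball⟩ := hcont η hη
      have hev : ∀ᶠ x in 𝓝 x₁, |x - x₁| < ρ ∧ |u x - u x₁| < ρ := by
        have h1 : Tendsto (fun x => |x - x₁|) (𝓝 x₁) (𝓝 0) := by
          have : Tendsto (fun x : ℝ => x - x₁) (𝓝 x₁) (𝓝 (x₁ - x₁)) :=
            (continuous_id.sub continuous_const).tendsto x₁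
          simpa using this.abs
        have h2 : Tendsto (fun x => |u x - u x₁|) (𝓝 x₁) (𝓝 0) := by
          have : Tendsto (fun x : ℝ => u x - u x₁) (𝓝 x₁) (𝓝 (u x₁ - u x₁)) :=
            (hu_cont.sub continuous_const).tendsto x₁
          simpa using this.abs
        filter_upwards [h1.eventually (eventually_lt_nhds hρ),
          h2.eventually (eventually_lt_nhds hρ)] with x hx1 hx2
        exact ⟨hx1, hx2⟩
      filter_upwards [hev] with x hx
      have hint : ∀ y ∈ Set.uIoc (u x₁) (u x), ‖Θ x y - c‖ ≤ η := by
        intro y hy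
        have hy' : |y - u x₁| ≤ |u x - u x₁| := by
          rcases le_total (u x₁) (u x) with h | h
          · rw [uIoc_of_le h] at hy
            rw [abs_of_nonneg (by linarith [hy.1.le]), abs_of_nonneg (by linarith)]
            linarith [hy.2]
          · rw [uIoc_of_ge h] at hy
            rw [abs_of_nonpos (by linarith [hy.2]), abs_of_nonpos (by linarith)]
            linarith [hy.1.le]
        have hd : dist ((x, y) : ℝ × ℝ) (x₁, u x₁) < ρ := by
          rw [Prod.dist_eq]
          exact max_lt (by simpa [Real.dist_eq] using hx.1)
            (by simp only [Real.dist_eq]; exact lt_of_le_of_lt hy' hx.2)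
        exact (hball hd).le
      have heq : (∫ y in (u x₁)..(u x), Θ x y) - c * (u x - u x₁)
          = ∫ y in (u x₁)..(u x), (Θ x y - c) := by
        have hic : IntervalIntegrable (fun y => Θ x y) volume (u x₁) (u x) := by
          apply Continuous.intervalIntegrable
          exact hΘ.comp (continuous_const.prodMk continuous_id)
        rw [intervalIntegral.integral_sub hic intervalIntegrable_const,
          intervalIntegral.integral_const]
        ring_nf
      rw [heq]
      calc ‖∫ y in (u x₁)..(u x), (Θ x y - c)‖ ≤ η * |u x - u x₁| :=
            intervalIntegral.norm_integral_le_of_norm_le_const hint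
        _ = η * ‖u x - u x₁‖ := by rw [Real.norm_eq_abs]
    have h2 : (fun x => u x - u x₁) =O[𝓝 x₁] (fun x => x - x₁) := hu.isBigO_sub
    exact h1.trans_isBigO h2
  have hu' : (fun x => c * (u x - u x₁) - c * (u' * (x - x₁))) =o[𝓝 x₁] (fun x => x - x₁) := by
    have h := (hasDerivAt_iff_isLittleO.mp hu).const_smul_left c
    have heq2 : (fun x => c * (u x - u x₁) - c * (u' * (x - x₁)))
        = (c • fun x' => u x' - u x₁ - (x' - x₁) * u') := by
      funext x; simp only [Pi.smul_apply, smul_eq_mul]; ring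
    rw [heq2]; exact h
  have := key.add hu'
  have heq : (fun x => (∫ y in (u x₁)..(u x), Θ x y) - c * (u x - u x₁)
      + (c * (u x - u x₁) - c * (u' * (x - x₁))))
      = fun x => (∫ y in (u x₁)..(u x), Θ x y) - (∫ y in (u x₁)..(u x₁), Θ x₁ y)
        - (x - x₁) * (u' * c) := by
    funext x
    rw [hB0]
    ring
  rw [heq] at this
  simpa [smul_eq_mul, mul_comm] using this


set_option maxHeartbeats 2000000 in
theorem stmt_2
    (ε : ℝ) (hε : 0 < ε)
    (f g : ℝ → ℝ)
    (hf : ContDiff ℝ 2 f) (hg : ContDiff ℝ 2 g)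
    (hfmono : StrictMono f)
    (hgf : Function.LeftInverse g f) (hfg : Function.RightInverse g f)
    (fm fminv : ℝ → ℝ)
    (hfm : ∀ x, fm x = f x - ε)
    (hfminv : ∀ x, fminv x = g (x + ε))
    (hfm0 : fm 0 = 0)
    (lam : ℝ) (hlam : lam = deriv fm 0) (hlam0 : 0 < lam) (hlam1 : lam < 1)
    (p : ℝ → ℝ) (hp : ContDiffOn ℝ 1 p (Set.Icc (-ε) ε))
    (hpnn : ∀ z ∈ Set.Icc (-ε) ε, 0 ≤ p z) (hpe : 0 < p (-ε))
    (x₀' : ℝ) (hx₀' : 0 < x₀')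
    (φ : ℝ → ℝ) (hφc : Continuous φ) (hφnn : ∀ x, 0 ≤ φ x)
    (hφpos : ∀ x ∈ Set.Ioc 0 x₀', 0 < φ x)
    (hstat : ∀ x ∈ Set.Icc 0 x₀',
      φ x = (1/ε) * ∫ y in (0:ℝ)..(fminv x), p (x - f y) * φ y) :
    ∃ x₀ ∈ Set.Ioc (0:ℝ) x₀', MonotoneOn φ (Set.Icc 0 x₀) ∧
      ∀ x ∈ Set.Ioo (0:ℝ) x₀, DifferentiableAt ℝ φ x ∧ 0 < deriv φ x := by
  -- basic facts about f, g, u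
  have hf0 : f 0 = ε := by have h := hfm 0; rw [h] at hfm0; linarith
  set u : ℝ → ℝ := fun x => g (x + ε) with hu_def
  have hfminv' : fminv = u := funext hfminv
  have hgmono : StrictMono g := by
    intro a b hab
    by_contra h
    push_neg at h
    have := hfmono.monotone h
    rw [hfg a, hfg b] at this
    linarith
  have hu_cont : Continuous u := hg.continuous.comp (continuous_id.add continuous_const)
  have hu0 : u 0 = 0 := by
    show g (0 + ε) = 0
    rw [zero_add, ← hf0, hgf 0]
  have hu_mono : StrictMono u := fun a b hab => hgmono (by linarith)
  have hfu : ∀ x, f (u x) = x + ε := fun x => hfg (x + ε)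
  have hgdiff : Differentiable ℝ g := hg.differentiable (by norm_num)
  have hfdiff : Differentiable ℝ f := hf.differentiable (by norm_num)
  set u' : ℝ → ℝ := fun x => deriv g (x + ε) with hu'_def
  have hu'_cont : Continuous u' :=
    (hg.continuous_deriv one_le_two).comp (continuous_id.add continuous_const)
  have hu_deriv : ∀ x, HasDerivAt u (u' x) x := by
    intro x
    have h1 : HasDerivAt (fun x : ℝ => x + ε) 1 x := (hasDerivAt_id x).add_const ε
    have h2 : HasDerivAt g (deriv g (x + ε)) (x + ε) := (hgdiff (x + ε)).hasDerivAt
    have h3 := h2.comp x h1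
    simp only [mul_one] at h3
    exact h3
  -- lam = deriv f 0, and u' 0 = 1/lam
  have hlamf : deriv f 0 = lam := by
    rw [hlam]
    have : fm = fun x => f x - ε := funext hfm
    rw [this, deriv_sub_const]
  have hchain : deriv g ε * deriv f 0 = 1 := by
    have h1 : HasDerivAt f (deriv f 0) 0 := (hfdiff 0).hasDerivAt
    have h2 : HasDerivAt g (deriv g ε) ε := (hgdiff ε).hasDerivAt
    rw [← hf0] at h2
    have h3 : HasDerivAt (g ∘ f) (deriv g (f 0) * deriv f 0) 0 := h2.comp 0 h1
    have h4 : g ∘ f = id := funext hgf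
    rw [h4, hf0] at h3
    exact h3.unique (hasDerivAt_id 0)
  have hu'0 : u' 0 = 1 / lam := by
    show deriv g (0 + ε) = 1 / lam
    rw [zero_add, ← hlamf]
    have hne : deriv f 0 ≠ 0 := by intro h; rw [h, mul_zero] at hchain; norm_num at hchain
    field_simp
    linarith [hchain]
  -- the clamped version of p
  set cl : ℝ → ℝ := fun z => max (-ε) (min ε z) with hcl_def
  have hcl_mem : ∀ z, cl z ∈ Icc (-ε) ε := by
    intro z
    constructor
    · exact le_max_left _ _
    · exact max_le (by linarith) (min_le_left _ _)
  have hcl_id : ∀ z ∈ Icc (-ε) ε, cl z = z := by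
    intro z hz
    show max (-ε) (min ε z) = z
    rw [min_eq_right hz.2, max_eq_right hz.1]
  have hcl_cont : Continuous cl := continuous_const.max (continuous_const.min continuous_id)
  have hcl_lip : LipschitzWith 1 cl :=
    (LipschitzWith.const_max (LipschitzWith.const_min LipschitzWith.id (ε)) (-ε) : _)
  set P : ℝ → ℝ := fun z => p (cl z) with hP_def
  have hP_cont : Continuous P := hp.continuousOn.comp_continuous hcl_cont hcl_mem
  have hP_eq : ∀ z ∈ Icc (-ε) ε, P z = p z := fun z hz => by
    show p (cl z) = p z; rw [hcl_id z hz]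
  have hP_nn : ∀ z, 0 ≤ P z := fun z => hpnn _ (hcl_mem z)
  have hPe : P (-ε) = p (-ε) := hP_eq _ ⟨le_refl _, by linarith⟩
  -- derivative of p within Icc
  set pd : ℝ → ℝ := derivWithin p (Icc (-ε) ε) with hpd_def
  have hpd_cont : ContinuousOn pd (Icc (-ε) ε) :=
    hp.continuousOn_derivWithin (uniqueDiffOn_Icc (by linarith)) le_rfl
  obtain ⟨M₀, hM₀⟩ : ∃ M₀, ∀ z ∈ Icc (-ε) ε, ‖pd z‖ ≤ M₀ :=
    isCompact_Icc.exists_bound_of_continuousOn hpd_cont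
  set M : ℝ := max M₀ 0 with hM_def
  have hM_nn : 0 ≤ M := le_max_right _ _
  have hM : ∀ z ∈ Icc (-ε) ε, |pd z| ≤ M := fun z hz =>
    le_trans (hM₀ z hz) (le_max_left _ _)
  -- P is Lipschitz
  have hp_lipOn : LipschitzOnWith M.toNNReal p (Icc (-ε) ε) := by
    apply Convex.lipschitzOnWith_of_nnnorm_hasDerivWithin_le (convex_Icc _ _)
    · intro z hz
      exact ((hp.differentiableOn one_ne_zero) z hz).hasDerivWithinAt
    · intro z hz
      rw [← NNReal.coe_le_coe, coe_nnnorm, Real.coe_toNNReal _ hM_nn]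
      exact hM z hz
  have hP_lip : LipschitzWith M.toNNReal P := by
    intro a b
    calc edist (P a) (P b) = edist (p (cl a)) (p (cl b)) := rfl
      _ ≤ M.toNNReal * edist (cl a) (cl b) := hp_lipOn (hcl_mem a) (hcl_mem b)
      _ ≤ M.toNNReal * edist a b := by
          apply mul_le_mul_right
          simpa using hcl_lip a b
  -- P has derivative pd at interior points
  have hP_deriv : ∀ z ∈ Ioo (-ε) ε, HasDerivAt P (pd z) z := by
    intro z hz
    have hnhds : Icc (-ε) ε ∈ 𝓝 z := Icc_mem_nhds hz.1 hz.2
    have hdiff : DifferentiableAt ℝ p z :=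
      ((hp z ⟨hz.1.le, hz.2.le⟩).contDiffAt hnhds).differentiableAt one_ne_zero
    have hpdz : pd z = deriv p z := derivWithin_of_mem_nhds hnhds
    have h1 : HasDerivAt p (pd z) z := by rw [hpdz]; exact hdiff.hasDerivAt
    apply h1.congr_of_eventuallyEq
    filter_upwards [hnhds] with w hw
    exact hP_eq w hw
  -- stationarity in terms of P
  have hu_nn : ∀ x, 0 ≤ x → 0 ≤ u x := by
    intro x hx
    rcases eq_or_lt_of_le hx with h | h
    · rw [← h, hu0]
    · exact le_of_lt (hu0 ▸ hu_mono h)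
  have harg_mem : ∀ x y, 0 ≤ x → x ≤ 2*ε → 0 ≤ y → y ≤ u x → x - f y ∈ Icc (-ε) ε := by
    intro x y hx hx2 hy hyu
    constructor
    · have : f y ≤ f (u x) := hfmono.monotone hyu
      rw [hfu] at this
      linarith
    · have : f 0 ≤ f y := hfmono.monotone hy
      rw [hf0] at this
      linarith
  have hstatP : ∀ x, 0 ≤ x → x ≤ x₀' → x ≤ 2*ε →
      φ x = (1/ε) * ∫ y in (0:ℝ)..(u x), P (x - f y) * φ y := by
    intro x hx hx' hx2
    rw [hstat x ⟨hx, hx'⟩, hfminv']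
    congr 1
    apply intervalIntegral.integral_congr
    intro y hy
    rw [uIcc_of_le (hu_nn x hx)] at hy
    show p (x - f y) * φ y = P (x - f y) * φ y
    rw [hP_eq _ (harg_mem x y hx hx2 hy.1 hy.2)]
  -- the cumulative function Φ
  set Φ : ℝ → ℝ := fun t => ∫ y in (0:ℝ)..t, φ y with hΦ_def
  have hΦ_nn : ∀ t, 0 ≤ t → 0 ≤ Φ t := fun t ht =>
    intervalIntegral.integral_nonneg ht (fun y _ => hφnn y)
  have hΦ_mono : ∀ a b, 0 ≤ a → a ≤ b → Φ a ≤ Φ b := by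
    intro a b ha hab
    have h1 : Φ a + ∫ y in a..b, φ y = Φ b :=
      intervalIntegral.integral_add_adjacent_intervals
        (hφc.intervalIntegrable _ _) (hφc.intervalIntegrable _ _)
    have h2 : 0 ≤ ∫ y in a..b, φ y :=
      intervalIntegral.integral_nonneg hab (fun y _ => hφnn y)
    linarith
  -- bounds on P near -ε
  set c : ℝ := p (-ε) / 2 with hc_def
  have hc_pos : 0 < c := by positivity
  obtain ⟨δp, hδp_pos, hδp⟩ : ∃ δp > 0, ∀ z, |z + ε| ≤ δp → c ≤ P z ∧ P z ≤ 3*c := by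
    have hcont : ContinuousAt P (-ε) := hP_cont.continuousAt
    rw [Metric.continuousAt_iff] at hcont
    obtain ⟨δ, hδ, hball⟩ := hcont c hc_pos
    refine ⟨δ/2, by linarith, fun z hz => ?_⟩
    have : dist z (-ε) < δ := by
      rw [Real.dist_eq]
      have : |z - -ε| = |z + ε| := by ring_nf
      rw [this]; linarith
    have h := hball this
    rw [Real.dist_eq, hPe] at h
    have h' := abs_lt.mp h
    constructor <;> [linarith [h'.1]; linarith [h'.2]]
  set r₁ : ℝ := min (min δp (2*ε)) x₀' with hr₁_def
  have hr₁_pos : 0 < r₁ := lt_min (lt_min hδp_pos (by linarith)) hx₀'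
  have hr₁_δp : r₁ ≤ δp := le_trans (min_le_left _ _) (min_le_left _ _)
  have hr₁_2ε : r₁ ≤ 2*ε := le_trans (min_le_left _ _) (min_le_right _ _)
  have hr₁_x₀' : r₁ ≤ x₀' := min_le_right _ _
  -- pointwise bounds from the stationarity equation
  have hPbound : ∀ t y, 0 ≤ t → t ≤ r₁ → 0 ≤ y → y ≤ u t →
      c ≤ P (t - f y) ∧ P (t - f y) ≤ 3*c := by
    intro t y ht htr hy hyu
    apply hδp
    have hmem := harg_mem t y ht (le_trans htr hr₁_2ε) hy hyu
    have h1 : 0 ≤ t - f y + ε := by linarith [hmem.1]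
    have h2 : t - f y + ε ≤ t := by
      have : f 0 ≤ f y := hfmono.monotone hy
      rw [hf0] at this
      linarith
    rw [abs_of_nonneg h1]
    linarith
  have hbounds : ∀ t, 0 ≤ t → t ≤ r₁ →
      c * Φ (u t) ≤ ε * φ t ∧ ε * φ t ≤ 3*c * Φ (u t) := by
    intro t ht htr
    have hstatt := hstatP t ht (le_trans htr hr₁_x₀') (le_trans htr hr₁_2ε)
    have hIeq : ε * φ t = ∫ y in (0:ℝ)..(u t), P (t - f y) * φ y := by
      rw [hstatt]; field_simp
    have hint : IntervalIntegrable (fun y => P (t - f y) * φ y) volume 0 (u t) :=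
      ((hP_cont.comp (continuous_const.sub hfdiff.continuous)).mul hφc).intervalIntegrable _ _
    have hintc : IntervalIntegrable (fun y => c * φ y) volume 0 (u t) :=
      (continuous_const.mul hφc).intervalIntegrable _ _
    have hintc3 : IntervalIntegrable (fun y => 3*c * φ y) volume 0 (u t) :=
      (continuous_const.mul hφc).intervalIntegrable _ _
    constructor
    · rw [hIeq]
      have : (∫ y in (0:ℝ)..(u t), c * φ y) ≤ ∫ y in (0:ℝ)..(u t), P (t - f y) * φ y := by
        apply intervalIntegral.integral_mono_on (hu_nn t ht) hintc hint
        intro y hy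
        exact mul_le_mul_of_nonneg_right (hPbound t y ht htr hy.1 hy.2).1 (hφnn y)
      rwa [intervalIntegral.integral_const_mul] at this
    · rw [hIeq]
      have : (∫ y in (0:ℝ)..(u t), P (t - f y) * φ y) ≤ ∫ y in (0:ℝ)..(u t), 3*c * φ y := by
        apply intervalIntegral.integral_mono_on (hu_nn t ht) hint hintc3
        intro y hy
        exact mul_le_mul_of_nonneg_right (hPbound t y ht htr hy.1 hy.2).2 (hφnn y)
      rwa [intervalIntegral.integral_const_mul] at this
  have hΦbound : ∀ t, 0 ≤ t → t ≤ r₁ → ε * Φ t ≤ 3*c * t * Φ (u t) := by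
    intro t ht htr
    have h1 : ε * Φ t = ∫ s in (0:ℝ)..t, ε * φ s := by
      rw [intervalIntegral.integral_const_mul]
    rw [h1]
    have h2 : (∫ s in (0:ℝ)..t, ε * φ s) ≤ ∫ s in (0:ℝ)..t, 3*c * Φ (u t) := by
      apply intervalIntegral.integral_mono_on ht
        ((continuous_const.mul hφc).intervalIntegrable _ _)
        (intervalIntegrable_const)
      intro s hs
      have hb := (hbounds s hs.1 (le_trans hs.2 htr)).2
      have hm : Φ (u s) ≤ Φ (u t) :=
        hΦ_mono _ _ (hu_nn s hs.1) (hu_mono.monotone hs.2)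
      show ε * φ s ≤ 3*c * Φ (u t)
      nlinarith [hc_pos]
    rw [intervalIntegral.integral_const] at h2
    simp only [smul_eq_mul, sub_zero] at h2
    linarith
  -- choose thresholds
  obtain ⟨δ₄, hδ₄_pos, hδ₄⟩ : ∃ δ₄ > 0, ∀ t, 0 ≤ t → t ≤ δ₄ → u t ≤ r₁ := by
    have hcont : ContinuousAt u 0 := hu_cont.continuousAt
    rw [Metric.continuousAt_iff] at hcont
    obtain ⟨δ, hδ, hball⟩ := hcont r₁ hr₁_pos
    refine ⟨δ/2, by linarith, fun t ht htδ => ?_⟩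
    have : dist t 0 < δ := by
      rw [Real.dist_eq, sub_zero, abs_of_nonneg ht]; linarith
    have h := hball this
    rw [Real.dist_eq, hu0, sub_zero] at h
    have := abs_lt.mp h
    linarith [this.2]
  have hΦu : ∀ x, 0 ≤ x → x ≤ δ₄ → x ≤ r₁ → Φ (u x) ≤ 3 * u x * φ (u x) := by
    intro x hx hxδ hxr
    have hux_nn : 0 ≤ u x := hu_nn x hx
    have hux_r : u x ≤ r₁ := hδ₄ x hx hxδ
    have h1 := hΦbound (u x) hux_nn hux_r
    have h2 := (hbounds (u x) hux_nn hux_r).1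
    -- c * Φ (u (u x)) ≤ ε * φ (u x), ε * Φ (u x) ≤ 3c (u x) Φ (u (u x))
    nlinarith [hΦ_nn (u (u x)) (hu_nn _ hux_nn), hc_pos, hε]
  -- the function W controlling positivity
  set W : ℝ → ℝ := fun x => u' x * p (-ε) - 3 * M * u x with hW_def
  have hW_cont : Continuous W :=
    (hu'_cont.mul continuous_const).sub ((continuous_const.mul continuous_const).mul hu_cont)
  have hW0 : W 0 = (1/lam) * p (-ε) := by
    show u' 0 * p (-ε) - 3 * M * u 0 = (1/lam) * p (-ε)
    rw [hu'0, hu0]; ring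
  have hW0_pos : 0 < W 0 := by
    rw [hW0]
    positivity
  obtain ⟨δ₃, hδ₃_pos, hδ₃⟩ : ∃ δ₃ > 0, ∀ x, |x| ≤ δ₃ → 0 < W x := by
    have hcont : ContinuousAt W 0 := hW_cont.continuousAt
    rw [Metric.continuousAt_iff] at hcont
    obtain ⟨δ, hδ, hball⟩ := hcont (W 0) hW0_pos
    refine ⟨δ/2, by linarith, fun x hx => ?_⟩
    have : dist x 0 < δ := by rw [Real.dist_eq, sub_zero]; linarith
    have h := hball this
    rw [Real.dist_eq] at h
    have := abs_lt.mp h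
    linarith [this.1]
  set x₀ : ℝ := min (min δ₃ δ₄) r₁ with hx₀_def
  have hx₀_pos : 0 < x₀ := lt_min (lt_min hδ₃_pos hδ₄_pos) hr₁_pos
  have hx₀_δ₃ : x₀ ≤ δ₃ := le_trans (min_le_left _ _) (min_le_left _ _)
  have hx₀_δ₄ : x₀ ≤ δ₄ := le_trans (min_le_left _ _) (min_le_right _ _)
  have hx₀_r₁ : x₀ ≤ r₁ := min_le_right _ _
  -- the key derivative computation
  have key : ∀ x₁ ∈ Ioo (0:ℝ) x₀, ∃ d, HasDerivAt φ d x₁ ∧ 0 < d := by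
    intro x₁ hx₁
    obtain ⟨hx₁0, hx₁x₀⟩ := hx₁
    have hx₁r : x₁ < r₁ := lt_of_lt_of_le hx₁x₀ hx₀_r₁
    have hx₁2ε : x₁ < 2*ε := lt_of_lt_of_le hx₁r hr₁_2ε
    have hux₁_nn : 0 ≤ u x₁ := hu_nn x₁ hx₁0.le
    have hux₁_pos : 0 < u x₁ := hu0 ▸ hu_mono hx₁0
    have hux₁_r : u x₁ ≤ r₁ := hδ₄ x₁ hx₁0.le (le_trans hx₁x₀.le hx₀_δ₄)
    have hΘcont : Continuous (fun q : ℝ × ℝ => P (q.1 - f q.2) * φ q.2) :=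
      (hP_cont.comp (continuous_fst.sub (hfdiff.continuous.comp continuous_snd))).mul
        (hφc.comp continuous_snd)
    have hΘycont : ∀ x : ℝ, Continuous (fun y => P (x - f y) * φ y) := fun x =>
      (hP_cont.comp (continuous_const.sub hfdiff.continuous)).mul hφc
    -- part A : fixed endpoint, parametric derivative
    have hA := intervalIntegral.hasDerivAt_integral_of_dominated_loc_of_lip
      (F := fun x y => P (x - f y) * φ y) (F' := fun y => pd (x₁ - f y) * φ y)
      (x₀ := x₁) (a := 0) (b := u x₁) (bound := fun y => M * |φ y|)
      (μ := volume) (s := Metric.ball x₁ 1) (Metric.ball_mem_nhds x₁ one_pos)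
      (Eventually.of_forall fun x => ((hΘycont x).aestronglyMeasurable).restrict)
      ((hΘycont x₁).intervalIntegrable _ _)
      ?_ ?_ ((continuous_const.mul hφc.abs).intervalIntegrable _ _) ?_
    rotate_left
    · -- measurability of F'
      have hcont : ContinuousOn (fun y => pd (x₁ - f y) * φ y) (Icc 0 (u x₁)) := by
        apply ContinuousOn.mul _ hφc.continuousOn
        apply hpd_cont.comp ((continuous_const.sub hfdiff.continuous).continuousOn)
        intro y hy
        exact harg_mem x₁ y hx₁0.le hx₁2ε.le hy.1 hy.2
      have h1 : AEStronglyMeasurable (fun y => pd (x₁ - f y) * φ y)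
          (volume.restrict (Icc 0 (u x₁))) :=
        hcont.aestronglyMeasurable measurableSet_Icc
      apply h1.mono_measure
      apply Measure.restrict_mono _ le_rfl
      rw [uIoc_of_le hux₁_nn]
      exact Ioc_subset_Icc_self
    · -- Lipschitz bound
      apply Eventually.of_forall
      intro y _
      apply LipschitzWith.lipschitzOnWith
      rw [lipschitzWith_iff_dist_le_mul]
      intro a b
      have hc1 : dist (P (a - f y) * φ y) (P (b - f y) * φ y)
          = dist (P (a - f y)) (P (b - f y)) * |φ y| := by
        rw [Real.dist_eq, Real.dist_eq]
        rw [← sub_mul, abs_mul]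
      rw [hc1]
      have h2 : dist (P (a - f y)) (P (b - f y)) ≤ M * dist (a - f y) (b - f y) := by
        have := hP_lip.dist_le_mul (a - f y) (b - f y)
        rwa [Real.coe_toNNReal _ hM_nn] at this
      have h3 : dist (a - f y) (b - f y) = dist a b := by
        rw [Real.dist_eq, Real.dist_eq]; ring_nf
      rw [h3] at h2
      have h4 : (Real.nnabs (M * |φ y|) : ℝ) = M * |φ y| := by
        rw [Real.coe_nnabs, abs_of_nonneg (by positivity)]
      rw [h4]
      calc dist (P (a - f y)) (P (b - f y)) * |φ y| ≤ (M * dist a b) * |φ y| :=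
            mul_le_mul_of_nonneg_right h2 (abs_nonneg _)
        _ = M * |φ y| * dist a b := by ring
    · -- a.e. differentiability at x₁
      have hae : ∀ᵐ y : ℝ ∂volume, y ≠ u x₁ := by
        have h0 : volume ({u x₁} : Set ℝ) = 0 := measure_singleton _
        have := measure_eq_zero_iff_ae_notMem.mp h0
        filter_upwards [this] with y hy
        simpa using hy
      filter_upwards [hae] with y hy hyI
      rw [uIoc_of_le hux₁_nn] at hyI
      have hylt : y < u x₁ := lt_of_le_of_ne hyI.2 hy
      have hz : x₁ - f y ∈ Ioo (-ε) ε := by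
        constructor
        · have : f y < f (u x₁) := hfmono hylt
          rw [hfu] at this
          linarith
        · have : f 0 < f y := hfmono hyI.1
          rw [hf0] at this
          linarith
      have h1 : HasDerivAt (fun x => x - f y) 1 x₁ := (hasDerivAt_id x₁).sub_const (f y)
      have h2 := ((hP_deriv _ hz).comp x₁ h1).mul_const (φ y)
      simpa using h2
    obtain ⟨hIA_int, hA⟩ := hA
    -- part B : moving endpoint
    have hB := moving_endpoint (fun x y => P (x - f y) * φ y) hΘcont u hu_cont x₁ (u' x₁)
      (hu_deriv x₁)
    set IA : ℝ := ∫ y in (0:ℝ)..(u x₁), pd (x₁ - f y) * φ y with hIA_def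
    set IB : ℝ := u' x₁ * (P (x₁ - f (u x₁)) * φ (u x₁)) with hIB_def
    have hAB : HasDerivAt (fun x => (1/ε) * ((∫ y in (0:ℝ)..(u x₁), P (x - f y) * φ y)
        + ∫ y in (u x₁)..(u x), P (x - f y) * φ y)) ((1/ε) * (IA + IB)) x₁ :=
      (hA.add hB).const_mul _
    -- φ agrees with this function near x₁
    have heq : φ =ᶠ[𝓝 x₁] (fun x => (1/ε) * ((∫ y in (0:ℝ)..(u x₁), P (x - f y) * φ y)
        + ∫ y in (u x₁)..(u x), P (x - f y) * φ y)) := by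
      have hopen : Ioo (0:ℝ) (min x₀' (2*ε)) ∈ 𝓝 x₁ := by
        apply Ioo_mem_nhds hx₁0
        exact lt_min (lt_of_lt_of_le hx₁r hr₁_x₀') hx₁2ε
      filter_upwards [hopen] with x hx
      rw [hstatP x hx.1.le (le_trans hx.2.le (min_le_left _ _))
        (le_trans hx.2.le (min_le_right _ _))]
      congr 1
      rw [intervalIntegral.integral_add_adjacent_intervals
        ((hΘycont x).intervalIntegrable _ _) ((hΘycont x).intervalIntegrable _ _)]
    have hφd : HasDerivAt φ ((1/ε) * (IA + IB)) x₁ := hAB.congr_of_eventuallyEq heq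
    -- positivity
    have hIB_eq : IB = u' x₁ * (p (-ε) * φ (u x₁)) := by
      rw [hIB_def, hfu]
      have : x₁ - (x₁ + ε) = -ε := by ring
      rw [this, hPe]
    have hIA_ge : -(M * Φ (u x₁)) ≤ IA := by
      have h1 : (∫ y in (0:ℝ)..(u x₁), -(M * φ y)) ≤ IA := by
        rw [hIA_def]
        apply intervalIntegral.integral_mono_on hux₁_nn
          (((continuous_const.mul hφc).neg).intervalIntegrable _ _) hIA_int
        intro y hy
        have hmem := harg_mem x₁ y hx₁0.le hx₁2ε.le hy.1 hy.2
        have habs := hM _ hmem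
        have h2 : -M ≤ pd (x₁ - f y) := by
          have := abs_le.mp habs
          linarith [this.1]
        show -(M * φ y) ≤ pd (x₁ - f y) * φ y
        nlinarith [hφnn y]
      have h2 : (∫ y in (0:ℝ)..(u x₁), -(M * φ y)) = -(M * Φ (u x₁)) := by
        rw [intervalIntegral.integral_neg, intervalIntegral.integral_const_mul]
      linarith [h1, h2.symm.le]
    have hΦub : Φ (u x₁) ≤ 3 * u x₁ * φ (u x₁) :=
      hΦu x₁ hx₁0.le (le_trans hx₁x₀.le hx₀_δ₄) hx₁r.le
    have hW_pos : 0 < W x₁ := hδ₃ x₁ (by rw [abs_of_nonneg hx₁0.le]; linarith)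
    have hφu_pos : 0 < φ (u x₁) := hφpos _ ⟨hux₁_pos, le_trans hux₁_r hr₁_x₀'⟩
    have hsum_pos : 0 < IA + IB := by
      have hW_eq : W x₁ = u' x₁ * p (-ε) - 3 * M * u x₁ := rfl
      have h1 : W x₁ * φ (u x₁) ≤ IA + IB := by
        rw [hIB_eq, hW_eq]
        have h2 : M * Φ (u x₁) ≤ M * (3 * u x₁ * φ (u x₁)) :=
          mul_le_mul_of_nonneg_left hΦub hM_nn
        nlinarith [hIA_ge]
      nlinarith [hW_pos, hφu_pos]
    exact ⟨_, hφd, by positivity⟩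
  -- assemble the conclusion
  refine ⟨x₀, ⟨hx₀_pos, le_trans hx₀_r₁ hr₁_x₀'⟩, ?_, ?_⟩
  · have hsm : StrictMonoOn φ (Icc 0 x₀) := by
      apply strictMonoOn_of_deriv_pos (convex_Icc 0 x₀) hφc.continuousOn
      intro x hx
      rw [interior_Icc] at hx
      obtain ⟨d, hd, hdpos⟩ := key x hx
      rw [hd.deriv]
      exact hdpos
    exact hsm.monotoneOn
  · intro x hx
    obtain ⟨d, hd, hdpos⟩ := key x hx
    exact ⟨hd.differentiableAt, hd.deriv ▸ hdpos⟩
end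

section
/- There exist x₀ ∈ (0, x₀') and a constant C₂ > 0 such that for every x ∈ (0, x₀), writing n = n(x) for the hitting time, the stationary density satisfies the upper bound φ(x) ≤ (C₂ⁿ / n!) · (1/λ)^{n(n−1)/2} · (f₋⁻¹(x))ⁿ · φ(x₀). -/
open MeasureTheory Filter Set

set_option maxHeartbeats 1000000 in
theorem stmt_3
    (ε : ℝ) (hε : 0 < ε)
    (f g : ℝ → ℝ)
    (hf : ContDiff ℝ 2 f) (hg : ContDiff ℝ 2 g)
    (hfmono : StrictMono f)
    (hgf : Function.LeftInverse g f) (hfg : Function.RightInverse g f)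
    (fm fminv : ℝ → ℝ)
    (hfm : ∀ x, fm x = f x - ε)
    (hfminv : ∀ x, fminv x = g (x + ε))
    (hfm0 : fm 0 = 0)
    (lam : ℝ) (hlam : lam = deriv fm 0) (hlam0 : 0 < lam) (hlam1 : lam < 1)
    (p : ℝ → ℝ) (hp : ContDiffOn ℝ 1 p (Set.Icc (-ε) ε))
    (hpnn : ∀ z ∈ Set.Icc (-ε) ε, 0 ≤ p z) (hpe : 0 < p (-ε))
    (x₀' : ℝ) (hx₀' : 0 < x₀')
    (φ : ℝ → ℝ) (hφc : Continuous φ) (hφnn : ∀ x, 0 ≤ φ x)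
    (hφpos : ∀ x ∈ Set.Ioc 0 x₀', 0 < φ x)
    (hstat : ∀ x ∈ Set.Icc 0 x₀',
      φ x = (1/ε) * ∫ y in (0:ℝ)..(fminv x), p (x - f y) * φ y)
    (hderivmono : MonotoneOn (deriv fm) (Set.Icc 0 x₀') ∨
      AntitoneOn (deriv fm) (Set.Icc 0 x₀')) :
    ∃ x₀ ∈ Set.Ioo (0:ℝ) x₀',
      (∀ x ∈ Set.Ioc (0:ℝ) x₀, 0 < fm x ∧ fm x < x) ∧
      ∃ C₂ > 0, ∀ x ∈ Set.Ioo (0:ℝ) x₀, ∀ n : ℕ,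
        n = sInf {k : ℕ | fm^[k] x₀ < x} →
        φ x ≤ (C₂ ^ n / (Nat.factorial n : ℝ)) * (1 / lam) ^ (n * (n - 1) / 2)
          * (fminv x) ^ n * φ x₀ := by
  -- basic facts
  have hfm_eq : fm = fun x => f x - ε := funext hfm
  have hf0 : f 0 = ε := by have h := hfm 0; rw [hfm0] at h; linarith
  have hfdiff : Differentiable ℝ f := hf.differentiable two_ne_zero
  have hfmdiff : Differentiable ℝ fm := by rw [hfm_eq]; exact hfdiff.sub_const ε
  have hderiv_fm : deriv fm = deriv f := by
    funext z; rw [hfm_eq]; exact deriv_sub_const ε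
  have hlamf : lam = deriv f 0 := by rw [hlam, hderiv_fm]
  have hfm_fminv : ∀ y, fm (fminv y) = y := by
    intro y; rw [hfm, hfminv, hfg (y + ε)]; ring
  have hfminv_fm : ∀ z, fminv (fm z) = z := by
    intro z; rw [hfm, hfminv, sub_add_cancel]; exact hgf z
  have hfminv0 : fminv 0 = 0 := by have h := hfminv_fm 0; rwa [hfm0] at h
  have hfm_mono : StrictMono fm := by
    rw [hfm_eq]; intro a b hab; simpa using hfmono hab
  have hfminv_mono : StrictMono fminv := fun a b hab =>
    hfm_mono.lt_iff_lt.mp (by rw [hfm_fminv, hfm_fminv]; exact hab)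
  -- second derivative bound
  have hf1 : ContDiff ℝ 1 (deriv f) := by
    have h2 : ContDiff ℝ ((1:ℕ)+1 : ℕ) f := hf.of_le (by norm_num)
    exact (contDiff_succ_iff_deriv.mp h2).2.2
  have hdf_diff : Differentiable ℝ (deriv f) := hf1.differentiable one_ne_zero
  have hdf2_cont : Continuous (deriv (deriv f)) := hf1.continuous_deriv le_rfl
  obtain ⟨K0, hK0⟩ := (isCompact_Icc (a := (0:ℝ)) (b := x₀')).exists_bound_of_continuousOn
    hdf2_cont.continuousOn
  set Kp : ℝ := max K0 0 + 1 with hKp_def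
  have hKp : 0 < Kp := by
    have : (0:ℝ) ≤ max K0 0 := le_max_right _ _
    linarith
  have hKbound : ∀ z ∈ Icc (0:ℝ) x₀', ‖deriv (deriv f) z‖ ≤ Kp := by
    intro z hz
    have h1 := hK0 z hz
    have h2 : K0 ≤ max K0 0 := le_max_left _ _
    linarith
  clear_value Kp
  have hlip : ∀ z ∈ Icc (0:ℝ) x₀', |deriv f z - lam| ≤ Kp * z := by
    intro z hz
    have h0 : (0:ℝ) ∈ Icc (0:ℝ) x₀' := ⟨le_rfl, hx₀'.le⟩
    have h := Convex.norm_image_sub_le_of_norm_hasDerivWithin_le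
      (f := deriv f) (f' := deriv (deriv f)) (s := Icc 0 x₀')
      (fun w _ => (hdf_diff w).hasDerivAt.hasDerivWithinAt) hKbound (convex_Icc _ _) h0 hz
    rw [hlamf]
    simpa [Real.norm_eq_abs, abs_of_nonneg hz.1] using h
  -- choose μ, ρ, δ
  set μ : ℝ := (1 + lam)/2 with hμdef
  set ρ : ℝ := lam/2 with hρdef
  have hμ0 : 0 < μ := by rw [hμdef]; linarith
  have hμ1 : μ < 1 := by rw [hμdef]; linarith
  have hlamμ : lam < μ := by rw [hμdef]; linarith
  have hρ0 : 0 < ρ := by rw [hρdef]; linarith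
  clear_value μ ρ
  set δ : ℝ := min (min (x₀'/2) ε) (min ((μ - lam)/Kp) (lam/(2*Kp))) with hδdef
  have hδpos : 0 < δ := by
    apply lt_min (lt_min (by linarith) hε)
    apply lt_min (div_pos (by linarith) hKp) (div_pos hlam0 (by linarith))
  have hδa : δ ≤ x₀'/2 := le_trans (min_le_left _ _) (min_le_left _ _)
  have hδb : δ ≤ ε := le_trans (min_le_left _ _) (min_le_right _ _)
  have hδc : Kp * δ ≤ μ - lam := by
    have h : δ ≤ (μ - lam)/Kp :=
      le_trans (min_le_right (min (x₀'/2) ε) (min ((μ - lam)/Kp) (lam/(2*Kp))))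
        (min_le_left ((μ - lam)/Kp) (lam/(2*Kp)))
    rw [le_div_iff₀ hKp] at h; linarith
  have hδd : Kp * δ ≤ lam/2 := by
    have h : δ ≤ lam/(2*Kp) :=
      le_trans (min_le_right (min (x₀'/2) ε) (min ((μ - lam)/Kp) (lam/(2*Kp))))
        (min_le_right ((μ - lam)/Kp) (lam/(2*Kp)))
    rw [le_div_iff₀ (by linarith : (0:ℝ) < 2*Kp)] at h; nlinarith
  have hδx₀' : δ ≤ x₀' := by linarith
  clear_value δ
  -- derivative bounds on [0, δ]
  have hdup : ∀ z ∈ Icc (0:ℝ) δ, deriv f z ≤ μ := by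
    intro z hz
    have h := abs_le.mp (hlip z ⟨hz.1, le_trans hz.2 hδx₀'⟩)
    have h2 : Kp * z ≤ Kp * δ := by nlinarith [hz.2]
    linarith [h.2]
  have hdlow : ∀ z ∈ Icc (0:ℝ) δ, lam - Kp * z ≤ deriv f z := by
    intro z hz
    have h := abs_le.mp (hlip z ⟨hz.1, le_trans hz.2 hδx₀'⟩)
    linarith [h.1]
  -- function bounds on [0, δ]
  have hfm_up : ∀ z ∈ Icc (0:ℝ) δ, fm z ≤ μ * z := by
    intro z hz
    have hmono : MonotoneOn (fun w => μ * w - fm w) (Icc 0 δ) := by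
      apply monotoneOn_of_deriv_nonneg (convex_Icc _ _)
      · exact ((continuous_const.mul continuous_id).sub hfmdiff.continuous).continuousOn
      · intro w _
        exact ((differentiableAt_id.const_mul μ).sub (hfmdiff w)).differentiableWithinAt
      · intro w hw
        rw [interior_Icc] at hw
        have hd : HasDerivAt (fun w => μ * w - fm w) (μ * 1 - deriv fm w) w :=
          ((hasDerivAt_id w).const_mul μ).sub (hfmdiff w).hasDerivAt
        rw [hd.deriv, hderiv_fm]
        have := hdup w ⟨hw.1.le, hw.2.le⟩
        linarith
    have h0 : (0:ℝ) ∈ Icc (0:ℝ) δ := ⟨le_rfl, hδpos.le⟩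
    have h := hmono h0 hz hz.1
    simp only [hfm0, mul_zero, sub_zero] at h
    linarith
  have hfm_low : ∀ z ∈ Icc (0:ℝ) δ, lam * z - Kp * z^2 ≤ fm z := by
    intro z hz
    have hmono : MonotoneOn (fun w => fm w - (lam * w - Kp * w^2)) (Icc 0 δ) := by
      apply monotoneOn_of_deriv_nonneg (convex_Icc _ _)
      · exact (hfmdiff.continuous.sub ((continuous_const.mul continuous_id).sub
          (continuous_const.mul (continuous_pow 2)))).continuousOn
      · intro w _
        exact ((hfmdiff w).sub ((differentiableAt_id.const_mul lam).sub
          ((differentiableAt_pow 2).const_mul Kp))).differentiableWithinAt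
      · intro w hw
        rw [interior_Icc] at hw
        have hd : HasDerivAt (fun w => fm w - (lam * w - Kp * w^2))
            (deriv fm w - (lam * 1 - Kp * (↑2 * w^1))) w :=
          (hfmdiff w).hasDerivAt.sub (((hasDerivAt_id w).const_mul lam).sub
            ((hasDerivAt_pow 2 w).const_mul Kp))
        rw [hd.deriv, hderiv_fm]
        have h1 := hdlow w ⟨hw.1.le, hw.2.le⟩
        have hw0 : 0 ≤ w := hw.1.le
        simp only [pow_one, mul_one]
        nlinarith
    have h0 : (0:ℝ) ∈ Icc (0:ℝ) δ := ⟨le_rfl, hδpos.le⟩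
    have h := hmono h0 hz hz.1
    simp only [hfm0] at h
    norm_num at h
    linarith
  have hfm_low_lin : ∀ z ∈ Icc (0:ℝ) δ, ρ * z ≤ fm z := by
    intro z hz
    have h := hfm_low z hz
    have h2 : Kp * z ≤ lam/2 := by nlinarith [hz.2, hz.1]
    have : ρ * z ≤ lam * z - Kp * z^2 := by rw [hρdef]; nlinarith [hz.1]
    linarith
  -- inverse map bound
  have hfmδ_pos : 0 < fm δ :=
    lt_of_lt_of_le (by positivity) (hfm_low_lin δ ⟨hδpos.le, le_rfl⟩)
  set K₁ : ℝ := 4*Kp/lam^2 with hK₁def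
  have hK₁pos : 0 < K₁ := by positivity
  clear_value K₁
  have hfminv_nonneg : ∀ y, 0 ≤ y → 0 ≤ fminv y := by
    intro y hy; rw [← hfminv0]; exact hfminv_mono.monotone hy
  have hfminv_le : ∀ y ∈ Icc (0:ℝ) (fm δ), fminv y ≤ y/lam * (1 + K₁*y) := by
    intro y hy
    set u := fminv y with hu
    have hu0 : 0 ≤ u := hfminv_nonneg y hy.1
    have huδ : u ≤ δ := by
      have h := hfminv_mono.monotone hy.2
      rwa [hfminv_fm] at h
    have hfmu : fm u = y := hfm_fminv y
    have h1 : lam*u - Kp*u^2 ≤ y := by rw [← hfmu]; exact hfm_low u ⟨hu0, huδ⟩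
    have h2 : ρ * u ≤ y := by rw [← hfmu]; exact hfm_low_lin u ⟨hu0, huδ⟩
    have h3 : lam * u ≤ 2 * y := by rw [hρdef] at h2; linarith
    have h4 : (lam*u)^2 ≤ (2*y)^2 := by
      apply pow_le_pow_left₀ (by positivity) h3
    rw [hK₁def, show y/lam*(1+4*Kp/lam^2*y) = (lam^2*y + 4*Kp*y^2)/lam^3 by
      field_simp]
    rw [le_div_iff₀ (by positivity)]
    nlinarith [mul_le_mul_of_nonneg_left h1 (sq_nonneg lam),
      mul_le_mul_of_nonneg_left h4 hKp.le]
  -- base point x₀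
  set x₀ : ℝ := fm δ / 2 with hx₀def
  have hx₀pos : 0 < x₀ := by rw [hx₀def]; linarith
  have hfmδ_le : fm δ ≤ μ * δ := hfm_up δ ⟨hδpos.le, le_rfl⟩
  have hx₀δ : x₀ ≤ δ := by rw [hx₀def]; nlinarith
  have hx₀x₀' : x₀ < x₀' := lt_of_le_of_lt hx₀δ (by linarith)
  have hx₀fmδ : x₀ < fm δ := by rw [hx₀def]; linarith
  clear_value x₀
  -- iterates
  set a : ℕ → ℝ := fun k => fm^[k] x₀ with ha_def
  have ha_eq : ∀ k, a k = fm^[k] x₀ := fun _ => rfl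
  clear_value a
  have ha_succ : ∀ k, a (k+1) = fm (a k) := by
    intro k; rw [ha_eq, ha_eq]; exact Function.iterate_succ_apply' fm k x₀
  have ha0 : a 0 = x₀ := by rw [ha_eq]; exact Function.iterate_zero_apply fm x₀
  have haP : ∀ k, 0 < a k ∧ a k ≤ μ^k * x₀ := by
    intro k; induction k with
    | zero => exact ⟨by rw [ha0]; exact hx₀pos, by rw [ha0, pow_zero, one_mul]⟩
    | succ m ih =>
      obtain ⟨h1, h2⟩ := ih
      have hak : a m ≤ x₀ := by
        have : μ^m ≤ 1 := pow_le_one₀ hμ0.le hμ1.le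
        nlinarith
      have hmem : a m ∈ Icc (0:ℝ) δ := ⟨h1.le, le_trans hak hx₀δ⟩
      constructor
      · rw [ha_succ]
        exact lt_of_lt_of_le (by positivity) (hfm_low_lin _ hmem)
      · rw [ha_succ, pow_succ, mul_comm (μ^m) μ, mul_assoc]
        calc fm (a m) ≤ μ * a m := hfm_up _ hmem
          _ ≤ μ * (μ^m * x₀) := by nlinarith
  have ha_le_x₀ : ∀ k, a k ≤ x₀ := by
    intro k
    have h2 := (haP k).2
    have : μ^k ≤ 1 := pow_le_one₀ hμ0.le hμ1.le
    nlinarith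
  have haρ : ∀ k, ρ^k * x₀ ≤ a k := by
    intro k; induction k with
    | zero => rw [ha0, pow_zero, one_mul]
    | succ m ih =>
      have hmem : a m ∈ Icc (0:ℝ) δ := ⟨(haP m).1.le, le_trans (ha_le_x₀ m) hx₀δ⟩
      rw [ha_succ, pow_succ, mul_comm (ρ^m) ρ, mul_assoc]
      calc ρ * (ρ^m * x₀) ≤ ρ * a m := by nlinarith [pow_pos hρ0 m]
        _ ≤ fm (a m) := hfm_low_lin _ hmem
  -- maxima
  obtain ⟨zM, hzM, hzMax⟩ := (isCompact_Icc (a := (0:ℝ)) (b := x₀')).exists_isMaxOn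
    ⟨0, le_rfl, hx₀'.le⟩ hφc.continuousOn
  set M : ℝ := φ zM with hMdef
  have hM : ∀ z ∈ Icc (0:ℝ) x₀', φ z ≤ M := fun z hz => hzMax hz
  clear_value M
  have hM0 : 0 ≤ M := hMdef ▸ hφnn zM
  obtain ⟨zP, hzP, hzPmax⟩ := (isCompact_Icc (a := -ε) (b := ε)).exists_isMaxOn
    ⟨-ε, le_rfl, by linarith⟩ hp.continuousOn
  set P : ℝ := p zP with hPdef
  have hP : ∀ z ∈ Icc (-ε) ε, p z ≤ P := fun z hz => hzPmax hz
  have hPpos : 0 < P := lt_of_lt_of_le hpe (hzPmax ⟨le_rfl, by linarith⟩)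
  clear_value P
  -- the recursive constants
  set Pi : ℕ → ℝ := fun k => ∏ j ∈ Finset.range k, (1 + K₁ * (μ^j * x₀))^j with hPidef
  have hPi_pos : ∀ k, 0 < Pi k := by
    intro k
    apply Finset.prod_pos
    intro j _
    have : 0 < μ^j * x₀ := by positivity
    positivity
  clear_value Pi
  set B : ℕ → ℝ := fun k => M * Pi k * (P/ε)^k * (1/lam)^(k*(k-1)/2) / (Nat.factorial k : ℝ)
    with hBdef
  have hB_nonneg : ∀ k, 0 ≤ B k := by
    intro k
    have h1 := (hPi_pos k).le
    have h2 : (0:ℝ) < Nat.factorial k := by exact_mod_cast (Nat.factorial_pos k)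
    have h3 : (0:ℝ) ≤ (P/ε)^k := by positivity
    have h4 : (0:ℝ) ≤ (1/lam)^(k*(k-1)/2) := by positivity
    rw [hBdef]
    positivity
  have hexp_id : ∀ k : ℕ, (k+1)*k/2 = k*(k-1)/2 + k := by
    intro k
    have h : (k+1)*k = k*(k-1) + k*2 := by
      cases k with
      | zero => rfl
      | succ m => simp [Nat.succ_sub_one]; ring
    rw [h]; omega
  have hB_succ : ∀ k : ℕ, B (k+1) = B k * (P/ε) * ((1 + K₁*(μ^k*x₀))/lam)^k / ((k:ℝ)+1) := by
    intro k
    have hfact : (Nat.factorial (k+1) : ℝ) = (Nat.factorial k : ℝ) * ((k:ℝ)+1) := by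
      rw [Nat.factorial_succ]; push_cast; ring
    have hfk : (Nat.factorial k : ℝ) ≠ 0 := by
      exact_mod_cast (Nat.factorial_pos k).ne'
    have hk1 : ((k:ℝ)+1) ≠ 0 := by positivity
    have he : (k+1)*((k+1)-1)/2 = k*(k-1)/2 + k := by
      simpa using hexp_id k
    simp only [hBdef, hPidef, Finset.prod_range_succ, he, pow_add, hfact, pow_succ, div_pow]
    field_simp
    ring
  clear_value B
  -- Pi is uniformly bounded
  set E : ℝ := Real.exp (K₁ * x₀ * (μ / (1-μ)^2)) with hEdef
  clear_value E
  have hE1 : 1 ≤ E := by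
    rw [hEdef, Real.one_le_exp_iff]
    have h1 : 0 < μ / (1-μ)^2 := div_pos hμ0 (pow_pos (by linarith) 2)
    nlinarith [mul_pos (mul_pos hK₁pos hx₀pos) h1]
  have hS : ∀ k, ∑ j ∈ Finset.range k, (j:ℝ) * μ^j ≤ μ/(1-μ)^2 := by
    intro k
    have hsum : HasSum (fun n : ℕ => (n:ℝ) * μ^n) (μ/(1-μ)^2) :=
      hasSum_coe_mul_geometric_of_norm_lt_one
        (by rw [Real.norm_eq_abs, abs_of_nonneg hμ0.le]; exact hμ1)
    exact sum_le_hasSum _ (fun j _ => by positivity) hsum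
  have hPi_le : ∀ k, Pi k ≤ E := by
    intro k
    rw [show Pi k = ∏ j ∈ Finset.range k, (1 + K₁ * (μ^j * x₀))^j by rw [hPidef]]
    have step : ∀ j ∈ Finset.range k,
        (1 + K₁ * (μ^j * x₀))^j ≤ Real.exp ((j:ℝ) * (K₁ * μ^j * x₀)) := by
      intro j _
      have ht : 0 ≤ K₁ * (μ^j * x₀) := by positivity
      have h1 : 1 + K₁ * (μ^j * x₀) ≤ Real.exp (K₁ * (μ^j * x₀)) := by
        have := Real.add_one_le_exp (K₁ * (μ^j * x₀)); linarith
      calc (1 + K₁ * (μ^j * x₀))^j ≤ (Real.exp (K₁ * (μ^j * x₀)))^j :=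
            pow_le_pow_left₀ (by linarith) h1 j
        _ = Real.exp ((j:ℝ) * (K₁ * μ^j * x₀)) := by
            rw [← Real.exp_nat_mul]; ring_nf
    calc (∏ j ∈ Finset.range k, (1 + K₁ * (μ^j * x₀))^j)
        ≤ ∏ j ∈ Finset.range k, Real.exp ((j:ℝ) * (K₁ * μ^j * x₀)) := by
          apply Finset.prod_le_prod
          · intro j _
            have : 0 < μ^j * x₀ := by positivity
            positivity
          · exact step
      _ = Real.exp (∑ j ∈ Finset.range k, (j:ℝ) * (K₁ * μ^j * x₀)) := (Real.exp_sum _ _).symm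
      _ ≤ E := by
          rw [hEdef, Real.exp_le_exp]
          have heq : ∑ j ∈ Finset.range k, (j:ℝ) * (K₁ * μ^j * x₀)
              = K₁ * x₀ * ∑ j ∈ Finset.range k, (j:ℝ) * μ^j := by
            rw [Finset.mul_sum]
            apply Finset.sum_congr rfl
            intro j _; ring
          rw [heq]
          have := hS k
          have h0 : 0 ≤ K₁ * x₀ := by positivity
          nlinarith
  -- the main inductive estimate
  have claim : ∀ k, ∀ x ∈ Icc (0:ℝ) (a k), φ x ≤ B k * (fminv x)^k := by
    intro k
    induction k with
    | zero =>
      intro x hx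
      have hB0 : B 0 = M := by
        simp [hBdef, hPidef]
      rw [hB0, pow_zero, mul_one]
      exact hM x ⟨hx.1, le_trans hx.2 (le_trans (ha_le_x₀ 0) hx₀x₀'.le)⟩
    | succ k ih =>
      intro x hx
      set u := fminv x with hudef
      clear_value u
      have hu0 : 0 ≤ u := by rw [hudef]; exact hfminv_nonneg x hx.1
      have hua : u ≤ a k := by
        rw [hudef]
        have h := hfminv_mono.monotone hx.2
        rw [ha_succ, hfminv_fm] at h
        exact h
      have hxx₀' : x ∈ Icc (0:ℝ) x₀' := ⟨hx.1, le_trans hx.2 (le_trans (ha_le_x₀ _) hx₀x₀'.le)⟩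
      have hstx := hstat x hxx₀'
      rw [← hudef] at hstx
      set c : ℝ := P * B k * ((1 + K₁*(μ^k*x₀))/lam)^k with hcdef
      have hd_nonneg : (0:ℝ) ≤ (1 + K₁*(μ^k*x₀))/lam := by
        have : 0 < μ^k * x₀ := by positivity
        positivity
      have hc0 : 0 ≤ c := mul_nonneg (mul_nonneg hPpos.le (hB_nonneg k)) (pow_nonneg hd_nonneg k)
      clear_value c
      have hfu : f u = x + ε := by
        rw [hudef]
        have h := hfm_fminv x
        rw [hfm] at h
        linarith
      have hmapsto : ∀ y ∈ Icc (0:ℝ) u, x - f y ∈ Icc (-ε) ε := by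
        intro y hy
        constructor
        · have h1 : f y ≤ f u := hfmono.monotone hy.2
          rw [hfu] at h1
          linarith
        · have h2 : f 0 ≤ f y := hfmono.monotone hy.1
          rw [hf0] at h2
          have hxb : x ≤ ε := le_trans hx.2 (le_trans (ha_le_x₀ _) (le_trans hx₀δ hδb))
          linarith
      have hcont1 : ContinuousOn (fun y => p (x - f y) * φ y) (Icc 0 u) := by
        apply ContinuousOn.mul
        · exact hp.continuousOn.comp
            ((continuous_const.sub hfdiff.continuous).continuousOn) hmapsto
        · exact hφc.continuousOn
      have hint1 : IntervalIntegrable (fun y => p (x - f y) * φ y) volume 0 u := by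
        apply ContinuousOn.intervalIntegrable
        rwa [uIcc_of_le hu0]
      have hint2 : IntervalIntegrable (fun y => c * y^k) volume 0 u :=
        ((continuous_const.mul (continuous_pow k)).intervalIntegrable _ _)
      have hptwise : ∀ y ∈ Icc (0:ℝ) u, p (x - f y) * φ y ≤ c * y^k := by
        intro y hy
        have h1 : p (x - f y) ≤ P := hP _ (hmapsto y hy)
        have h2 : φ y ≤ B k * (fminv y)^k := ih y ⟨hy.1, le_trans hy.2 hua⟩
        have h3 : fminv y ≤ y * ((1 + K₁*(μ^k*x₀))/lam) := by
          have hyak : y ≤ a k := le_trans hy.2 hua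
          have hyfmδ : y ∈ Icc (0:ℝ) (fm δ) :=
            ⟨hy.1, le_trans hyak (le_trans (ha_le_x₀ k) hx₀fmδ.le)⟩
          have hb := hfminv_le y hyfmδ
          have hyμ : y ≤ μ^k * x₀ := le_trans hyak (haP k).2
          have hKy : K₁ * y ≤ K₁*(μ^k*x₀) := mul_le_mul_of_nonneg_left hyμ hK₁pos.le
          have hnum : y * (1 + K₁*y) ≤ y * (1 + K₁*(μ^k*x₀)) :=
            mul_le_mul_of_nonneg_left (by linarith) hy.1
          calc fminv y ≤ y/lam * (1 + K₁*y) := hb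
            _ = y * (1 + K₁*y) / lam := by ring
            _ ≤ y * (1 + K₁*(μ^k*x₀)) / lam := div_le_div_of_nonneg_right hnum hlam0.le
            _ = y * ((1 + K₁*(μ^k*x₀))/lam) := by ring
          -- done
        have h4 : (fminv y)^k ≤ (y * ((1 + K₁*(μ^k*x₀))/lam))^k :=
          pow_le_pow_left₀ (hfminv_nonneg y hy.1) h3 k
        calc p (x - f y) * φ y ≤ P * φ y :=
              mul_le_mul_of_nonneg_right h1 (hφnn y)
          _ ≤ P * (B k * (fminv y)^k) := mul_le_mul_of_nonneg_left h2 hPpos.le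
          _ ≤ P * (B k * (y * ((1 + K₁*(μ^k*x₀))/lam))^k) := by
              apply mul_le_mul_of_nonneg_left _ hPpos.le
              exact mul_le_mul_of_nonneg_left h4 (hB_nonneg k)
          _ = c * y^k := by rw [hcdef, mul_pow]; ring
      have hIle : (∫ y in (0:ℝ)..u, p (x - f y) * φ y) ≤ ∫ y in (0:ℝ)..u, c * y^k :=
        intervalIntegral.integral_mono_on hu0 hint1 hint2 hptwise
      have hIval : (∫ y in (0:ℝ)..u, c * y^k) = c * (u^(k+1) / ((k:ℝ)+1)) := by
        rw [intervalIntegral.integral_const_mul, integral_pow]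
        norm_num
      have hφle : φ x ≤ (1/ε) * (c * (u^(k+1)/((k:ℝ)+1))) := by
        rw [hstx]
        apply mul_le_mul_of_nonneg_left _ (by positivity)
        rw [← hIval]
        exact hIle
      refine le_trans hφle (le_of_eq ?_)
      rw [hB_succ k, hcdef]
      have hk1 : ((k:ℝ)+1) ≠ 0 := by positivity
      field_simp
  -- final assembly
  have hφx₀ : 0 < φ x₀ := hφpos x₀ ⟨hx₀pos, hx₀x₀'.le⟩
  set c₁ : ℝ := M*E/(x₀*φ x₀) + 1 with hc₁def
  set c₂ : ℝ := 2*(P/ε+1)/ρ with hc₂def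
  have hc₁1 : 1 ≤ c₁ := by
    rw [hc₁def]
    have : 0 ≤ M*E/(x₀*φ x₀) := by positivity
    linarith
  have hc₂pos : 0 < c₂ := by rw [hc₂def]; positivity
  clear_value c₁ c₂
  refine ⟨x₀, ⟨hx₀pos, hx₀x₀'⟩, ?_, c₁*c₂, mul_pos (by linarith) hc₂pos, ?_⟩
  · intro x hx
    have hmem : x ∈ Icc (0:ℝ) δ := ⟨hx.1.le, le_trans hx.2 hx₀δ⟩
    constructor
    · exact lt_of_lt_of_le (mul_pos hρ0 hx.1) (hfm_low_lin x hmem)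
    · refine lt_of_le_of_lt (hfm_up x hmem) ?_
      calc μ * x < 1 * x := mul_lt_mul_of_pos_right hμ1 hx.1
        _ = x := one_mul x
  · intro x hx n hn
    have hSne : Set.Nonempty {k : ℕ | fm^[k] x₀ < x} := by
      obtain ⟨m, hm⟩ := exists_pow_lt_of_lt_one (div_pos hx.1 hx₀pos) hμ1
      refine ⟨m, ?_⟩
      have h1 : μ^m * x₀ < x := (lt_div_iff₀ hx₀pos).mp hm
      have h2 := (haP m).2
      show fm^[m] x₀ < x
      rw [← ha_eq m]
      exact lt_of_le_of_lt h2 h1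
    have hn_mem : n ∈ {k : ℕ | fm^[k] x₀ < x} := hn ▸ Nat.sInf_mem hSne
    have hax : a n < x := by rw [ha_eq]; exact hn_mem
    have hn1 : 1 ≤ n := by
      by_contra h
      push_neg at h
      interval_cases n
      · rw [ha0] at hax; exact absurd hax (not_lt.mpr hx.2.le)
    have hprev : x ≤ a (n-1) := by
      have hnot : (n-1) ∉ {k : ℕ | fm^[k] x₀ < x} := by
        rw [hn]
        exact Nat.notMem_of_lt_sInf (by omega)
      rw [Set.mem_setOf_eq, ← ha_eq, not_lt] at hnot
      exact hnot
    have hmain := claim (n-1) x ⟨hx.1.le, hprev⟩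
    set v := fminv x with hvdef
    clear_value v
    have hv0 : 0 ≤ v := by rw [hvdef]; exact hfminv_nonneg x hx.1.le
    have hxv : x ≤ v := by
      rw [hvdef]
      have hxfmδ : x ≤ fm δ := le_trans hx.2.le hx₀fmδ.le
      have hvδ : fminv x ≤ δ := by
        have h := hfminv_mono.monotone hxfmδ
        rwa [hfminv_fm] at h
      have h0 : 0 ≤ fminv x := hfminv_nonneg x hx.1.le
      have h := hfm_up (fminv x) ⟨h0, hvδ⟩
      rw [hfm_fminv] at h
      calc x ≤ μ * fminv x := h
        _ ≤ 1 * fminv x := mul_le_mul_of_nonneg_right hμ1.le h0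
        _ = fminv x := one_mul _
    have hwv : ρ^n * x₀ ≤ v := le_trans (haρ n) (le_trans hax.le hxv)
    have hvn : v^n = v * v^(n-1) := by
      rw [← pow_succ']
      congr 1
      omega
    -- the key constant inequality
    have hfactn : (Nat.factorial n : ℝ) = (n:ℝ) * (Nat.factorial (n-1) : ℝ) := by
      rw [← Nat.mul_factorial_pred (by omega : n ≠ 0)]
      push_cast
      ring
    have hfact_pos : (0:ℝ) < (Nat.factorial (n-1) : ℝ) := by
      exact_mod_cast Nat.factorial_pos (n-1)
    have h1lam : 1 ≤ 1/lam := by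
      rw [le_div_iff₀ hlam0]
      linarith
    have hexple : (1/lam)^((n-1)*((n-1)-1)/2) ≤ (1/lam)^(n*(n-1)/2) := by
      apply pow_le_pow_right₀ h1lam
      apply Nat.div_le_div_right
      exact Nat.mul_le_mul (Nat.sub_le n 1) (Nat.sub_le _ 1)
    set Q : ℝ := P/ε with hQdef
    have hQ0 : 0 ≤ Q := by rw [hQdef]; positivity
    clear_value Q
    have hρne : ρ ≠ 0 := hρ0.ne'
    have hc₂Q : c₂ * ρ = 2*(Q+1) := by
      rw [hc₂def, div_mul_cancel₀ _ hρne]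
    have hn2 : (n:ℝ) ≤ 2^n := by exact_mod_cast (Nat.lt_two_pow_self (n := n)).le
    have hQpow : Q^(n-1) ≤ (Q+1)^n :=
      le_trans (pow_le_pow_left₀ hQ0 (by linarith) (n-1))
        (pow_le_pow_right₀ (by linarith) (by omega))
    have key1 : (n:ℝ) * Q^(n-1) ≤ (2*(Q+1))^n := by
      calc (n:ℝ) * Q^(n-1) ≤ 2^n * (Q+1)^n :=
            mul_le_mul hn2 hQpow (pow_nonneg hQ0 _) (by positivity)
        _ = (2*(Q+1))^n := (mul_pow _ _ _).symm
    have hxφpos : 0 < x₀ * φ x₀ := mul_pos hx₀pos hφx₀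
    have hME : M * E ≤ c₁ * (x₀ * φ x₀) := by
      rw [hc₁def, add_mul, div_mul_cancel₀ _ hxφpos.ne']
      linarith
    have hE0 : (0:ℝ) ≤ E := by linarith
    have hc₁n : c₁ ≤ c₁^n := le_self_pow₀ hc₁1 (by omega)
    have h3 : c₂^n * ρ^n = (2*(Q+1))^n := by rw [← mul_pow, hc₂Q]
    have key2 : M * E * Q^(n-1) * (n:ℝ) ≤ c₁^n * c₂^n * ρ^n * x₀ * φ x₀ := by
      calc M*E*Q^(n-1)*(n:ℝ) = (M*E) * ((n:ℝ)*Q^(n-1)) := by ring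
        _ ≤ (c₁*(x₀*φ x₀)) * (2*(Q+1))^n := by
            apply mul_le_mul hME key1
            · exact mul_nonneg (Nat.cast_nonneg n) (pow_nonneg hQ0 _)
            · exact le_trans (mul_nonneg hM0 hE0) hME
        _ ≤ (c₁^n*(x₀*φ x₀)) * (2*(Q+1))^n := by
            apply mul_le_mul_of_nonneg_right _ (by positivity)
            exact mul_le_mul_of_nonneg_right hc₁n hxφpos.le
        _ = c₁^n * c₂^n * ρ^n * x₀ * φ x₀ := by rw [← h3]; ring
    have hnf : (0:ℝ) < (Nat.factorial n : ℝ) := by exact_mod_cast Nat.factorial_pos n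
    have hL0 : (0:ℝ) ≤ (1/lam)^(n*(n-1)/2) := by positivity
    have hBn : B (n-1) = M * Pi (n-1) * Q^(n-1) * (1/lam)^((n-1)*((n-1)-1)/2)
        / (Nat.factorial (n-1) : ℝ) := by rw [hBdef]
    have step1 : B (n-1) ≤ M * E * Q^(n-1) * (1/lam)^(n*(n-1)/2)
        / (Nat.factorial (n-1):ℝ) := by
      rw [hBn]
      apply div_le_div_of_nonneg_right ?_ hfact_pos.le
      have h2 : M * Pi (n-1) * Q^(n-1) ≤ M * E * Q^(n-1) :=
        mul_le_mul_of_nonneg_right (mul_le_mul_of_nonneg_left (hPi_le (n-1)) hM0)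
          (pow_nonneg hQ0 _)
      apply mul_le_mul h2 hexple (by positivity)
      exact mul_nonneg (mul_nonneg hM0 hE0) (pow_nonneg hQ0 _)
    have keyL : M*E*Q^(n-1)*(n:ℝ) * (1/lam)^(n*(n-1)/2)
        ≤ (c₁^n*c₂^n*ρ^n*x₀*φ x₀) * (1/lam)^(n*(n-1)/2) :=
      mul_le_mul_of_nonneg_right key2 hL0
    have step2 : M * E * Q^(n-1) * (1/lam)^(n*(n-1)/2) / (Nat.factorial (n-1):ℝ)
        ≤ (c₁*c₂)^n / (Nat.factorial n : ℝ) * (1/lam)^(n*(n-1)/2) * φ x₀ * (ρ^n * x₀) := by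
      rw [show (c₁*c₂)^n / (Nat.factorial n:ℝ) * (1/lam)^(n*(n-1)/2) * φ x₀ * (ρ^n * x₀)
          = ((c₁^n*c₂^n*ρ^n*x₀*φ x₀) * (1/lam)^(n*(n-1)/2)) / (Nat.factorial n:ℝ) by
          rw [mul_pow]; ring]
      rw [div_le_div_iff₀ hfact_pos hnf, hfactn]
      calc M*E*Q^(n-1)*(1/lam)^(n*(n-1)/2) * ((n:ℝ) * (Nat.factorial (n-1):ℝ))
          = (M*E*Q^(n-1)*(n:ℝ)*(1/lam)^(n*(n-1)/2)) * (Nat.factorial (n-1):ℝ) := by ring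
        _ ≤ ((c₁^n*c₂^n*ρ^n*x₀*φ x₀) * (1/lam)^(n*(n-1)/2)) * (Nat.factorial (n-1):ℝ) :=
          mul_le_mul_of_nonneg_right keyL hfact_pos.le
    have hKCI := le_trans step1 step2
    have hA : (0:ℝ) ≤ (c₁*c₂)^n / (Nat.factorial n:ℝ) * (1/lam)^(n*(n-1)/2) * φ x₀ := by
      apply mul_nonneg (mul_nonneg (div_nonneg ?_ hnf.le) hL0) (hφnn x₀)
      exact pow_nonneg (mul_nonneg (by linarith) hc₂pos.le) n
    calc φ x ≤ B (n-1) * v^(n-1) := hmain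
      _ ≤ ((c₁*c₂)^n / (Nat.factorial n:ℝ) * (1/lam)^(n*(n-1)/2) * φ x₀ * (ρ^n*x₀)) * v^(n-1) :=
          mul_le_mul_of_nonneg_right hKCI (pow_nonneg hv0 _)
      _ ≤ ((c₁*c₂)^n / (Nat.factorial n:ℝ) * (1/lam)^(n*(n-1)/2) * φ x₀) * (v * v^(n-1)) := by
          rw [mul_assoc]
          exact mul_le_mul_of_nonneg_left
            (mul_le_mul_of_nonneg_right hwv (pow_nonneg hv0 _)) hA
      _ = (c₁*c₂)^n / (Nat.factorial n:ℝ) * (1/lam)^(n*(n-1)/2) * v^n * φ x₀ := by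
          rw [hvn]; ring
end

section
/- There exist x₀ ∈ (0, x₀'] and constants C₁, C₂ > 0 such that for all x ∈ [0, x₀], C₁ ∫₀^{f₋⁻¹(x)} φ(y) dy ≤ φ(x) ≤ C₂ ∫₀^{f₋⁻¹(x)} φ(y) dy. -/
open MeasureTheory Filter Set

theorem stmt_5
    (ε : ℝ) (hε : 0 < ε)
    (f g : ℝ → ℝ)
    (hf : ContDiff ℝ 2 f) (hg : ContDiff ℝ 2 g)
    (hfmono : StrictMono f)
    (hgf : Function.LeftInverse g f) (hfg : Function.RightInverse g f)
    (fm fminv : ℝ → ℝ)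
    (hfm : ∀ x, fm x = f x - ε)
    (hfminv : ∀ x, fminv x = g (x + ε))
    (hfm0 : fm 0 = 0)
    (lam : ℝ) (hlam : lam = deriv fm 0) (hlam0 : 0 < lam) (hlam1 : lam < 1)
    (p : ℝ → ℝ) (hp : ContDiffOn ℝ 1 p (Set.Icc (-ε) ε))
    (hpnn : ∀ z ∈ Set.Icc (-ε) ε, 0 ≤ p z) (hpe : 0 < p (-ε))
    (x₀' : ℝ) (hx₀' : 0 < x₀')
    (φ : ℝ → ℝ) (hφc : Continuous φ) (hφnn : ∀ x, 0 ≤ φ x)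
    (hφpos : ∀ x ∈ Set.Ioc 0 x₀', 0 < φ x)
    (hstat : ∀ x ∈ Set.Icc 0 x₀',
      φ x = (1/ε) * ∫ y in (0:ℝ)..(fminv x), p (x - f y) * φ y) :
    ∃ x₀ ∈ Set.Ioc (0:ℝ) x₀', ∃ C₁ > 0, ∃ C₂ > 0, ∀ x ∈ Set.Icc (0:ℝ) x₀,
      C₁ * (∫ y in (0:ℝ)..(fminv x), φ y) ≤ φ x ∧
      φ x ≤ C₂ * (∫ y in (0:ℝ)..(fminv x), φ y) := by
  have hf0 : f 0 = ε := by have := hfm0; rw [hfm 0] at this; linarith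
  have hgmono : StrictMono g := fun a b hab =>
    hfmono.lt_iff_lt.mp (by rw [hfg a, hfg b]; exact hab)
  have hg0 : g ε = 0 := by rw [← hf0, hgf 0]
  -- continuity of p near -ε
  have hmem : (-ε) ∈ Set.Icc (-ε) ε := ⟨le_refl _, by linarith⟩
  have hpc : ContinuousWithinAt p (Set.Icc (-ε) ε) (-ε) :=
    hp.continuousOn.continuousWithinAt hmem
  have hev : ∀ᶠ z in nhdsWithin (-ε) (Set.Icc (-ε) ε), p (-ε) / 2 < p z :=
    hpc (Ioi_mem_nhds (by linarith))
  obtain ⟨δ, hδ0, hδ⟩ := Metric.mem_nhdsWithin_iff.mp hev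
  -- upper bound
  obtain ⟨z₀, hz₀mem, hz₀⟩ := isCompact_Icc.exists_isMaxOn ⟨-ε, hmem⟩ hp.continuousOn
  set M := p z₀ with hMdef
  have hMpos : 0 < M := lt_of_lt_of_le hpe (hz₀ hmem)
  set c := p (-ε) / 2 with hc
  have hcpos : 0 < c := by positivity
  refine ⟨min x₀' (min (δ/2) ε), ⟨by positivity, min_le_left _ _⟩,
    c / ε, by positivity, M / ε, by positivity, ?_⟩
  intro x hx
  obtain ⟨hx0, hxle⟩ := hx
  have hxx' : x ≤ x₀' := hxle.trans (min_le_left _ _)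
  have hxδ : x ≤ δ / 2 := hxle.trans ((min_le_right _ _).trans (min_le_left _ _))
  have hxε : x ≤ ε := hxle.trans ((min_le_right _ _).trans (min_le_right _ _))
  set a := fminv x with hadef
  have hfa : f a = x + ε := by rw [hadef, hfminv, hfg]
  have ha0 : 0 ≤ a := by
    rw [hadef, hfminv, ← hg0]
    exact hgmono.monotone (by linarith)
  -- pointwise bounds on the kernel
  have hkey : ∀ y ∈ Set.Icc (0:ℝ) a, x - f y ∈ Set.Icc (-ε) ε ∧ c ≤ p (x - f y) ∧ p (x - f y) ≤ M := by
    intro y hy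
    have h1 : ε ≤ f y := by rw [← hf0]; exact hfmono.monotone hy.1
    have h2 : f y ≤ x + ε := by rw [← hfa]; exact hfmono.monotone hy.2
    have hmem' : x - f y ∈ Set.Icc (-ε) ε := ⟨by linarith, by linarith⟩
    have hdist : dist (x - f y) (-ε) < δ := by
      rw [Real.dist_eq, abs_of_nonneg (by linarith)]
      linarith
    exact ⟨hmem', (hδ ⟨Metric.mem_ball.mpr hdist, hmem'⟩).le, hz₀ hmem'⟩
  -- integrability
  have hcontF : ContinuousOn (fun y => p (x - f y) * φ y) (Set.Icc 0 a) := by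
    apply ContinuousOn.mul _ hφc.continuousOn
    exact hp.continuousOn.comp (continuous_const.sub hf.continuous).continuousOn
      (fun y hy => (hkey y hy).1)
  have hFint : IntervalIntegrable (fun y => p (x - f y) * φ y) volume 0 a :=
    (hcontF.mono (by rw [Set.uIcc_of_le ha0])).intervalIntegrable
  have hφint : IntervalIntegrable φ volume 0 a := hφc.intervalIntegrable _ _
  have hcint : IntervalIntegrable (fun y => c * φ y) volume 0 a :=
    hφint.const_mul c
  have hMint : IntervalIntegrable (fun y => M * φ y) volume 0 a :=
    hφint.const_mul M
  have hstatx : φ x = (1/ε) * ∫ y in (0:ℝ)..a, p (x - f y) * φ y :=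
    hstat x ⟨hx0, hxx'⟩
  have hlow : ∫ y in (0:ℝ)..a, c * φ y ≤ ∫ y in (0:ℝ)..a, p (x - f y) * φ y := by
    apply intervalIntegral.integral_mono_on ha0 hcint hFint
    intro y hy
    exact mul_le_mul_of_nonneg_right (hkey y hy).2.1 (hφnn y)
  have hhigh : ∫ y in (0:ℝ)..a, p (x - f y) * φ y ≤ ∫ y in (0:ℝ)..a, M * φ y := by
    apply intervalIntegral.integral_mono_on ha0 hFint hMint
    intro y hy
    exact mul_le_mul_of_nonneg_right (hkey y hy).2.2 (hφnn y)
  rw [intervalIntegral.integral_const_mul] at hlow hhigh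
  have hεinv : (0:ℝ) < 1/ε := by positivity
  constructor
  · have := mul_le_mul_of_nonneg_left hlow hεinv.le
    rw [hstatx]
    calc c / ε * ∫ y in (0:ℝ)..a, φ y = 1/ε * (c * ∫ y in (0:ℝ)..a, φ y) := by ring
    _ ≤ _ := this
  · have := mul_le_mul_of_nonneg_left hhigh hεinv.le
    rw [hstatx]
    calc 1/ε * ∫ y in (0:ℝ)..a, p (x - f y) * φ y
        ≤ 1/ε * (M * ∫ y in (0:ℝ)..a, φ y) := this
    _ = M / ε * ∫ y in (0:ℝ)..a, φ y := by ring
end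

section
/- The hitting time satisfies the scaling law n(x) = log x / log λ + O(1) as x → 0⁺: there exist C > 0 and δ ∈ (0, x₀) such that for all x ∈ (0, δ), |n(x) − log x / log λ| ≤ C. -/
open MeasureTheory Filter Set

lemma taylor_aux (lam : ℝ) (fm : ℝ → ℝ) (hfm : ContDiff ℝ 2 fm)
    (hfm0 : fm 0 = 0) (hfmderiv : deriv fm 0 = lam) :
    ∃ K ≥ 1, ∀ x ∈ Set.Icc (0:ℝ) 1, |fm x - lam * x| ≤ K * x ^ 2 := by
  have h2 : ContDiff ℝ (1+1) fm := by norm_num; exact hfm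
  rw [contDiff_succ_iff_deriv] at h2
  obtain ⟨hdf, -, hφ⟩ := h2
  have hφd : Differentiable ℝ (deriv fm) := hφ.differentiable one_ne_zero
  have hφ'c : Continuous (deriv (deriv fm)) := (contDiff_one_iff_deriv.mp hφ).2
  obtain ⟨K0, hK0⟩ := (isCompact_Icc (a := (0:ℝ)) (b := 1)).exists_bound_of_continuousOn
    hφ'c.continuousOn
  set K := max K0 1 with hK
  refine ⟨K, le_max_right _ _, fun x hx => ?_⟩
  have hK1 : (0:ℝ) < K := lt_of_lt_of_le one_pos (le_max_right _ _)
  have hstep1 : ∀ y ∈ Set.Icc (0:ℝ) x, |deriv fm y - lam| ≤ K * y := by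
    intro y hy
    have := norm_image_sub_le_of_norm_deriv_le_segment'
      (f := deriv fm) (f' := deriv (deriv fm)) (a := 0) (b := y) (C := K)
      (fun z hz => (hφd z).hasDerivAt.hasDerivWithinAt)
      (fun z hz => ?_) y (Set.right_mem_Icc.mpr hy.1)
    · simpa [hfmderiv, Real.norm_eq_abs] using this
    · have hz1 : z ∈ Set.Icc (0:ℝ) 1 := ⟨hz.1, le_trans hz.2.le (le_trans hy.2 hx.2)⟩
      exact le_trans (hK0 z hz1) (le_max_left _ _)
  have hstep2 := norm_image_sub_le_of_norm_deriv_le_segment'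
      (f := fun y => fm y - lam * y) (f' := fun y => deriv fm y - lam) (a := 0) (b := x)
      (C := K * x)
      (fun z hz => ((((hdf z).hasDerivAt).sub
        ((hasDerivAt_id' z).const_mul lam)).congr_deriv (by ring)).hasDerivWithinAt (s := Set.Icc 0 x))
      (fun z hz => by
        have := hstep1 z ⟨hz.1, hz.2.le⟩
        calc ‖deriv fm z - lam‖ ≤ K * z := by simpa [Real.norm_eq_abs] using this
          _ ≤ K * x := by nlinarith [hz.2, hz.1])
      x (Set.right_mem_Icc.mpr hx.1)
  have : |fm x - lam * x| ≤ K * x * (x - 0) := by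
    simpa [hfm0, Real.norm_eq_abs] using hstep2
  nlinarith [hx.1]

lemma exp_lb (t : ℝ) (h0 : 0 ≤ t) (h1 : t ≤ 1/2) : Real.exp (-(2*t)) ≤ 1 - t := by
  have h := Real.add_one_le_exp (2*t)
  have key : 1 ≤ (1-t) * Real.exp (2*t) := by nlinarith [Real.exp_pos (2*t)]
  have h2 : Real.exp (-(2*t)) * Real.exp (2*t) = 1 := by
    rw [← Real.exp_add]; norm_num
  nlinarith [Real.exp_pos (2*t)]

set_option maxHeartbeats 1000000 in
theorem stmt_6
    (ε : ℝ) (hε : 0 < ε)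
    (lam : ℝ) (hlam0 : 0 < lam) (hlam1 : lam < 1)
    (fm : ℝ → ℝ) (hfm : ContDiff ℝ 2 fm) (hfmmono : StrictMono fm)
    (hfm0 : fm 0 = 0) (hfmderiv : deriv fm 0 = lam)
    (x₀ : ℝ) (hx₀ : 0 < x₀)
    (hcontr : ∀ x ∈ Set.Ioc (0:ℝ) x₀, 0 < fm x ∧ fm x < x) :
    ∃ C > 0, ∃ δ ∈ Set.Ioo (0:ℝ) x₀, ∀ x ∈ Set.Ioo (0:ℝ) δ, ∀ n : ℕ,
      n = sInf {k : ℕ | fm^[k] x₀ < x} →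
      |(n : ℝ) - Real.log x / Real.log lam| ≤ C := by
  classical
  set a : ℕ → ℝ := fun n => fm^[n] x₀ with ha
  have hastep : ∀ n, a (n+1) = fm (a n) := fun n => by
    simp [ha, Function.iterate_succ_apply']
  have hamem : ∀ n, a n ∈ Set.Ioc (0:ℝ) x₀ := by
    intro n; induction n with
    | zero => exact ⟨hx₀, le_refl _⟩
    | succ n ih =>
      obtain ⟨h1, h2⟩ := hcontr _ ih
      rw [hastep]
      exact ⟨h1, le_trans h2.le ih.2⟩
  have hadec : StrictAnti a := strictAnti_nat_of_succ_lt (fun n => by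
    rw [hastep]; exact (hcontr _ (hamem n)).2)
  -- convergence to 0
  have htends : Tendsto a atTop (nhds 0) := by
    have hbdd : BddBelow (Set.range a) := ⟨0, by rintro _ ⟨n, rfl⟩; exact (hamem n).1.le⟩
    have htends' : Tendsto a atTop (nhds (⨅ n, a n)) :=
      tendsto_atTop_ciInf hadec.antitone hbdd
    have hL0 : 0 ≤ ⨅ n, a n := le_ciInf (fun n => (hamem n).1.le)
    have hLx₀ : (⨅ n, a n) ≤ x₀ := ciInf_le hbdd 0
    have hfix : fm (⨅ n, a n) = ⨅ n, a n := by
      have h1 : Tendsto (fun n => a (n+1)) atTop (nhds (⨅ n, a n)) :=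
        htends'.comp (tendsto_add_atTop_nat 1)
      have h2 : Tendsto (fun n => fm (a n)) atTop (nhds (fm (⨅ n, a n))) :=
        (hfm.continuous.tendsto _).comp htends'
      have : (fun n => fm (a n)) = fun n => a (n+1) := funext fun n => (hastep n).symm
      rw [this] at h2
      exact tendsto_nhds_unique h2 h1
    have : (⨅ n, a n) = 0 := by
      by_contra h
      have hLpos : 0 < ⨅ n, a n := lt_of_le_of_ne hL0 (Ne.symm h)
      have := (hcontr _ ⟨hLpos, hLx₀⟩).2
      rw [hfix] at this
      exact lt_irrefl _ this
    rwa [this] at htends'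
  -- Taylor bound
  obtain ⟨K, hK1, hTay⟩ := taylor_aux lam fm hfm hfm0 hfmderiv
  have hKpos : (0:ℝ) < K := lt_of_lt_of_le one_pos hK1
  set r : ℝ := min (min x₀ 1) (min (lam/(2*K)) ((1-lam)/(2*K))) with hr
  have hrpos : 0 < r :=
    lt_min (lt_min hx₀ one_pos)
      (lt_min (by positivity) (div_pos (by linarith) (by positivity)))
  have hrx₀ : r ≤ x₀ := le_trans (min_le_left _ _) (min_le_left _ _)
  have hr1 : r ≤ 1 := le_trans (min_le_left _ _) (min_le_right _ _)
  have hrK1 : K * r ≤ lam / 2 := by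
    have : r ≤ lam/(2*K) := le_trans (min_le_right _ _) (min_le_left _ _)
    rw [le_div_iff₀ (by positivity)] at this; linarith
  have hrK2 : K * r ≤ (1 - lam) / 2 := by
    have : r ≤ (1-lam)/(2*K) := le_trans (min_le_right _ _) (min_le_right _ _)
    rw [le_div_iff₀ (by positivity)] at this; linarith
  set μ : ℝ := (1 + lam) / 2 with hμ
  have hμ0 : 0 < μ := by positivity
  have hμ1 : μ < 1 := by rw [hμ]; linarith
  set c : ℝ := K / lam with hc
  have hcpos : 0 < c := by positivity
  have hclam : c * lam = K := by rw [hc]; exact div_mul_cancel₀ K hlam0.ne'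
  have hcr : c * r ≤ 1/2 := by
    rw [hc, div_mul_eq_mul_div, div_le_div_iff₀ (by positivity) (by norm_num)]
    linarith
  -- one-step bounds on (0, r]
  have hub : ∀ y, 0 < y → y ≤ r → fm y ≤ μ * y := by
    intro y hy0 hyr
    have h1 := abs_le.mp (hTay y ⟨hy0.le, le_trans hyr hr1⟩)
    nlinarith [h1.2]
  have hub2 : ∀ y, 0 < y → y ≤ r → fm y ≤ lam * y * (1 + c * y) := by
    intro y hy0 hyr
    have h1 := abs_le.mp (hTay y ⟨hy0.le, le_trans hyr hr1⟩)
    nlinarith [h1.2]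
  have hlb : ∀ y, 0 < y → y ≤ r → lam * y * (1 - c * y) ≤ fm y := by
    intro y hy0 hyr
    have h1 := abs_le.mp (hTay y ⟨hy0.le, le_trans hyr hr1⟩)
    nlinarith [h1.1]
  -- find N with a N ≤ r
  obtain ⟨N, hN⟩ := (htends.eventually (eventually_lt_nhds hrpos)).exists
  have haN : a N ≤ r := hN.le
  have haNpos : 0 < a N := (hamem N).1
  -- geometric upper bound
  have h1 : ∀ k, a (N+k) ≤ r * μ^k := by
    intro k; induction k with
    | zero => simpa using haN
    | succ k ih =>
      have hpos := (hamem (N+k)).1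
      have hle : a (N+k) ≤ r := le_trans ih (by
        nlinarith [pow_le_one₀ hμ0.le hμ1.le (n := k)])
      calc a (N+(k+1)) = fm (a (N+k)) := hastep (N+k)
        _ ≤ μ * a (N+k) := hub _ hpos hle
        _ ≤ μ * (r * μ^k) := by nlinarith
        _ = r * μ^(k+1) := by ring
  have hallle : ∀ k, a (N+k) ≤ r := fun k => le_trans (h1 k) (by
    nlinarith [pow_le_one₀ hμ0.le hμ1.le (n := k)])
  -- lower refined bound
  have h2 : ∀ k, a N * lam^k * Real.exp (-(2*c*r) * ∑ j ∈ Finset.range k, μ^j) ≤ a (N+k) := by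
    intro k; induction k with
    | zero => simp
    | succ k ih =>
      have hpos := (hamem (N+k)).1
      have hca : c * a (N+k) ≤ c * (r * μ^k) :=
        mul_le_mul_of_nonneg_left (h1 k) hcpos.le
      have hcr2 : c * (r * μ^k) ≤ 1/2 := by
        have hμk1 : μ^k ≤ 1 := pow_le_one₀ hμ0.le hμ1.le
        have hμk0 : 0 ≤ μ^k := pow_nonneg hμ0.le k
        nlinarith
      have hexple : Real.exp (-(2 * (c * (r * μ^k)))) ≤ 1 - c * a (N+k) := by
        have := exp_lb (c * (r * μ^k)) (by positivity) hcr2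
        linarith
      have key : a N * lam^(k+1) * Real.exp (-(2*c*r) * ∑ j ∈ Finset.range (k+1), μ^j)
          = lam * (a N * lam^k * Real.exp (-(2*c*r) * ∑ j ∈ Finset.range k, μ^j))
              * Real.exp (-(2 * (c * (r * μ^k)))) := by
        rw [Finset.sum_range_succ, show -(2*c*r) * ((∑ j ∈ Finset.range k, μ^j) + μ^k)
          = (-(2*c*r) * ∑ j ∈ Finset.range k, μ^j) + (-(2 * (c * (r * μ^k)))) from by ring,
          Real.exp_add]
        ring
      have hXnn : 0 ≤ a N * lam^k * Real.exp (-(2*c*r) * ∑ j ∈ Finset.range k, μ^j) := by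
        positivity
      have hE := Real.exp_pos (-(2 * (c * (r * μ^k))))
      calc a N * lam^(k+1) * Real.exp (-(2*c*r) * ∑ j ∈ Finset.range (k+1), μ^j)
          = lam * (a N * lam^k * Real.exp (-(2*c*r) * ∑ j ∈ Finset.range k, μ^j))
              * Real.exp (-(2 * (c * (r * μ^k)))) := key
        _ ≤ lam * a (N+k) * (1 - c * a (N+k)) :=
            mul_le_mul (mul_le_mul_of_nonneg_left ih hlam0.le) hexple hE.le
              (mul_nonneg hlam0.le hpos.le)
        _ ≤ fm (a (N+k)) := hlb _ hpos (hallle k)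
        _ = a (N+(k+1)) := (hastep (N+k)).symm
  -- upper refined bound
  have h3 : ∀ k, a (N+k) ≤ a N * lam^k * Real.exp ((c*r) * ∑ j ∈ Finset.range k, μ^j) := by
    intro k; induction k with
    | zero => simp
    | succ k ih =>
      have hpos := (hamem (N+k)).1
      have hca : c * a (N+k) ≤ c * (r * μ^k) :=
        mul_le_mul_of_nonneg_left (h1 k) hcpos.le
      have hexple : 1 + c * a (N+k) ≤ Real.exp (c * (r * μ^k)) := by
        have := Real.add_one_le_exp (c * a (N+k))
        have := Real.exp_le_exp.mpr hca
        linarith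
      have key : a N * lam^(k+1) * Real.exp ((c*r) * ∑ j ∈ Finset.range (k+1), μ^j)
          = lam * (a N * lam^k * Real.exp ((c*r) * ∑ j ∈ Finset.range k, μ^j))
              * Real.exp (c * (r * μ^k)) := by
        rw [Finset.sum_range_succ, show (c*r) * ((∑ j ∈ Finset.range k, μ^j) + μ^k)
          = ((c*r) * ∑ j ∈ Finset.range k, μ^j) + (c * (r * μ^k)) from by ring,
          Real.exp_add]
        ring
      have hE := Real.exp_pos (c * (r * μ^k))
      have h1ca : 0 < 1 + c * a (N+k) := by positivity
      calc a (N+(k+1)) = fm (a (N+k)) := hastep (N+k)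
        _ ≤ lam * a (N+k) * (1 + c * a (N+k)) := hub2 _ hpos (hallle k)
        _ ≤ lam * (a N * lam^k * Real.exp ((c*r) * ∑ j ∈ Finset.range k, μ^j))
              * Real.exp (c * (r * μ^k)) :=
            mul_le_mul (mul_le_mul_of_nonneg_left ih hlam0.le) hexple h1ca.le
              (mul_nonneg hlam0.le (mul_nonneg (mul_nonneg haNpos.le
                (pow_nonneg hlam0.le k)) (Real.exp_pos _).le))
        _ = a N * lam^(k+1) * Real.exp ((c*r) * ∑ j ∈ Finset.range (k+1), μ^j) := key.symm
  -- sum bound and constants A B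
  have hSb : ∀ k : ℕ, (∑ j ∈ Finset.range k, μ^j) ≤ 1/(1-μ) := by
    intro k
    rw [geom_sum_eq hμ1.ne]
    have heq : (μ^k - 1)/(μ-1) = (1 - μ^k)/(1-μ) := by
      rw [div_eq_div_iff (by linarith) (by linarith)]; ring
    rw [heq, div_le_div_iff_of_pos_right (by linarith)]
    nlinarith [pow_nonneg hμ0.le k]
  have hS0 : ∀ k : ℕ, 0 ≤ ∑ j ∈ Finset.range k, μ^j :=
    fun k => Finset.sum_nonneg (fun j _ => pow_nonneg hμ0.le j)
  set A : ℝ := a N * Real.exp (-(2*c*r) * (1/(1-μ))) with hA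
  set B : ℝ := a N * Real.exp ((c*r) * (1/(1-μ))) with hB
  have hApos : 0 < A := by
    rw [hA]; exact mul_pos haNpos (Real.exp_pos _)
  have hBpos : 0 < B := by
    rw [hB]; exact mul_pos haNpos (Real.exp_pos _)
  have h2' : ∀ k, A * lam^k ≤ a (N+k) := by
    intro k
    refine le_trans ?_ (h2 k)
    rw [hA]
    have hee : Real.exp (-(2*c*r) * (1/(1-μ))) ≤
        Real.exp (-(2*c*r) * ∑ j ∈ Finset.range k, μ^j) := by
      apply Real.exp_le_exp.mpr
      have hmul := mul_le_mul_of_nonneg_left (hSb k) (by positivity : (0:ℝ) ≤ 2*c*r)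
      nlinarith [hmul]
    calc a N * Real.exp (-(2*c*r) * (1/(1-μ))) * lam^k
        = (a N * lam^k) * Real.exp (-(2*c*r) * (1/(1-μ))) := by ring
      _ ≤ (a N * lam^k) * Real.exp (-(2*c*r) * ∑ j ∈ Finset.range k, μ^j) :=
          mul_le_mul_of_nonneg_left hee (mul_nonneg haNpos.le (pow_nonneg hlam0.le k))
      _ = a N * lam^k * Real.exp (-(2*c*r) * ∑ j ∈ Finset.range k, μ^j) := by ring
  have h3' : ∀ k, a (N+k) ≤ B * lam^k := by
    intro k
    refine le_trans (h3 k) ?_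
    rw [hB]
    have hee : Real.exp ((c*r) * ∑ j ∈ Finset.range k, μ^j) ≤
        Real.exp ((c*r) * (1/(1-μ))) := by
      apply Real.exp_le_exp.mpr
      have hmul := mul_le_mul_of_nonneg_left (hSb k) (by positivity : (0:ℝ) ≤ c*r)
      nlinarith [hmul]
    calc a N * lam^k * Real.exp ((c*r) * ∑ j ∈ Finset.range k, μ^j)
        = (a N * lam^k) * Real.exp ((c*r) * ∑ j ∈ Finset.range k, μ^j) := by ring
      _ ≤ (a N * lam^k) * Real.exp ((c*r) * (1/(1-μ))) :=
          mul_le_mul_of_nonneg_left hee (mul_nonneg haNpos.le (pow_nonneg hlam0.le k))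
      _ = a N * Real.exp ((c*r) * (1/(1-μ))) * lam^k := by ring
  -- constants
  have hLg : Real.log lam < 0 := Real.log_neg hlam0 hlam1
  set C : ℝ := (N:ℝ) + 1 + (|Real.log A| + |Real.log B|) / (-Real.log lam) + 1 with hC
  have hCpos : 0 < C := by
    have hd : 0 ≤ (|Real.log A| + |Real.log B|) / (-Real.log lam) :=
      div_nonneg (by positivity) (by linarith)
    have hN0 : (0:ℝ) ≤ (N:ℝ) := Nat.cast_nonneg N
    rw [hC]; linarith
  refine ⟨C, hCpos, a (N+1) / 2, ⟨by linarith [(hamem (N+1)).1], ?_⟩, ?_⟩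
  · have : a (N+1) < a 0 := hadec (Nat.succ_pos N)
    have h0 : a 0 = x₀ := rfl
    linarith [(hamem (N+1)).1]
  intro x hx n hn
  have hSne : {k : ℕ | fm^[k] x₀ < x}.Nonempty :=
    (htends.eventually (eventually_lt_nhds hx.1)).exists
  have hnmem : a n < x := by
    have := Nat.sInf_mem hSne; rw [← hn] at this; exact this
  have hnge : N + 2 ≤ n := by
    by_contra h
    push_neg at h
    have h' : n ≤ N + 1 := Nat.lt_succ_iff.mp h
    have := hadec.antitone h'
    have hxδ := hx.2
    have := (hamem (N+1)).1
    linarith [hadec.antitone h']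
  have hn1 : x ≤ a (n-1) := by
    have hlt : n - 1 < n := by omega
    have := Nat.notMem_of_lt_sInf (by rw [← hn]; exact hlt)
    simpa using not_lt.mp this
  -- set k
  obtain ⟨k, hk, hk2⟩ : ∃ k, n = N + k ∧ 2 ≤ k := ⟨n - N, by omega, by omega⟩
  have hkm1 : n - 1 = N + (k-1) := by omega
  -- log inequalities
  have hlam_pow : ∀ m : ℕ, (0:ℝ) < lam ^ m := fun m => pow_pos hlam0 m
  have hi : Real.log A + (k:ℝ) * Real.log lam < Real.log x := by
    have hll : A * lam^k < x := by
      have hb := h2' k; rw [← hk] at hb; exact lt_of_le_of_lt hb hnmem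
    have hpos : (0:ℝ) < A * lam^k := mul_pos hApos (hlam_pow k)
    have := Real.log_lt_log hpos hll
    rwa [Real.log_mul hApos.ne' (hlam_pow k).ne', Real.log_pow] at this
  have hii : Real.log x ≤ Real.log B + ((k:ℝ) - 1) * Real.log lam := by
    have hll : x ≤ B * lam^(k-1) := by
      have hb := h3' (k-1); rw [← hkm1] at hb; exact le_trans hn1 hb
    have := Real.log_le_log hx.1 hll
    rwa [Real.log_mul hBpos.ne' (hlam_pow (k-1)).ne', Real.log_pow,
      Nat.cast_sub (by omega : 1 ≤ k), Nat.cast_one] at this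
  set u := Real.log x / Real.log lam with hu
  have huLg : u * Real.log lam = Real.log x := div_mul_cancel₀ _ hLg.ne
  have hnegLg : 0 < -Real.log lam := by linarith
  have hb1 : u - (k:ℝ) ≤ |Real.log A| / (-Real.log lam) := by
    rw [le_div_iff₀ hnegLg]
    nlinarith [neg_abs_le (Real.log A), hi, huLg]
  have hb2 : (k:ℝ) - 1 - u ≤ |Real.log B| / (-Real.log lam) := by
    rw [le_div_iff₀ hnegLg]
    nlinarith [le_abs_self (Real.log B), hii, huLg]
  have hkcast : (n:ℝ) = (N:ℝ) + (k:ℝ) := by rw [hk]; push_cast; ring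
  have hdivA : |Real.log A| / (-Real.log lam) ≤
      (|Real.log A| + |Real.log B|) / (-Real.log lam) := by
    rw [div_le_div_iff_of_pos_right hnegLg]
    linarith [abs_nonneg (Real.log B)]
  have hdivB : |Real.log B| / (-Real.log lam) ≤
      (|Real.log A| + |Real.log B|) / (-Real.log lam) := by
    rw [div_le_div_iff_of_pos_right hnegLg]
    linarith [abs_nonneg (Real.log A)]
  rw [abs_le]
  constructor
  · rw [hC, hkcast]
    have : (0:ℝ) ≤ (N:ℝ) := Nat.cast_nonneg N
    linarith [hb1, hdivA]
  · rw [hC, hkcast]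
    linarith [hb2, hdivB]
end

section
/- The factorial of the hitting time satisfies log(n(x)!) = (1/log λ) · log x · log log(1/x) + O(log x) as x → 0⁺: there exist C > 0 and δ ∈ (0, x₀) such that for all x ∈ (0, δ), |∑_{j=1}^{n(x)} log j − (1/log λ) · log x · log log(1/x)| ≤ C |log x|. -/
set_option maxHeartbeats 2000000
open MeasureTheory Filter Set

lemma aux_taylor (lam : ℝ) (fm : ℝ → ℝ) (hfm : ContDiff ℝ 2 fm)
    (hfm0 : fm 0 = 0) (hfmderiv : deriv fm 0 = lam) (x₀ : ℝ) (hx₀ : 0 < x₀) :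
    ∃ M > 0, ∀ x ∈ Icc (0:ℝ) x₀, |fm x - lam * x| ≤ M * x ^ 2 := by
  have h2 : ContDiff ℝ (1 + 1 : ℕ) fm := by norm_num; exact hfm
  rw [show ((1 + 1 : ℕ) : WithTop ℕ∞) = (1 : WithTop ℕ∞) + 1 by norm_cast] at h2
  obtain ⟨hd1, -, hc1⟩ := contDiff_succ_iff_deriv.mp h2
  obtain ⟨hd2, hcont2⟩ := contDiff_one_iff_deriv.mp hc1
  obtain ⟨M₂, hM₂⟩ := isCompact_Icc.exists_bound_of_continuousOn
    (s := Icc (0:ℝ) x₀) hcont2.continuousOn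
  set M := max M₂ 1 with hM
  have hMpos : (0:ℝ) < M := lt_of_lt_of_le one_pos (le_max_right _ _)
  refine ⟨M, hMpos, fun x hx => ?_⟩
  have step1 : ∀ t ∈ Icc (0:ℝ) x₀, |deriv fm t - lam| ≤ M * t := by
    intro t ht
    have := norm_image_sub_le_of_norm_deriv_le_segment'
      (f := deriv fm) (f' := deriv (deriv fm)) (a := 0) (b := x₀) (C := M)
      (fun y _ => (hd2 y).hasDerivAt.hasDerivWithinAt)
      (fun y hy => le_trans (hM₂ y (Ico_subset_Icc_self hy)) (le_max_left _ _)) t ht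
    simpa [hfmderiv, Real.norm_eq_abs] using this
  -- now bound g = fm - lam * id on [0, x]
  have hx0 : 0 ≤ x := hx.1
  have hsub : Icc (0:ℝ) x ⊆ Icc (0:ℝ) x₀ := Icc_subset_Icc le_rfl hx.2
  have step2 := norm_image_sub_le_of_norm_deriv_le_segment'
    (f := fun y => fm y - lam * y) (f' := fun y => deriv fm y - lam)
    (a := 0) (b := x) (C := M * x)
    (fun y _ => ((hd1 y).hasDerivAt.sub (by simpa using (hasDerivAt_id y).const_mul lam)).hasDerivWithinAt)
    (fun y hy => by
      have h1 := step1 y (hsub (Ico_subset_Icc_self hy))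
      have : M * y ≤ M * x := by nlinarith [hy.1, hy.2]
      calc ‖deriv fm y - lam‖ ≤ M * y := h1
        _ ≤ M * x := this) x (right_mem_Icc.mpr hx0)
  have := step2
  simp only [hfm0, Real.norm_eq_abs, mul_zero, sub_zero, sub_self] at this
  calc |fm x - lam * x| ≤ M * x * x := this
    _ = M * x ^ 2 := by ring

lemma aux_mem (fm : ℝ → ℝ) (x₀ : ℝ) (hx₀ : 0 < x₀)
    (hcontr : ∀ x ∈ Set.Ioc (0:ℝ) x₀, 0 < fm x ∧ fm x < x) :
    ∀ n, fm^[n] x₀ ∈ Ioc (0:ℝ) x₀ := by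
  intro n
  induction n with
  | zero => exact ⟨hx₀, le_rfl⟩
  | succ n ih =>
    rw [Function.iterate_succ_apply']
    obtain ⟨h1, h2⟩ := hcontr _ ih
    exact ⟨h1, (h2.trans_le ih.2).le⟩

lemma aux_anti (fm : ℝ → ℝ) (x₀ : ℝ) (hx₀ : 0 < x₀)
    (hcontr : ∀ x ∈ Set.Ioc (0:ℝ) x₀, 0 < fm x ∧ fm x < x) :
    StrictAnti (fun n => fm^[n] x₀) := by
  apply strictAnti_nat_of_succ_lt
  intro n
  simp only [Function.iterate_succ_apply']
  exact (hcontr _ (aux_mem fm x₀ hx₀ hcontr n)).2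

lemma aux_decay (fm : ℝ → ℝ) (hfc : Continuous fm) (x₀ : ℝ) (hx₀ : 0 < x₀)
    (hcontr : ∀ x ∈ Set.Ioc (0:ℝ) x₀, 0 < fm x ∧ fm x < x) :
    ∀ u > 0, ∃ N, fm^[N] x₀ < u := by
  intro u hu
  rcases lt_or_ge x₀ u with h | h
  · exact ⟨0, h⟩
  · have hne : (Icc u x₀).Nonempty := ⟨u, le_rfl, h⟩
    have hcont : ContinuousOn (fun x => fm x / x) (Icc u x₀) :=
      hfc.continuousOn.div continuousOn_id (fun x hx => (hu.trans_le hx.1).ne')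
    obtain ⟨c, hc, hmax⟩ := isCompact_Icc.exists_isMaxOn hne hcont
    set κ := fm c / c with hκ
    have hc0 : 0 < c := hu.trans_le hc.1
    have hcIoc : c ∈ Ioc (0:ℝ) x₀ := ⟨hc0, hc.2⟩
    have hκ0 : 0 < κ := div_pos (hcontr c hcIoc).1 hc0
    have hκ1 : κ < 1 := (div_lt_one hc0).mpr (hcontr c hcIoc).2
    have key : ∀ n, (∀ m ≤ n, u ≤ fm^[m] x₀) → fm^[n] x₀ ≤ κ ^ n * x₀ := by
      intro n
      induction n with
      | zero => intro _; simp
      | succ n ih =>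
        intro hall
        have ihn := ih (fun m hm => hall m (hm.trans n.le_succ))
        set y := fm^[n] x₀ with hy
        have hyIcc : y ∈ Icc u x₀ := ⟨hall n n.le_succ, (aux_mem fm x₀ hx₀ hcontr n).2⟩
        have hy0 : 0 < y := hu.trans_le hyIcc.1
        have hle : fm y / y ≤ κ := hmax hyIcc
        have : fm y ≤ κ * y := (div_le_iff₀ hy0).mp hle
        rw [Function.iterate_succ_apply']
        calc fm y ≤ κ * y := this
          _ ≤ κ * (κ ^ n * x₀) := by nlinarith
          _ = κ ^ (n + 1) * x₀ := by ring
    have htend : Tendsto (fun n : ℕ => κ ^ n * x₀) atTop (nhds 0) := by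
      simpa using (tendsto_pow_atTop_nhds_zero_of_lt_one hκ0.le hκ1).mul_const x₀
    obtain ⟨n, hn⟩ := (htend.eventually (gt_mem_nhds hu)).exists
    by_contra hcon
    push_neg at hcon
    exact absurd ((key n (fun m _ => hcon m)).trans_lt hn) (not_lt.mpr (hcon n))

lemma aux_logfact (n : ℕ) :
    |(∑ j ∈ Finset.Icc 1 n, Real.log (j:ℝ)) - n * Real.log n| ≤ n := by
  have hlower : (n:ℝ) * Real.log n - n ≤ ∑ j ∈ Finset.Icc 1 n, Real.log (j:ℝ) := by
    induction n with
    | zero => simp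
    | succ n ih =>
      rw [Finset.sum_Icc_succ_top (Nat.one_le_iff_ne_zero.mpr n.succ_ne_zero)]
      have key : (n:ℝ) * (Real.log (n+1) - Real.log n) ≤ 1 := by
        rcases Nat.eq_zero_or_pos n with rfl | hn
        · simp
        · have hn0 : (0:ℝ) < n := by exact_mod_cast hn
          have : Real.log ((n+1)/n) ≤ (n+1)/n - 1 :=
            Real.log_le_sub_one_of_pos (by positivity)
          rw [Real.log_div (by positivity) hn0.ne'] at this
          have h2 : (n+1:ℝ)/n - 1 = 1/n := by field_simp; ring
          rw [h2] at this
          calc (n:ℝ) * (Real.log (n+1) - Real.log n) ≤ n * (1/n) := by nlinarith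
            _ = 1 := by field_simp
      push_cast
      push_cast at ih
      nlinarith [key, ih]
  have hupper : (∑ j ∈ Finset.Icc 1 n, Real.log (j:ℝ)) ≤ n * Real.log n := by
    calc (∑ j ∈ Finset.Icc 1 n, Real.log (j:ℝ))
        ≤ (Finset.Icc 1 n).card • Real.log n := by
          apply Finset.sum_le_card_nsmul
          intro j hj
          simp only [Finset.mem_Icc] at hj
          exact Real.log_le_log (by exact_mod_cast hj.1) (by exact_mod_cast hj.2)
      _ = n * Real.log n := by simp [Nat.card_Icc, nsmul_eq_mul]
  rw [abs_sub_le_iff]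
  exact ⟨by linarith, by linarith⟩

lemma aux_stirling (L A : ℝ) (hL : 0 < L) (hA : 0 < A) :
    ∃ C > 0, ∃ T : ℝ, 1 ≤ T ∧ ∀ t, T ≤ t → ∀ n : ℕ, |(n:ℝ) - t/L| ≤ A →
      |(∑ j ∈ Finset.Icc 1 n, Real.log (j:ℝ)) - (t/L) * Real.log t| ≤ C * t := by
  set c₁ := Real.log 2 + |Real.log L| with hc₁def
  have hc₁ : 0 < c₁ := by
    have h2 := Real.log_pos one_lt_two
    have h3 := abs_nonneg (Real.log L)
    rw [hc₁def]; linarith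
  set C := (1/L + A) * (1 + c₁) + A + 1 with hCdef
  have hC : 0 < C := by
    have h1L : 0 < 1/L := by positivity
    rw [hCdef]; nlinarith
  refine ⟨C, hC, max (max 1 (L*(A+2))) (2*A*L), le_max_of_le_left (le_max_left _ _), ?_⟩
  intro t ht n hn
  have ht1 : (1:ℝ) ≤ t := le_trans (le_max_of_le_left (le_max_left _ _)) ht
  have ht0 : (0:ℝ) < t := lt_of_lt_of_le one_pos ht1
  have htL : L * (A + 2) ≤ t := le_trans (le_max_of_le_left (le_max_right _ _)) ht
  have htAL : 2*A*L ≤ t := le_trans (le_max_right _ _) ht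
  set a := t / L with hadef
  have haL : a * L = t := by rw [hadef]; field_simp
  have ha2 : A + 2 ≤ a := by rw [hadef, le_div_iff₀ hL]; linarith [htL]
  have hnlow : a - A ≤ n := by have := abs_le.mp hn; linarith [this.1]
  have hnhigh : (n:ℝ) ≤ a + A := by have := abs_le.mp hn; linarith [this.2]
  have hn0 : (0:ℝ) < n := by linarith
  -- ratio bounds
  have hr1 : 1/(2*L) ≤ (n:ℝ)/t := by
    rw [div_le_div_iff₀ (by positivity) ht0]
    nlinarith [mul_le_mul_of_nonneg_left hnlow hL.le, haL, htAL]
  have hr2 : (n:ℝ)/t ≤ 2/L := by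
    rw [div_le_div_iff₀ ht0 hL]
    nlinarith [mul_le_mul_of_nonneg_left hnhigh hL.le, haL, htAL, hA, hL]
  have hlognt : |Real.log n - Real.log t| ≤ c₁ := by
    have h1 : Real.log ((n:ℝ)/t) ≤ Real.log (2/L) := Real.log_le_log (by positivity) hr2
    have h2 : Real.log (1/(2*L)) ≤ Real.log ((n:ℝ)/t) := Real.log_le_log (by positivity) hr1
    rw [Real.log_div hn0.ne' ht0.ne'] at h1 h2
    rw [Real.log_div two_ne_zero hL.ne'] at h1
    rw [Real.log_div one_ne_zero (by positivity), Real.log_one,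
      Real.log_mul two_ne_zero hL.ne'] at h2
    have hL1 := le_abs_self (Real.log L)
    have hL2 := neg_abs_le (Real.log L)
    rw [abs_le]
    constructor <;> [linarith; linarith]
  -- assembly
  have htri : |(∑ j ∈ Finset.Icc 1 n, Real.log (j:ℝ)) - a * Real.log t|
      ≤ |(∑ j ∈ Finset.Icc 1 n, Real.log (j:ℝ)) - n * Real.log n|
        + |(n:ℝ) * Real.log n - n * Real.log t|
        + |(n:ℝ) * Real.log t - a * Real.log t| := by
    have := abs_sub_le (∑ j ∈ Finset.Icc 1 n, Real.log (j:ℝ)) ((n:ℝ) * Real.log n)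
      (a * Real.log t)
    have := abs_sub_le ((n:ℝ) * Real.log n) ((n:ℝ) * Real.log t) (a * Real.log t)
    linarith
  have hb1 := aux_logfact n
  have hb2 : |(n:ℝ) * Real.log n - n * Real.log t| ≤ n * c₁ := by
    rw [← mul_sub, abs_mul, abs_of_nonneg hn0.le]
    exact mul_le_mul_of_nonneg_left hlognt hn0.le
  have hlogtt : Real.log t ≤ t := by linarith [Real.log_le_sub_one_of_pos ht0]
  have hlogt0 : 0 ≤ Real.log t := Real.log_nonneg ht1
  have hb3 : |(n:ℝ) * Real.log t - a * Real.log t| ≤ A * t := by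
    rw [← sub_mul, abs_mul, abs_of_nonneg hlogt0]
    calc |(n:ℝ) - a| * Real.log t ≤ A * Real.log t :=
          mul_le_mul_of_nonneg_right hn hlogt0
      _ ≤ A * t := mul_le_mul_of_nonneg_left hlogtt hA.le
  have hnt : (n:ℝ) ≤ t * (1/L + A) := by
    have : a = t * (1/L) := by rw [hadef]; ring
    nlinarith [hnhigh, ht1, hA]
  have hfin : (n:ℝ) * (1 + c₁) ≤ t * (1/L + A) * (1 + c₁) :=
    mul_le_mul_of_nonneg_right hnt (by positivity)
  calc |(∑ j ∈ Finset.Icc 1 n, Real.log (j:ℝ)) - t/L * Real.log t|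
      ≤ (n:ℝ) + n * c₁ + A * t := by rw [← hadef]; linarith [htri, hb1, hb2, hb3]
    _ ≤ C * t := by rw [hCdef]; nlinarith [hfin, ht0]

lemma aux_hit (L A B ly0 lyn lyn1 t nn NN : ℝ) (hL : 0 < L) (hNN : 0 ≤ NN)
    (hALeq : A * L = (NN + 2) * L + (|ly0| + B))
    (h1 : -B ≤ lyn - ly0 - (nn - NN) * (-L))
    (he1 : lyn < -t)
    (h2 : lyn1 - ly0 - (nn - 1 - NN) * (-L) ≤ B)
    (he2 : -t ≤ lyn1) : |nn - t / L| ≤ A := by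
  have hNL : 0 ≤ NN * L := mul_nonneg hNN hL.le
  have ha1 := le_abs_self ly0
  have ha2 := neg_abs_le ly0
  rw [abs_le]
  constructor
  · have key : t ≤ (nn + A) * L := by nlinarith
    have : t / L ≤ nn + A := by rw [div_le_iff₀ hL]; linarith
    linarith
  · have key : (nn - A) * L ≤ t := by nlinarith
    have : nn - A ≤ t / L := by rw [le_div_iff₀ hL]; linarith
    linarith

theorem stmt_7
    (ε : ℝ) (hε : 0 < ε)
    (lam : ℝ) (hlam0 : 0 < lam) (hlam1 : lam < 1)
    (fm : ℝ → ℝ) (hfm : ContDiff ℝ 2 fm) (hfmmono : StrictMono fm)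
    (hfm0 : fm 0 = 0) (hfmderiv : deriv fm 0 = lam)
    (x₀ : ℝ) (hx₀ : 0 < x₀)
    (hcontr : ∀ x ∈ Set.Ioc (0:ℝ) x₀, 0 < fm x ∧ fm x < x) :
    ∃ C > 0, ∃ δ ∈ Set.Ioo (0:ℝ) x₀, ∀ x ∈ Set.Ioo (0:ℝ) δ, ∀ n : ℕ,
      n = sInf {k : ℕ | fm^[k] x₀ < x} →
      |(∑ j ∈ Finset.Icc 1 n, Real.log (j : ℝ))
          - (1 / Real.log lam) * Real.log x * Real.log (Real.log (1/x))|
        ≤ C * |Real.log x| := by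
  have hfc : Continuous fm := hfm.continuous
  obtain ⟨M, hM, htay⟩ := aux_taylor lam fm hfm hfm0 hfmderiv x₀ hx₀
  have hmem := aux_mem fm x₀ hx₀ hcontr
  have hanti := aux_anti fm x₀ hx₀ hcontr
  have hdecay := aux_decay fm hfc x₀ hx₀ hcontr
  -- constants
  set K := M / lam with hKdef
  have hK : 0 < K := div_pos hM hlam0
  set κ := (1 + lam) / 2 with hκdef
  have hκ0 : 0 < κ := by rw [hκdef]; linarith
  have hκ1 : κ < 1 := by rw [hκdef]; linarith
  set u := min x₀ (min (lam / (2*M)) ((1 - lam) / (2*M))) with hudef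
  have hu : 0 < u := by
    rw [hudef]
    refine lt_min hx₀ (lt_min (by positivity) (div_pos (by linarith) (by positivity)))
  have hux₀ : u ≤ x₀ := min_le_left _ _
  have huM1 : M * u ≤ lam / 2 := by
    have : u ≤ lam / (2*M) := by rw [hudef]; exact le_trans (min_le_right _ _) (min_le_left _ _)
    calc M * u ≤ M * (lam / (2*M)) := by nlinarith
      _ = lam / 2 := by field_simp
  have huM2 : M * u ≤ (1 - lam) / 2 := by
    have : u ≤ (1 - lam) / (2*M) := by
      rw [hudef]; exact le_trans (min_le_right _ _) (min_le_right _ _)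
    calc M * u ≤ M * ((1 - lam) / (2*M)) := by nlinarith
      _ = (1 - lam) / 2 := by field_simp
  obtain ⟨N, hN⟩ := hdecay u hu
  set y : ℕ → ℝ := fun m => fm^[N + m] x₀ with hydef
  have hysucc : ∀ m, y (m + 1) = fm (y m) := by
    intro m
    show fm^[N + (m+1)] x₀ = fm (fm^[N + m] x₀)
    rw [show N + (m+1) = (N+m) + 1 by omega, Function.iterate_succ_apply']
  have hy0 : ∀ m, 0 < y m := fun m => (hmem (N + m)).1
  have hyx₀ : ∀ m, y m ≤ x₀ := fun m => (hmem (N + m)).2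
  have hyanti : ∀ m, y m ≤ y 0 := by
    intro m
    exact hanti.antitone (by omega : N + 0 ≤ N + m)
  have hyu : ∀ m, y m < u := fun m => lt_of_le_of_lt (hyanti m) hN
  -- per-step bounds
  have hstep : ∀ m, fm (y m) ≤ κ * y m ∧
      |Real.log (y (m+1)) - Real.log (y m) - Real.log lam| ≤ 2 * K * y m := by
    intro m
    set z := y m with hzdef
    have hz0 : 0 < z := hy0 m
    have hzu : z < u := hyu m
    have hzx₀ : z ≤ x₀ := hyx₀ m
    have htz := htay z ⟨hz0.le, hzx₀⟩
    have hKz : K * z ≤ 1/2 := by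
      rw [hKdef]
      rw [div_mul_eq_mul_div, div_le_div_iff₀ hlam0 two_pos]
      nlinarith
    have hKz0 : 0 ≤ K * z := by positivity
    have hKlam : K * lam = M := by rw [hKdef]; field_simp
    have habs := abs_le.mp htz
    have hflow : lam * z * (1 - K * z) ≤ fm z := by nlinarith [habs.1]
    have hfhigh : fm z ≤ lam * z * (1 + K * z) := by nlinarith [habs.2]
    have hgeo : fm z ≤ κ * z := by
      calc fm z ≤ lam * z * (1 + K * z) := hfhigh
        _ = z * (lam + K * lam * z) := by ring
        _ = z * (lam + M * z) := by rw [hKlam]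
        _ ≤ z * (lam + M * u) := by nlinarith
        _ ≤ κ * z := by rw [hκdef]; nlinarith
    refine ⟨hgeo, ?_⟩
    rw [hysucc m, ← hzdef]
    have hfz0 : 0 < fm z := (hcontr z ⟨hz0, hzx₀⟩).1
    set r := fm z / (lam * z) with hrdef
    have hlz0 : (0:ℝ) < lam * z := by positivity
    have hr1 : 1 - K * z ≤ r := by rw [hrdef, le_div_iff₀ hlz0]; nlinarith
    have hr2 : r ≤ 1 + K * z := by rw [hrdef, div_le_iff₀ hlz0]; nlinarith
    have hrpos : 0 < r := by nlinarith
    have hlogeq : Real.log (fm z) - Real.log z - Real.log lam = Real.log r := by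
      rw [hrdef, Real.log_div hfz0.ne' hlz0.ne', Real.log_mul hlam0.ne' hz0.ne']
      ring
    have hup : Real.log r ≤ 2 * K * z := by
      have := Real.log_le_sub_one_of_pos hrpos
      nlinarith
    have hlow : -(2 * K * z) ≤ Real.log r := by
      have hinv : r⁻¹ ≤ 1 + 2 * (K * z) := by
        rw [← one_div, div_le_iff₀ hrpos]
        nlinarith
      have h2 := Real.log_le_sub_one_of_pos (inv_pos.mpr hrpos)
      rw [Real.log_inv] at h2
      nlinarith
    rw [abs_le]
    constructor
    · nlinarith [hlogeq, hlow]
    · nlinarith [hlogeq, hup]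
  have hgeo : ∀ m, y m ≤ κ ^ m * y 0 := by
    intro m
    induction m with
    | zero => simp
    | succ m ih =>
      rw [hysucc m]
      calc fm (y m) ≤ κ * y m := (hstep m).1
        _ ≤ κ * (κ ^ m * y 0) := by nlinarith [hy0 m]
        _ = κ ^ (m+1) * y 0 := by ring
  have htel : ∀ m, |Real.log (y m) - Real.log (y 0) - m * Real.log lam|
      ≤ 2 * K * y 0 * ∑ j ∈ Finset.range m, κ ^ j := by
    intro m
    induction m with
    | zero => simp
    | succ m ih =>
      have h1 := (hstep m).2
      have h2 : 2 * K * y m ≤ 2 * K * y 0 * κ ^ m := by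
        have := hgeo m
        nlinarith
      have htri := abs_sub_le (Real.log (y (m+1)) - (m+1) * Real.log lam)
        (Real.log (y m) - m * Real.log lam) (Real.log (y 0))
      rw [Finset.sum_range_succ]
      push_cast
      push_cast at ih
      have e1 : |Real.log (y (m+1)) - ((m:ℝ)+1) * Real.log lam -
          (Real.log (y m) - m * Real.log lam)| = |Real.log (y (m+1)) - Real.log (y m)
          - Real.log lam| := by ring_nf
      calc |Real.log (y (m+1)) - Real.log (y 0) - ((m:ℝ)+1) * Real.log lam|
          = |Real.log (y (m+1)) - ((m:ℝ)+1) * Real.log lam - Real.log (y 0)| := by ring_nf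
        _ ≤ |Real.log (y (m+1)) - ((m:ℝ)+1) * Real.log lam -
              (Real.log (y m) - m * Real.log lam)|
            + |Real.log (y m) - m * Real.log lam - Real.log (y 0)| := htri
        _ ≤ (2 * K * y m) + (2 * K * y 0 * ∑ j ∈ Finset.range m, κ ^ j) := by
            rw [e1]
            have e2 : |Real.log (y m) - (m:ℝ) * Real.log lam - Real.log (y 0)|
                = |Real.log (y m) - Real.log (y 0) - (m:ℝ) * Real.log lam| := by ring_nf
            rw [e2]
            exact add_le_add h1 ih
        _ ≤ 2 * K * y 0 * (∑ j ∈ Finset.range m, κ ^ j + κ ^ m) := by nlinarith [h2]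
        _ = 2 * K * y 0 * (∑ j ∈ Finset.range m, κ ^ j) + 2 * K * y 0 * κ ^ m := by ring
        _ = _ := by ring
  set B := 2 * K * y 0 / (1 - κ) with hBdef
  have hBpos : 0 < B := by
    have := hy0 0
    rw [hBdef]
    have h1κ : 0 < 1 - κ := by linarith
    positivity
  have hsum : ∀ m, (∑ j ∈ Finset.range m, κ ^ j) ≤ 1 / (1 - κ) := by
    intro m
    rw [geom_sum_eq hκ1.ne m]
    rw [show (κ ^ m - 1) / (κ - 1) = (1 - κ ^ m) / (1 - κ) by
      rw [← neg_div_neg_eq]; ring_nf]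
    have h1κ : 0 < 1 - κ := by linarith
    gcongr
    nlinarith [pow_nonneg hκ0.le m]
  have hBfin : ∀ m, |Real.log (y m) - Real.log (y 0) - m * Real.log lam| ≤ B := by
    intro m
    refine le_trans (htel m) ?_
    rw [hBdef, div_eq_mul_one_div]
    have h2K : 0 ≤ 2 * K * y 0 := by nlinarith [hy0 0, hK]
    exact mul_le_mul_of_nonneg_left (hsum m) h2K
  -- main constants
  have hloglam : Real.log lam < 0 := Real.log_neg hlam0 hlam1
  set L := -Real.log lam with hLdef
  have hL : 0 < L := by rw [hLdef]; linarith
  set A := (N:ℝ) + 2 + (|Real.log (y 0)| + B) / L with hAdef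
  have hA : 0 < A := by
    have h1 : 0 ≤ (|Real.log (y 0)| + B) / L :=
      div_nonneg (add_nonneg (abs_nonneg _) hBpos.le) hL.le
    have h2 : (0:ℝ) ≤ N := Nat.cast_nonneg N
    rw [hAdef]; linarith
  have hALeq : A * L = ((N:ℝ) + 2) * L + (|Real.log (y 0)| + B) := by
    rw [hAdef]; field_simp
  obtain ⟨C, hC, T, hT1, hstir⟩ := aux_stirling L A hL hA
  set δ := min (y 1) (Real.exp (-T)) with hδdef
  have hδ0 : 0 < δ := lt_min (hy0 1) (Real.exp_pos _)
  have hδx₀ : δ < x₀ := by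
    have h1 : y 1 < x₀ := by
      have := hanti (show 0 < N + 1 by omega)
      exact this
    exact lt_of_le_of_lt (min_le_left _ _) h1
  refine ⟨C, hC, δ, ⟨hδ0, hδx₀⟩, ?_⟩
  intro x hx n hn
  have hx0 : 0 < x := hx.1
  have hxδ : x < δ := hx.2
  have hxy1 : x < y 1 := lt_of_lt_of_le hxδ (min_le_left _ _)
  have hxexp : x < Real.exp (-T) := lt_of_lt_of_le hxδ (min_le_right _ _)
  have hlogx : Real.log x < -T := by
    have := Real.log_lt_log hx0 hxexp
    rwa [Real.log_exp] at this
  set t := -Real.log x with htdef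
  have hTt : T ≤ t := by rw [htdef]; linarith
  have ht1 : (1:ℝ) ≤ t := le_trans hT1 hTt
  have ht0 : (0:ℝ) < t := lt_of_lt_of_le one_pos ht1
  -- hitting time facts
  obtain ⟨N', hN'⟩ := hdecay x hx0
  have hSne : {k : ℕ | fm^[k] x₀ < x}.Nonempty := ⟨N', hN'⟩
  have hnmem : fm^[n] x₀ < x := by rw [hn]; exact Nat.sInf_mem hSne
  have hnmin : ∀ k, k < n → x ≤ fm^[k] x₀ := by
    intro k hk
    by_contra hcon
    push_neg at hcon
    have h1 : sInf {k : ℕ | fm^[k] x₀ < x} ≤ k := Nat.sInf_le hcon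
    rw [← hn] at h1
    omega
  have hnN : N + 2 ≤ n := by
    by_contra hcon
    push_neg at hcon
    have h1 : fm^[N+1] x₀ ≤ fm^[n] x₀ := hanti.antitone (by omega)
    have : x < y 1 := hxy1
    have : x < fm^[n] x₀ := lt_of_lt_of_le this h1
    linarith [hnmem]
  -- apply telescoping at m = n - N and m = n - 1 - N
  have hyn : fm^[n] x₀ = y (n - N) := by
    show fm^[n] x₀ = fm^[N + (n - N)] x₀
    congr 1; omega
  have hyn1 : fm^[n-1] x₀ = y (n - 1 - N) := by
    show fm^[n-1] x₀ = fm^[N + (n - 1 - N)] x₀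
    congr 1; omega
  have hcast1 : ((n - N : ℕ) : ℝ) = (n:ℝ) - N := by
    have : N ≤ n := by omega
    push_cast [this]; ring
  have hcast2 : ((n - 1 - N : ℕ) : ℝ) = (n:ℝ) - 1 - N := by
    have h0 : n - 1 - N = n - (N + 1) := by omega
    have h1 : N + 1 ≤ n := by omega
    rw [h0]
    push_cast [h1]
    ring
  have hB1 := hBfin (n - N)
  have hB2 := hBfin (n - 1 - N)
  rw [hcast1] at hB1
  rw [hcast2] at hB2
  have he1 : Real.log (y (n - N)) < -t := by
    rw [← hyn, htdef, neg_neg]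
    exact Real.log_lt_log (hmem n).1 hnmem
  have he2 : -t ≤ Real.log (y (n - 1 - N)) := by
    rw [← hyn1, htdef, neg_neg]
    exact Real.log_le_log hx0 (hnmin (n-1) (by omega))
  have hlamL : Real.log lam = -L := by rw [hLdef]; ring
  have habs : |(n:ℝ) - t / L| ≤ A := by
    have hb1 := abs_le.mp hB1
    have hb2 := abs_le.mp hB2
    rw [hlamL] at hb1 hb2
    exact aux_hit L A B (Real.log (y 0)) (Real.log (y (n - N))) (Real.log (y (n - 1 - N)))
      t (n:ℝ) (N:ℝ) hL (Nat.cast_nonneg N) hALeq hb1.1 he1 hb2.2 he2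
  have hmain := hstir t hTt n habs
  -- rewrite the goal
  have hx1 : x < 1 := by
    have : Real.exp (-T) ≤ 1 := Real.exp_le_one_iff.mpr (by linarith)
    linarith
  have hg1 : Real.log (1/x) = t := by rw [one_div, Real.log_inv, htdef]
  have hg2 : Real.log x = -t := by rw [htdef]; ring
  have hg3 : |Real.log x| = t := by rw [hg2, abs_neg, abs_of_pos ht0]
  rw [hg1, hg3, hg2, hlamL]
  have hexpr : 1 / -L * -t * Real.log t = t / L * Real.log t := by
    field_simp
  rw [hexpr]
  exact hmain
end

section
/- There exist a constant K > 0 and x₀ ∈ (0, x₀'] such that φ(x) ≤ K · f₋⁻¹(x) · φ(f₋⁻¹(x)) for all x ∈ (0, x₀]; consequently the ratio φ(f₋⁻¹(x)) / φ(x) tends to +∞ as x → 0⁺. -/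
open MeasureTheory Filter Set

theorem stmt_9
    (ε : ℝ) (hε : 0 < ε)
    (f g : ℝ → ℝ)
    (hf : ContDiff ℝ 2 f) (hg : ContDiff ℝ 2 g)
    (hfmono : StrictMono f)
    (hgf : Function.LeftInverse g f) (hfg : Function.RightInverse g f)
    (fm fminv : ℝ → ℝ)
    (hfm : ∀ x, fm x = f x - ε)
    (hfminv : ∀ x, fminv x = g (x + ε))
    (hfm0 : fm 0 = 0)
    (lam : ℝ) (hlam : lam = deriv fm 0) (hlam0 : 0 < lam) (hlam1 : lam < 1)
    (p : ℝ → ℝ) (hp : ContDiffOn ℝ 1 p (Set.Icc (-ε) ε))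
    (hpnn : ∀ z ∈ Set.Icc (-ε) ε, 0 ≤ p z) (hpe : 0 < p (-ε))
    (x₀' : ℝ) (hx₀' : 0 < x₀')
    (φ : ℝ → ℝ) (hφc : Continuous φ) (hφnn : ∀ x, 0 ≤ φ x)
    (hφpos : ∀ x ∈ Set.Ioc 0 x₀', 0 < φ x)
    (hstat : ∀ x ∈ Set.Icc 0 x₀',
      φ x = (1/ε) * ∫ y in (0:ℝ)..(fminv x), p (x - f y) * φ y) :
    ∃ K > 0, ∃ x₀ ∈ Set.Ioc (0:ℝ) x₀',
      (∀ x ∈ Set.Ioc (0:ℝ) x₀, φ x ≤ K * fminv x * φ (fminv x)) ∧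
      Filter.Tendsto (fun x => φ (fminv x) / φ x) (nhdsWithin 0 (Set.Ioi 0)) Filter.atTop := by
  have hfc : Continuous f := hf.continuous
  have hgc : Continuous g := hg.continuous
  have hf0 : f 0 = ε := by have h := hfm 0; rw [hfm0] at h; linarith
  have hgm : StrictMono g := fun a b hab => by
    have h1 : f (g a) < f (g b) := by rw [hfg a, hfg b]; exact hab
    exact hfmono.lt_iff_lt.mp h1
  have hfminv_mono : StrictMono fminv := fun a b hab => by
    rw [hfminv a, hfminv b]; exact hgm (by linarith)
  have hfminv0 : fminv 0 = 0 := by rw [hfminv, zero_add, ← hf0, hgf]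
  have hfminvc : Continuous fminv := by
    have h : fminv = fun x => g (x + ε) := funext hfminv
    rw [h]; exact hgc.comp (continuous_id.add continuous_const)
  have f_fminv : ∀ x, f (fminv x) = x + ε := fun x => by rw [hfminv]; exact hfg _
  have hfmono' := hfmono.monotone
  have hfminv_nonneg : ∀ x, 0 ≤ x → 0 ≤ fminv x := fun x hx => by
    rw [← hfminv0]; exact hfminv_mono.monotone hx
  have hdf : deriv f 0 = lam := by
    have h : fm = fun x => f x - ε := funext hfm
    rw [hlam, h, deriv_sub_const]
  have hderivc : Continuous (deriv f) := hf.continuous_deriv (by norm_num)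
  -- δ₂ : right neighborhood where deriv f < 1, hence X ≤ fminv X
  obtain ⟨δ₂, hδ₂pos, hδ₂⟩ : ∃ δ₂ > 0, ∀ x : ℝ, |x| < δ₂ → deriv f x < 1 := by
    have hopen : IsOpen {x : ℝ | deriv f x < 1} := isOpen_lt hderivc continuous_const
    have h0 : (0:ℝ) ∈ {x : ℝ | deriv f x < 1} := by simp only [mem_setOf_eq, hdf]; linarith
    obtain ⟨r, hr, hball⟩ := Metric.isOpen_iff.mp hopen 0 h0
    exact ⟨r, hr, fun x hx => hball (by simpa [Real.dist_eq] using hx)⟩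
  have hXle : ∀ X : ℝ, 0 ≤ X → X < δ₂ → X ≤ fminv X := by
    intro X hX0 hXδ
    have hfX : f X ≤ X + ε := by
      rcases eq_or_lt_of_le hX0 with h | h
      · rw [← h, hf0]; linarith
      · have hmono : StrictMonoOn (fun x => x - f x) (Icc (-δ₂) δ₂) := by
          apply strictMonoOn_of_deriv_pos (convex_Icc _ _)
          · exact (continuous_id.sub hfc).continuousOn
          · intro x hx
            rw [interior_Icc] at hx
            have hd : deriv (fun x => x - f x) x = 1 - deriv f x := by
              rw [deriv_fun_sub differentiableAt_fun_id (hf.differentiable (by norm_num) x), deriv_id'']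
            rw [hd]
            have := hδ₂ x (abs_lt.mpr ⟨hx.1, hx.2⟩)
            linarith
        have h01 : (0:ℝ) ∈ Icc (-δ₂) δ₂ := ⟨by linarith, le_of_lt hδ₂pos⟩
        have hX1 : X ∈ Icc (-δ₂) δ₂ := ⟨by linarith, le_of_lt hXδ⟩
        have hlt := hmono h01 hX1 h
        simp only at hlt
        have hf0' : f 0 = ε := hf0
        linarith
    calc X = g (f X) := (hgf X).symm
      _ ≤ g (X + ε) := hgm.monotone hfX
      _ = fminv X := (hfminv X).symm
  -- M : max of p on Icc (-ε) ε
  obtain ⟨zM, hzM, hzMmax⟩ :=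
    isCompact_Icc.exists_isMaxOn (nonempty_Icc.mpr (by linarith : -ε ≤ ε)) hp.continuousOn
  set M := p zM with hM
  have hMbound : ∀ z ∈ Icc (-ε) ε, p z ≤ M := fun z hz => hzMmax hz
  have hMpos : 0 < M := lt_of_lt_of_le hpe (hMbound (-ε) ⟨le_refl _, by linarith⟩)
  -- c, δ : lower bound for p near -ε
  set c := p (-ε) / 2 with hc_def
  have hcpos : 0 < c := by rw [hc_def]; linarith
  obtain ⟨δ, hδpos, hδε, hδ⟩ : ∃ δ > 0, δ ≤ ε ∧ ∀ z, -ε ≤ z → z ≤ -ε + δ → c ≤ p z := by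
    have hcont : ContinuousWithinAt p (Icc (-ε) ε) (-ε) :=
      hp.continuousOn.continuousWithinAt ⟨le_refl _, by linarith⟩
    rw [Metric.continuousWithinAt_iff] at hcont
    obtain ⟨d, hd, hball⟩ := hcont c hcpos
    refine ⟨min (d/2) ε, lt_min (by linarith) hε, min_le_right _ _, fun z hz1 hz2 => ?_⟩
    have hmr := min_le_right (d/2) ε
    have hml := min_le_left (d/2) ε
    have hzIcc : z ∈ Icc (-ε) ε := ⟨hz1, by linarith⟩
    have hdist : dist z (-ε) < d := by
      rw [Real.dist_eq, abs_of_nonneg (by linarith)]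
      linarith
    have hb := hball hzIcc hdist
    rw [Real.dist_eq] at hb
    have hb2 := (abs_lt.mp hb).1
    rw [hc_def] at *
    linarith
  -- integrability and range facts
  have hint : ∀ w : ℝ, 0 ≤ w → w ≤ 2*ε →
      IntervalIntegrable (fun y => p (w - f y) * φ y) volume 0 (fminv w) ∧
      (∀ y ∈ Icc (0:ℝ) (fminv w), w - f y ∈ Icc (-ε) ε) := by
    intro w hw0 hw2
    have hW0 : 0 ≤ fminv w := hfminv_nonneg w hw0
    have hmem : ∀ y ∈ Icc (0:ℝ) (fminv w), w - f y ∈ Icc (-ε) ε := by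
      intro y hy
      have h1 : ε ≤ f y := by rw [← hf0]; exact hfmono' hy.1
      have h2 : f y ≤ w + ε := by rw [← f_fminv w]; exact hfmono' hy.2
      exact ⟨by linarith, by linarith⟩
    refine ⟨?_, hmem⟩
    apply ContinuousOn.intervalIntegrable
    rw [uIcc_of_le hW0]
    exact (hp.continuousOn.comp ((continuous_const.sub hfc).continuousOn) hmem).mul
      hφc.continuousOn
  -- Lemma A : upper bound
  have lemA : ∀ w : ℝ, 0 ≤ w → w ≤ x₀' → w ≤ 2*ε →
      φ w ≤ (M/ε) * ∫ y in (0:ℝ)..(fminv w), φ y := by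
    intro w hw0 hw1 hw2
    obtain ⟨hI, hmem⟩ := hint w hw0 hw2
    have hW0 : 0 ≤ fminv w := hfminv_nonneg w hw0
    have hmono := intervalIntegral.integral_mono_on hW0 hI
      ((continuous_const.mul hφc).intervalIntegrable _ _)
      (fun y hy => mul_le_mul_of_nonneg_right (hMbound _ (hmem y hy)) (hφnn y))
    simp only [Pi.mul_apply] at hmono
    rw [intervalIntegral.integral_const_mul] at hmono
    rw [hstat w ⟨hw0, hw1⟩]
    calc (1/ε) * ∫ y in (0:ℝ)..(fminv w), p (w - f y) * φ y
        ≤ (1/ε) * (M * ∫ y in (0:ℝ)..(fminv w), φ y) := by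
          apply mul_le_mul_of_nonneg_left hmono (by positivity)
      _ = (M/ε) * ∫ y in (0:ℝ)..(fminv w), φ y := by ring
  -- Lemma B : lower bound
  have lemB : ∀ w : ℝ, 0 ≤ w → w ≤ x₀' → w ≤ δ →
      (c/ε) * (∫ y in (0:ℝ)..(fminv w), φ y) ≤ φ w := by
    intro w hw0 hw1 hwδ
    have hw2 : w ≤ 2*ε := by linarith
    obtain ⟨hI, hmem⟩ := hint w hw0 hw2
    have hW0 : 0 ≤ fminv w := hfminv_nonneg w hw0
    have hmono := intervalIntegral.integral_mono_on (μ := volume) hW0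
      ((continuous_const.mul hφc).intervalIntegrable _ _) hI
      (fun y hy => by
        have h1 : -ε ≤ w - f y := (hmem y hy).1
        have h2 : w - f y ≤ -ε + δ := by
          have h3 : ε ≤ f y := by rw [← hf0]; exact hfmono' hy.1
          linarith
        exact mul_le_mul_of_nonneg_right (hδ _ h1 h2) (hφnn y))
    simp only [Pi.mul_apply] at hmono
    rw [intervalIntegral.integral_const_mul] at hmono
    rw [hstat w ⟨hw0, hw1⟩]
    calc (c/ε) * ∫ y in (0:ℝ)..(fminv w), φ y
        = (1/ε) * (c * ∫ y in (0:ℝ)..(fminv w), φ y) := by ring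
      _ ≤ (1/ε) * ∫ y in (0:ℝ)..(fminv w), p (w - f y) * φ y := by
          apply mul_le_mul_of_nonneg_left hmono (by positivity)
  -- monotonicity of ∫₀ᵃ φ in a
  have hφint_mono : ∀ a b : ℝ, 0 ≤ a → a ≤ b →
      (∫ y in (0:ℝ)..a, φ y) ≤ ∫ y in (0:ℝ)..b, φ y := by
    intro a b _ hab
    have h1 := intervalIntegral.integral_add_adjacent_intervals
      (hφc.intervalIntegrable (μ := volume) 0 a) (hφc.intervalIntegrable a b)
    have h2 : 0 ≤ ∫ y in a..b, φ y :=
      intervalIntegral.integral_nonneg hab (fun u _ => hφnn u)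
    linarith
  -- choice of x₀
  set m := min (min x₀' δ) (min δ₂ (2*ε)) with hm_def
  have hmpos : 0 < m := lt_min (lt_min hx₀' hδpos) (lt_min hδ₂pos (by linarith))
  have hmx₀' : m ≤ x₀' := le_trans (min_le_left _ _) (min_le_left _ _)
  have hmδ : m ≤ δ := le_trans (min_le_left _ _) (min_le_right _ _)
  have hmδ₂ : m ≤ δ₂ := le_trans (min_le_right _ _) (min_le_left _ _)
  have hm2ε : m ≤ 2*ε := le_trans (min_le_right _ _) (min_le_right _ _)
  obtain ⟨r, hrpos, hr⟩ : ∃ r > 0, ∀ x : ℝ, |x| < r → |fminv x| < m := by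
    obtain ⟨d, hd, h⟩ := Metric.continuousAt_iff.mp hfminvc.continuousAt m hmpos
    refine ⟨d, hd, fun x hx => ?_⟩
    have := h (by rwa [Real.dist_eq, sub_zero])
    rwa [Real.dist_eq, hfminv0, sub_zero] at this
  set x₀ := min (min x₀' (2*ε)) (r/2) with hx₀def
  have hx₀pos : 0 < x₀ := lt_min (lt_min hx₀' (by linarith)) (by linarith)
  have hx₀le : x₀ ≤ x₀' := le_trans (min_le_left _ _) (min_le_left _ _)
  have hx₀2ε : x₀ ≤ 2*ε := le_trans (min_le_left _ _) (min_le_right _ _)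
  have hx₀r : x₀ ≤ r/2 := min_le_right _ _
  have hfacts : ∀ x ∈ Ioc (0:ℝ) x₀,
      0 < fminv x ∧ fminv x ≤ x₀' ∧ fminv x ≤ δ ∧ fminv x < δ₂ ∧ fminv x ≤ 2*ε := by
    intro x hx
    have hXpos : 0 < fminv x := by rw [← hfminv0]; exact hfminv_mono hx.1
    have hX : |fminv x| < m := by
      apply hr
      rw [abs_of_pos hx.1]
      calc x ≤ x₀ := hx.2
        _ ≤ r/2 := hx₀r
        _ < r := by linarith
    rw [abs_of_pos hXpos] at hX
    exact ⟨hXpos, by linarith, by linarith, by linarith, by linarith⟩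
  set K := (M/ε) * ((M/ε) * (ε/c)) with hKdef
  have hKpos : 0 < K := mul_pos (div_pos hMpos hε)
    (mul_pos (div_pos hMpos hε) (div_pos hε hcpos))
  -- main bound
  have hmain : ∀ x ∈ Ioc (0:ℝ) x₀, φ x ≤ K * fminv x * φ (fminv x) := by
    intro x hx
    obtain ⟨hXpos, hX1, hX2, hX3, hX4⟩ := hfacts x hx
    have hx1 : x ≤ x₀' := le_trans hx.2 hx₀le
    have hx2 : x ≤ 2*ε := le_trans hx.2 hx₀2ε
    set X := fminv x with hXdef
    have hB := lemB X hXpos.le hX1 hX2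
    have hB1 : (∫ y in (0:ℝ)..(fminv X), φ y) ≤ (ε/c) * φ X := by
      have h := mul_le_mul_of_nonneg_left hB (le_of_lt (div_pos hε hcpos))
      calc (∫ y in (0:ℝ)..(fminv X), φ y)
          = (ε/c) * ((c/ε) * ∫ y in (0:ℝ)..(fminv X), φ y) := by field_simp
        _ ≤ (ε/c) * φ X := h
    have hpt : ∀ y ∈ Icc (0:ℝ) X, φ y ≤ (M/ε) * ((ε/c) * φ X) := by
      intro y hy
      have hy1 : y ≤ x₀' := le_trans hy.2 hX1
      have hy2 : y ≤ 2*ε := le_trans hy.2 hX4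
      have hA := lemA y hy.1 hy1 hy2
      have hmono2 : (∫ u in (0:ℝ)..(fminv y), φ u) ≤ ∫ u in (0:ℝ)..(fminv X), φ u :=
        hφint_mono _ _ (hfminv_nonneg y hy.1) (hfminv_mono.monotone hy.2)
      calc φ y ≤ (M/ε) * ∫ u in (0:ℝ)..(fminv y), φ u := hA
        _ ≤ (M/ε) * ∫ u in (0:ℝ)..(fminv X), φ u :=
            mul_le_mul_of_nonneg_left hmono2 (div_pos hMpos hε).le
        _ ≤ (M/ε) * ((ε/c) * φ X) :=
            mul_le_mul_of_nonneg_left hB1 (div_pos hMpos hε).le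
    have hIb : (∫ y in (0:ℝ)..X, φ y) ≤ X * ((M/ε) * ((ε/c) * φ X)) := by
      have h := intervalIntegral.integral_mono_on (μ := volume) hXpos.le
        (hφc.intervalIntegrable _ _) (intervalIntegrable_const) hpt
      rwa [intervalIntegral.integral_const, sub_zero, smul_eq_mul] at h
    have hA0 := lemA x hx.1.le hx1 hx2
    calc φ x ≤ (M/ε) * ∫ y in (0:ℝ)..X, φ y := hA0
      _ ≤ (M/ε) * (X * ((M/ε) * ((ε/c) * φ X))) :=
          mul_le_mul_of_nonneg_left hIb (div_pos hMpos hε).le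
      _ = K * X * φ X := by rw [hKdef]; ring
  refine ⟨K, hKpos, x₀, ⟨hx₀pos, hx₀le⟩, hmain, ?_⟩
  have hIoc : Ioc (0:ℝ) x₀ ∈ nhdsWithin (0:ℝ) (Ioi 0) :=
    Ioc_mem_nhdsGT_of_mem ⟨le_refl 0, hx₀pos⟩
  have h1 : Tendsto (fun x => K * fminv x) (nhdsWithin (0:ℝ) (Ioi 0))
      (nhdsWithin (0:ℝ) (Ioi 0)) := by
    apply tendsto_nhdsWithin_of_tendsto_nhds_of_eventually_within
    · have h2 : Tendsto (fun x => K * fminv x) (nhds 0) (nhds (K * fminv 0)) :=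
        (continuous_const.mul hfminvc).continuousAt
      rw [hfminv0, mul_zero] at h2
      exact h2.mono_left nhdsWithin_le_nhds
    · filter_upwards [hIoc] with x hx
      exact mul_pos hKpos (hfacts x hx).1
  have h2 : Tendsto (fun x => (K * fminv x)⁻¹) (nhdsWithin (0:ℝ) (Ioi 0)) atTop :=
    tendsto_inv_nhdsGT_zero.comp h1
  apply tendsto_atTop_mono' _ ?_ h2
  filter_upwards [hIoc] with x hx
  obtain ⟨hXpos, hX1, _, _, _⟩ := hfacts x hx
  have hφx : 0 < φ x := hφpos x ⟨hx.1, le_trans hx.2 hx₀le⟩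
  have hφX : 0 < φ (fminv x) := hφpos _ ⟨hXpos, hX1⟩
  have hb := hmain x hx
  rw [← one_div, div_le_div_iff₀ (mul_pos hKpos hXpos) hφx]
  nlinarith [hb]
end

section
/- There exists x₀ ∈ (0, x₀'] such that for all x ∈ (0, x₀), φ is differentiable at x and the Leibniz rule gives φ'(x) = p(−ε) · φ(f₋⁻¹(x)) / (ε · f₋'(f₋⁻¹(x))) + (1/ε) ∫₀^{f₋⁻¹(x)} p'(x − f(y)) φ(y) dy. -/
open MeasureTheory Filter Set

open Topology Metric intervalIntegral

theorem stmt_10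
    (ε : ℝ) (hε : 0 < ε)
    (f g : ℝ → ℝ)
    (hf : ContDiff ℝ 2 f) (hg : ContDiff ℝ 2 g)
    (hfmono : StrictMono f)
    (hgf : Function.LeftInverse g f) (hfg : Function.RightInverse g f)
    (fm fminv : ℝ → ℝ)
    (hfm : ∀ x, fm x = f x - ε)
    (hfminv : ∀ x, fminv x = g (x + ε))
    (hfm0 : fm 0 = 0)
    (lam : ℝ) (hlam : lam = deriv fm 0) (hlam0 : 0 < lam) (hlam1 : lam < 1)
    (p : ℝ → ℝ) (hp : ContDiffOn ℝ 1 p (Set.Icc (-ε) ε))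
    (hpnn : ∀ z ∈ Set.Icc (-ε) ε, 0 ≤ p z) (hpe : 0 < p (-ε))
    (x₀' : ℝ) (hx₀' : 0 < x₀')
    (φ : ℝ → ℝ) (hφc : Continuous φ) (hφnn : ∀ x, 0 ≤ φ x)
    (hφpos : ∀ x ∈ Set.Ioc 0 x₀', 0 < φ x)
    (hstat : ∀ x ∈ Set.Icc 0 x₀',
      φ x = (1/ε) * ∫ y in (0:ℝ)..(fminv x), p (x - f y) * φ y) :
    ∃ x₀ ∈ Set.Ioc (0:ℝ) x₀', ∀ x ∈ Set.Ioo (0:ℝ) x₀,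
      HasDerivAt φ (p (-ε) * φ (fminv x) / (ε * deriv fm (fminv x))
        + (1/ε) * ∫ y in (0:ℝ)..(fminv x), deriv p (x - f y) * φ y) x := by
  have hεε : -ε < ε := by linarith
  have hεne : ε ≠ 0 := ne_of_gt hε
  -- derivatives of f and g
  have hfd : ∀ t, HasDerivAt f (deriv f t) t := fun t =>
    ((hf.differentiable (by norm_num)) t).hasDerivAt
  have hgd : ∀ t, HasDerivAt g (deriv g t) t := fun t =>
    ((hg.differentiable (by norm_num)) t).hasDerivAt
  have hchain : ∀ t, deriv g (f t) * deriv f t = 1 := by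
    intro t
    have h1 : HasDerivAt (g ∘ f) (deriv g (f t) * deriv f t) t := (hgd (f t)).comp t (hfd t)
    have h2 : g ∘ f = id := funext hgf
    rw [h2] at h1
    exact h1.unique (hasDerivAt_id t)
  have hfne : ∀ t, deriv f t ≠ 0 := by
    intro t h
    have := hchain t
    rw [h, mul_zero] at this
    norm_num at this
  have hfnn : ∀ t, 0 ≤ deriv f t := by
    intro t
    have hsl : Tendsto (slope f t) (𝓝[≠] t) (𝓝 (deriv f t)) :=
      hasDerivAt_iff_tendsto_slope.1 (hfd t)
    refine ge_of_tendsto hsl ?_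
    filter_upwards [self_mem_nhdsWithin] with y hy
    rcases lt_or_gt_of_ne (hy : y ≠ t) with h | h
    · have : f y < f t := hfmono h
      rw [slope_def_field]
      exact div_nonneg_of_nonpos (by linarith) (by linarith)
    · have : f t < f y := hfmono h
      rw [slope_def_field]
      exact div_nonneg (by linarith) (by linarith)
  have hfpos : ∀ t, 0 < deriv f t := fun t => lt_of_le_of_ne (hfnn t) (Ne.symm (hfne t))
  -- f 0 = ε and fminv facts
  have hf0 : f 0 = ε := by have h := hfm 0; rw [hfm0] at h; linarith
  have hfinvf : ∀ x, f (fminv x) = x + ε := by intro x; rw [hfminv]; exact hfg (x + ε)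
  have hu0 : fminv 0 = 0 := by
    rw [hfminv, zero_add, ← hf0]; exact hgf 0
  have humono : StrictMono fminv := by
    intro a b hab
    have : f (fminv a) < f (fminv b) := by rw [hfinvf, hfinvf]; linarith
    exact (hfmono.lt_iff_lt).1 this
  have hunn : ∀ x, 0 ≤ x → 0 ≤ fminv x := by
    intro x hx
    rcases eq_or_lt_of_le hx with h | h
    · rw [← h, hu0]
    · rw [← hu0]; exact (humono h).le
  have hud : ∀ x, HasDerivAt fminv (deriv g (x + ε)) x := by
    intro x
    have h1 : HasDerivAt (fun y : ℝ => y + ε) 1 x := (hasDerivAt_id x).add_const ε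
    have h2 := (hgd (x + ε)).comp x h1
    rw [mul_one] at h2
    have h3 : (g ∘ fun y : ℝ => y + ε) = fminv := by
      funext y; simp only [Function.comp]; rw [hfminv]
    rwa [h3] at h2
  have hginv : ∀ x, deriv g (x + ε) = (deriv f (fminv x))⁻¹ := by
    intro x
    have h := hchain (fminv x)
    rw [hfinvf] at h
    exact eq_inv_of_mul_eq_one_left h
  -- deriv fm = deriv f
  have hfm' : ∀ z, deriv fm z = deriv f z := by
    intro z
    have : fm = fun w => f w - ε := funext hfm
    rw [this, deriv_sub_const]
  -- the extension P of p
  set q : ℝ → ℝ := derivWithin p (Set.Icc (-ε) ε) with hqdef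
  have qc : ContinuousOn q (Set.Icc (-ε) ε) :=
    hp.continuousOn_derivWithin (uniqueDiffOn_Icc hεε) le_rfl
  set Q : ℝ → ℝ := fun t => q (max (-ε) (min t ε)) with hQdef
  have hprojmem : ∀ t : ℝ, max (-ε) (min t ε) ∈ Set.Icc (-ε) ε := by
    intro t
    constructor
    · exact le_max_left _ _
    · exact max_le (le_of_lt hεε) (min_le_right _ _)
  have Qc : Continuous Q :=
    qc.comp_continuous (continuous_const.max (continuous_id.min continuous_const)) hprojmem
  obtain ⟨M, hM⟩ := isCompact_Icc.exists_bound_of_continuousOn qc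
  have hQM : ∀ t, ‖Q t‖ ≤ M := fun t => hM _ (hprojmem t)
  have hM0 : 0 ≤ M := le_trans (norm_nonneg _) (hQM 0)
  have hQeq : ∀ t ∈ Set.Ioo (-ε) ε, Q t = deriv p t := by
    intro t ht
    have h1 : max (-ε) (min t ε) = t := by
      rw [min_eq_left ht.2.le, max_eq_right ht.1.le]
    have h2 : Set.Icc (-ε) ε ∈ 𝓝 t := Icc_mem_nhds ht.1 ht.2
    rw [hQdef]
    simp only [h1]
    rw [hqdef]
    exact derivWithin_of_mem_nhds h2
  set P : ℝ → ℝ := fun z => p (-ε) + ∫ t in (-ε)..z, Q t with hPdef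
  have hPd : ∀ z, HasDerivAt P (Q z) z := by
    intro z
    exact ((Qc.integral_hasStrictDerivAt (-ε) z).hasDerivAt).const_add (p (-ε))
  have hPc : Continuous P := by
    have : Differentiable ℝ P := fun z => (hPd z).differentiableAt
    exact this.continuous
  have hPp : ∀ z ∈ Set.Icc (-ε) ε, P z = p z := by
    intro z hz
    have key : ∫ t in (-ε)..z, Q t = p z - p (-ε) := by
      apply intervalIntegral.integral_eq_sub_of_hasDeriv_right_of_le hz.1
      · exact hp.continuousOn.mono (Set.Icc_subset_Icc_right hz.2)
      · intro t ht
        have ht' : t ∈ Set.Ioo (-ε) ε := ⟨ht.1, lt_of_lt_of_le ht.2 hz.2⟩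
        have hdiff : DifferentiableAt ℝ p t := by
          have := (hp.differentiableOn one_ne_zero) t ⟨ht'.1.le, ht'.2.le⟩
          exact this.differentiableAt (Icc_mem_nhds ht'.1 ht'.2)
        rw [hQeq t ht']
        exact hdiff.hasDerivAt.hasDerivWithinAt
      · exact Qc.intervalIntegrable _ _
    rw [hPdef]; simp only []; rw [key]; ring
  have hPe : P (-ε) = p (-ε) := hPp _ ⟨le_refl _, hεε.le⟩
  -- P is M-Lipschitz
  have hPLip : ∀ z w : ℝ, ‖P z - P w‖ ≤ M * ‖z - w‖ := by
    intro z w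
    exact Convex.norm_image_sub_le_of_norm_hasDerivWithin_le
      (fun t _ => (hPd t).hasDerivWithinAt) (fun t _ => hQM t) convex_univ
      (Set.mem_univ w) (Set.mem_univ z)
  -- choose x₀
  refine ⟨min x₀' ε, ⟨lt_min hx₀' hε, min_le_left _ _⟩, ?_⟩
  set x₀ : ℝ := min x₀' ε with hx₀def
  intro xb hxb
  obtain ⟨hxb0, hxb1⟩ := hxb
  have hxbx₀' : xb < x₀' := lt_of_lt_of_le hxb1 (min_le_left _ _)
  have hxbε : xb < ε := lt_of_lt_of_le hxb1 (min_le_right _ _)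
  -- bound for φ
  have hux₀' : 0 ≤ fminv x₀' := hunn _ hx₀'.le
  obtain ⟨Cφ, hCφ⟩ := isCompact_Icc.exists_bound_of_continuousOn
    (hφc.continuousOn : ContinuousOn φ (Set.Icc 0 (fminv x₀')))
  have hCφ0 : 0 ≤ Cφ := le_trans (norm_nonneg _) (hCφ 0 ⟨le_refl _, hux₀'⟩)
  -- radius δ
  set δ : ℝ := min xb (x₀ - xb) / 2 with hδdef
  have hδ0 : 0 < δ := by
    apply div_pos _ (by norm_num)
    exact lt_min hxb0 (by linarith)
  have hδ1 : δ ≤ xb / 2 := by rw [hδdef]; gcongr; exact min_le_left _ _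
  have hδ2 : δ ≤ (x₀ - xb) / 2 := by rw [hδdef]; gcongr; exact min_le_right _ _
  have hball : ∀ x ∈ ball xb δ, x ∈ Set.Ioo (0:ℝ) x₀ := by
    intro x hx
    rw [mem_ball, Real.dist_eq] at hx
    have := abs_lt.1 hx
    constructor <;> linarith [this.1, this.2]
  set b : ℝ := fminv xb with hbdef
  have hb0 : 0 ≤ b := hunn _ hxb0.le
  have hbx₀' : b ≤ fminv x₀' := (humono hxbx₀').le
  have hfb : f b = xb + ε := hfinvf xb
  -- continuity of integrands
  have hc1 : ∀ x : ℝ, Continuous (fun y => P (x - f y) * φ y) := fun x =>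
    ((hPc.comp (continuous_const.sub hf.continuous)).mul hφc)
  have hc2 : ∀ x : ℝ, Continuous (fun y => Q (x - f y) * φ y) := fun x =>
    ((Qc.comp (continuous_const.sub hf.continuous)).mul hφc)
  have hc3 : ∀ x : ℝ, Continuous (fun y => (P (x - f y) - P (xb - f y)) * φ y) := fun x =>
    (((hPc.comp (continuous_const.sub hf.continuous)).sub
      (hPc.comp (continuous_const.sub hf.continuous))).mul hφc)
  -- the fixed-bounds part A
  have hA : HasDerivAt (fun x => ∫ y in (0:ℝ)..b, P (x - f y) * φ y)
      (∫ y in (0:ℝ)..b, Q (xb - f y) * φ y) xb := by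
    have key := intervalIntegral.hasDerivAt_integral_of_dominated_loc_of_deriv_le
      (F := fun x y => P (x - f y) * φ y) (F' := fun x y => Q (x - f y) * φ y)
      (bound := fun _ => M * Cφ) (a := 0) (b := b) (x₀ := xb) (μ := volume) (Metric.ball_mem_nhds xb hδ0)
      (Eventually.of_forall fun x => (hc1 x).aestronglyMeasurable)
      ((hc1 xb).intervalIntegrable _ _)
      ((hc2 xb).aestronglyMeasurable)
      ?_ intervalIntegrable_const ?_
    · exact key.2
    · refine Eventually.of_forall fun t ht x _ => ?_
      rw [Set.uIoc_of_le hb0] at ht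
      have h1 : t ∈ Set.Icc 0 (fminv x₀') := ⟨ht.1.le, le_trans ht.2 hbx₀'⟩
      rw [norm_mul]
      exact mul_le_mul (hQM _) (hCφ t h1) (norm_nonneg _) hM0
    · refine Eventually.of_forall fun t _ x _ => ?_
      have h1 : HasDerivAt (fun x => P (x - f t)) (Q (x - f t)) x := by
        have := (hPd (x - f t)).comp x ((hasDerivAt_id x).sub_const (f t))
        rw [mul_one] at this
        exact this
      exact h1.mul_const (φ t)
  -- the moving-boundary part C
  have hC : HasDerivAt (fun x => ∫ y in b..(fminv x), P (xb - f y) * φ y)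
      (P (-ε) * φ b * deriv g (xb + ε)) xb := by
    have hGd : HasDerivAt (fun t => ∫ y in b..t, P (xb - f y) * φ y)
        (P (xb - f b) * φ b) b := ((hc1 xb).integral_hasStrictDerivAt b b).hasDerivAt
    have h2 := hGd.comp xb (hud xb)
    have h3 : xb - f b = -ε := by rw [hfb]; ring
    rw [h3] at h2
    exact h2
  -- the error part E
  set E : ℝ → ℝ := fun x => ∫ y in b..(fminv x), (P (x - f y) - P (xb - f y)) * φ y with hEdef
  obtain ⟨Kg, hKg⟩ := isCompact_Icc.exists_bound_of_continuousOn
    ((hg.continuous_deriv one_le_two).continuousOn :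
      ContinuousOn (deriv g) (Set.Icc (xb - δ + ε) (xb + δ + ε)))
  have hKg0 : 0 ≤ Kg := le_trans (norm_nonneg _) (hKg (xb + ε) ⟨by linarith, by linarith⟩)
  have huLip : ∀ x ∈ ball xb δ, ‖fminv x - fminv xb‖ ≤ Kg * ‖x - xb‖ := by
    intro x hx
    rw [mem_ball, Real.dist_eq] at hx
    have habs := abs_lt.1 hx
    have h1 : x + ε ∈ Set.Icc (xb - δ + ε) (xb + δ + ε) := by
      constructor <;> linarith [habs.1, habs.2]
    have h2 : xb + ε ∈ Set.Icc (xb - δ + ε) (xb + δ + ε) := ⟨by linarith, by linarith⟩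
    have h3 := Convex.norm_image_sub_le_of_norm_hasDerivWithin_le
      (f := g) (f' := deriv g) (fun t _ => (hgd t).hasDerivWithinAt)
      (fun t ht => hKg t ht) (convex_Icc _ _) h2 h1
    have h4 : (x + ε) - (xb + ε) = x - xb := by ring
    rw [h4] at h3
    rw [hfminv, hfminv]
    exact h3
  have hEbound : ∀ x ∈ ball xb δ, ‖E x‖ ≤ (M * Cφ * Kg) * ‖x - xb‖ ^ 2 := by
    intro x hx
    have hxIoo := hball x hx
    have hux : fminv x ≤ fminv x₀' :=
      (humono (lt_of_lt_of_le hxIoo.2 (min_le_left _ _))).le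
    have h1 : ∀ y ∈ Set.uIoc b (fminv x),
        ‖(P (x - f y) - P (xb - f y)) * φ y‖ ≤ (M * ‖x - xb‖) * Cφ := by
      intro y hy
      have hy' : y ∈ Set.Icc 0 (fminv x₀') := by
        constructor
        · have h5 : 0 ≤ min b (fminv x) := le_min hb0 (hunn _ hxIoo.1.le)
          exact le_trans h5 hy.1.le
        · exact le_trans hy.2 (max_le hbx₀' hux)
      have hP := hPLip (x - f y) (xb - f y)
      have h6 : (x - f y) - (xb - f y) = x - xb := by ring
      rw [h6] at hP
      rw [norm_mul]
      exact mul_le_mul hP (hCφ y hy') (norm_nonneg _) (by positivity)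
    have h2 := intervalIntegral.norm_integral_le_of_norm_le_const h1
    have h3 : |fminv x - b| ≤ Kg * ‖x - xb‖ := huLip x hx
    calc ‖E x‖ ≤ (M * ‖x - xb‖) * Cφ * |fminv x - b| := h2
    _ ≤ (M * ‖x - xb‖) * Cφ * (Kg * ‖x - xb‖) := by
        have : (0:ℝ) ≤ (M * ‖x - xb‖) * Cφ := by positivity
        exact mul_le_mul_of_nonneg_left h3 this
    _ = (M * Cφ * Kg) * ‖x - xb‖ ^ 2 := by ring
  have hE0 : E xb = 0 := by
    rw [hEdef]; simp
  have hE : HasDerivAt E 0 xb := by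
    rw [hasDerivAt_iff_isLittleO]
    have heq : (fun x => E x - E xb - (x - xb) • (0:ℝ)) = fun x => E x := by
      funext x; rw [hE0]; simp
    rw [heq, Asymptotics.isLittleO_iff]
    intro c hc
    have hrpos : 0 < min δ (c / (M * Cφ * Kg + 1)) := lt_min hδ0 (by positivity)
    filter_upwards [Metric.ball_mem_nhds xb hrpos] with x hx
    rw [mem_ball, Real.dist_eq] at hx
    have hx1 : x ∈ ball xb δ := by
      rw [mem_ball, Real.dist_eq]
      exact lt_of_lt_of_le hx (min_le_left _ _)
    have h1 := hEbound x hx1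
    have h2 : |x - xb| ≤ c / (M * Cφ * Kg + 1) :=
      le_of_lt (lt_of_lt_of_le hx (min_le_right _ _))
    have h2' : (M * Cφ * Kg + 1) * |x - xb| ≤ c := by
      have hpos : (0:ℝ) < M * Cφ * Kg + 1 := by positivity
      calc (M * Cφ * Kg + 1) * |x - xb| ≤ (M * Cφ * Kg + 1) * (c / (M * Cφ * Kg + 1)) :=
            mul_le_mul_of_nonneg_left h2 hpos.le
      _ = c := by field_simp
    have habs : ‖x - xb‖ = |x - xb| := rfl
    calc ‖E x‖ ≤ (M * Cφ * Kg) * ‖x - xb‖ ^ 2 := h1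
    _ ≤ ((M * Cφ * Kg + 1) * |x - xb|) * |x - xb| := by
        rw [habs]; nlinarith [abs_nonneg (x - xb), sq_nonneg (|x - xb|)]
    _ ≤ c * |x - xb| := mul_le_mul_of_nonneg_right h2' (abs_nonneg _)
  -- assemble
  have hsum : HasDerivAt
      (fun x => (1/ε) * ((∫ y in (0:ℝ)..b, P (x - f y) * φ y)
        + ((∫ y in b..(fminv x), P (xb - f y) * φ y) + E x)))
      ((1/ε) * ((∫ y in (0:ℝ)..b, Q (xb - f y) * φ y)
        + (P (-ε) * φ b * deriv g (xb + ε) + 0))) xb :=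
    (hA.add (hC.add hE)).const_mul (1/ε)
  have hagree : ∀ x ∈ Set.Ioo (0:ℝ) x₀,
      φ x = (1/ε) * ((∫ y in (0:ℝ)..b, P (x - f y) * φ y)
        + ((∫ y in b..(fminv x), P (xb - f y) * φ y) + E x)) := by
    intro x hx
    have hx0' : x ∈ Set.Icc 0 x₀' := ⟨hx.1.le, le_trans hx.2.le (min_le_left _ _)⟩
    have hxε : x < ε := lt_of_lt_of_le hx.2 (min_le_right _ _)
    have hstep1 : φ x = (1/ε) * ∫ y in (0:ℝ)..(fminv x), P (x - f y) * φ y := by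
      rw [hstat x hx0']
      congr 1
      apply intervalIntegral.integral_congr
      intro y hy
      have hy' : y ∈ Set.Icc 0 (fminv x) := by
        rwa [Set.uIcc_of_le (hunn _ hx.1.le)] at hy
      have h1 : f y ≤ x + ε := by
        calc f y ≤ f (fminv x) := hfmono.monotone hy'.2
        _ = x + ε := hfinvf x
      have h2 : ε ≤ f y := by rw [← hf0]; exact hfmono.monotone hy'.1
      have h7 : x - f y ∈ Set.Icc (-ε) ε := ⟨by linarith, by linarith⟩
      simp only [hPp _ h7]
    rw [hstep1]
    congr 1
    have hEx : E x = ∫ y in b..(fminv x), (P (x - f y) - P (xb - f y)) * φ y := rfl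
    have hint1 : IntervalIntegrable (fun y => P (x - f y) * φ y) volume 0 b :=
      (hc1 x).intervalIntegrable _ _
    have hint2 : IntervalIntegrable (fun y => P (x - f y) * φ y) volume b (fminv x) :=
      (hc1 x).intervalIntegrable _ _
    have hstep2 : (∫ y in b..(fminv x), P (xb - f y) * φ y) + E x
        = ∫ y in b..(fminv x), P (x - f y) * φ y := by
      rw [hEx, ← intervalIntegral.integral_add ((hc1 xb).intervalIntegrable b (fminv x))
        ((hc3 x).intervalIntegrable b (fminv x))]
      apply intervalIntegral.integral_congr
      intro y _
      ring
    rw [hstep2]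
    exact (intervalIntegral.integral_add_adjacent_intervals hint1 hint2).symm
  have hev : φ =ᶠ[𝓝 xb] fun x => (1/ε) * ((∫ y in (0:ℝ)..b, P (x - f y) * φ y)
      + ((∫ y in b..(fminv x), P (xb - f y) * φ y) + E x)) := by
    filter_upwards [isOpen_Ioo.mem_nhds (⟨hxb0, hxb1⟩ : xb ∈ Set.Ioo (0:ℝ) x₀)] with x hx
    exact hagree x hx
  have hφd := hsum.congr_of_eventuallyEq hev
  convert hφd using 1
  · rfl
  · rfl
  -- identify the derivative values
  have hIQ : (∫ y in (0:ℝ)..b, deriv p (xb - f y) * φ y)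
      = ∫ y in (0:ℝ)..b, Q (xb - f y) * φ y := by
    apply intervalIntegral.integral_congr_ae
    have hae : ∀ᵐ (y : ℝ), y ≠ b := by
      rw [ae_iff]
      have h8 : {y : ℝ | ¬ y ≠ b} = {b} := by ext y; simp
      rw [h8]
      exact measure_singleton b
    filter_upwards [hae] with y hy hyI
    rw [Set.uIoc_of_le hb0] at hyI
    have hyb : y < b := lt_of_le_of_ne hyI.2 hy
    have h1 : f y < xb + ε := by rw [← hfb]; exact hfmono hyb
    have h2 : ε < f y := by rw [← hf0]; exact hfmono hyI.1
    have h9 : xb - f y ∈ Set.Ioo (-ε) ε := ⟨by linarith, by linarith⟩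
    rw [hQeq _ h9]
  rw [hfm' b, hIQ, ← hPe, hginv xb, ← hbdef]
  rw [div_eq_mul_inv, mul_inv]
  field_simp [hεne, hfne b]
  ring
end

section
/- There exist x₀ ∈ (0, x₀') and a constant Ĉ > 0 such that for every x ∈ (0, x₀), writing n = n(x) for the hitting time, the stationary density satisfies φ(x) ≥ (Ĉⁿ · xⁿ / n!) · [∏_{m=2}^{n} ∏_{j=2}^{m} 1/f₋'(f₋^{−j}(x))] · φ(f₋(x₀)), where f₋^{−j} denotes the j-th iterate of the inverse map f₋⁻¹. -/
open MeasureTheory Filter Set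

set_option maxHeartbeats 1000000

lemma geom_weight_sum (q : ℝ) (h0 : 0 ≤ q) (h1 : q < 1) (m : ℕ) :
    ∑ k ∈ Finset.range m, ((k : ℝ) + 1) * q ^ k ≤ ((1 - q)⁻¹) ^ 2 := by
  have h1q : 0 < 1 - q := by linarith
  have key : ∀ m : ℕ, ∑ k ∈ Finset.range m, ((k : ℝ) + 1) * q ^ k
      = ((1 - q)⁻¹) ^ 2 - q ^ m * (((m : ℝ) + 1) / (1 - q) + q / (1 - q) ^ 2) := by
    intro m
    induction m with
    | zero => field_simp; ring
    | succ k ih =>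
      rw [Finset.sum_range_succ, ih]
      push_cast
      field_simp
      ring
  rw [key]
  have h2 : 0 ≤ q ^ m * (((m:ℝ)+1)/(1-q) + q/(1-q)^2) := by positivity
  linarith

lemma double_prod_swap (c : ℕ → ℝ) (n : ℕ) :
    ∏ m ∈ Finset.Icc 2 n, ∏ j ∈ Finset.Icc 2 m, c j
      = ∏ j ∈ Finset.Icc 2 n, c j ^ (n + 1 - j) := by
  induction n with
  | zero => simp
  | succ n ih =>
    rcases Nat.lt_or_ge (n+1) 2 with h | h
    · have : n = 0 := by omega
      subst this; simp
    · rw [Finset.prod_Icc_succ_top h, ih, Finset.prod_Icc_succ_top h,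
        Finset.prod_Icc_succ_top h]
      have hc : ∀ j ∈ Finset.Icc 2 n, c j ^ (n + 1 + 1 - j) = c j ^ (n + 1 - j) * c j := by
        intro j hj
        have hj' := (Finset.mem_Icc.mp hj).2
        rw [show n + 1 + 1 - j = (n + 1 - j) + 1 by omega, pow_succ]
      rw [Finset.prod_congr rfl hc, Finset.prod_mul_distrib]
      simp [Nat.sub_self]
      ring

lemma prod_reindex (h : ℕ → ℝ) (n : ℕ) :
    ∏ j ∈ Finset.Icc 2 n, h (n - j) ^ (n + 1 - j)
      = ∏ k ∈ Finset.range (n - 1), h k ^ (k + 1) := by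
  apply Finset.prod_nbij' (fun j => n - j) (fun k => n - k)
  · intro a ha; simp only [Finset.mem_Icc] at ha; simp only [Finset.mem_range]; omega
  · intro a ha; simp only [Finset.mem_range] at ha; simp only [Finset.mem_Icc]; omega
  · intro a ha; simp only [Finset.mem_Icc] at ha; omega
  · intro a ha; simp only [Finset.mem_range] at ha; omega
  · intro a ha; simp only [Finset.mem_Icc] at ha
    rw [show n + 1 - a = (n - a) + 1 by omega]

theorem stmt_11
    (ε : ℝ) (hε : 0 < ε)
    (f g : ℝ → ℝ)
    (hf : ContDiff ℝ 2 f) (hg : ContDiff ℝ 2 g)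
    (hfmono : StrictMono f)
    (hgf : Function.LeftInverse g f) (hfg : Function.RightInverse g f)
    (fm fminv : ℝ → ℝ)
    (hfm : ∀ x, fm x = f x - ε)
    (hfminv : ∀ x, fminv x = g (x + ε))
    (hfm0 : fm 0 = 0)
    (lam : ℝ) (hlam : lam = deriv fm 0) (hlam0 : 0 < lam) (hlam1 : lam < 1)
    (p : ℝ → ℝ) (hp : ContDiffOn ℝ 1 p (Set.Icc (-ε) ε))
    (hpnn : ∀ z ∈ Set.Icc (-ε) ε, 0 ≤ p z) (hpe : 0 < p (-ε))
    (x₀' : ℝ) (hx₀' : 0 < x₀')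
    (φ : ℝ → ℝ) (hφc : Continuous φ) (hφnn : ∀ x, 0 ≤ φ x)
    (hφpos : ∀ x ∈ Set.Ioc 0 x₀', 0 < φ x)
    (hstat : ∀ x ∈ Set.Icc 0 x₀',
      φ x = (1/ε) * ∫ y in (0:ℝ)..(fminv x), p (x - f y) * φ y)
    (hderivmono : MonotoneOn (deriv fm) (Set.Icc 0 x₀') ∨
      AntitoneOn (deriv fm) (Set.Icc 0 x₀')) :
    ∃ x₀ ∈ Set.Ioo (0:ℝ) x₀',
      (∀ x ∈ Set.Ioc (0:ℝ) x₀, 0 < fm x ∧ fm x < x) ∧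
      ∃ Chat > 0, ∀ x ∈ Set.Ioo (0:ℝ) x₀, ∀ n : ℕ,
        n = sInf {k : ℕ | fm^[k] x₀ < x} →
        (Chat ^ n * x ^ n / (Nat.factorial n : ℝ))
            * (∏ m ∈ Finset.Icc 2 n, ∏ j ∈ Finset.Icc 2 m, 1 / deriv fm (fminv^[j] x))
            * φ (fm x₀)
          ≤ φ x := by
  -- ## basic facts about fm, fminv
  have hfm_fun : fm = fun x => f x - ε := funext hfm
  have hfmC : ContDiff ℝ 2 fm := by rw [hfm_fun]; exact hf.sub contDiff_const
  have hfm_diff : Differentiable ℝ fm := hfmC.differentiable (by norm_num)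
  have hfm_cont : Continuous fm := hfm_diff.continuous
  have hdC : Continuous (deriv fm) := hfmC.continuous_deriv (by norm_num)
  have hf0 : f 0 = ε := by have h := hfm 0; rw [hfm0] at h; linarith
  have hfmmono : StrictMono fm := by
    intro a b hab
    rw [hfm a, hfm b]
    exact sub_lt_sub_right (hfmono hab) ε
  have hRI : ∀ y, fm (fminv y) = y := by
    intro y; rw [hfminv y, hfm (g (y+ε)), hfg (y+ε)]; ring
  have hLI : ∀ z, fminv (fm z) = z := by
    intro z
    rw [hfm z, hfminv (f z - ε), show f z - ε + ε = f z by ring, hgf z]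
  have hfminv_mono : StrictMono fminv := by
    intro a b hab
    by_contra hc
    push_neg at hc
    have h2 := hfmmono.monotone hc
    rw [hRI, hRI] at h2
    linarith
  have hfminv0 : fminv 0 = 0 := by
    have := hLI 0; rwa [hfm0] at this
  -- ## constants
  set qb : ℝ := (1 + lam)/2 with hqb
  set lm : ℝ := lam/2 with hlm
  have hqb1 : qb < 1 := by rw [hqb]; linarith
  have hqb0 : 0 < qb := by rw [hqb]; linarith
  have hlmpos : 0 < lm := by rw [hlm]; linarith
  have hlmqb : lm < qb := by rw [hlm, hqb]; linarith
  -- b : interval where deriv fm ∈ [lm, qb]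
  obtain ⟨b0, hb0pos, hb0⟩ := Metric.continuousAt_iff.mp hdC.continuousAt
      (min (lam - lm) (qb - lam)) (by rw [hlm, hqb]; simp; constructor <;> linarith)
  set b : ℝ := min (b0/2) x₀' with hbdef
  have hbpos : 0 < b := lt_min (by linarith) hx₀'
  have hbx : b ≤ x₀' := min_le_right _ _
  have hderiv_bounds : ∀ y ∈ Icc (0:ℝ) b, lm ≤ deriv fm y ∧ deriv fm y ≤ qb := by
    intro y hy
    have hdy : dist y 0 < b0 := by
      rw [Real.dist_eq, sub_zero, abs_of_nonneg hy.1]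
      have := hy.2
      have hb2 : b ≤ b0/2 := min_le_left _ _
      linarith
    have h2 := hb0 hdy
    rw [← hlam, Real.dist_eq] at h2
    have h3 := abs_lt.mp h2
    have h4 : min (lam - lm) (qb - lam) ≤ lam - lm := min_le_left _ _
    have h5 : min (lam - lm) (qb - lam) ≤ qb - lam := min_le_right _ _
    constructor <;> linarith [h3.1, h3.2]
  -- Lipschitz constant for deriv fm on [0, b]
  have hd1 : ContDiff ℝ 1 (deriv fm) := by
    have h : ContDiff ℝ ((1:WithTop ℕ∞) + 1) fm := by norm_num [hfmC]
    exact (contDiff_succ_iff_deriv.mp h).2.2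
  have hdd_cont : Continuous (deriv (deriv fm)) := hd1.continuous_deriv le_rfl
  obtain ⟨L0, hL0⟩ := (isCompact_Icc : IsCompact (Icc (0:ℝ) b)).exists_bound_of_continuousOn
      hdd_cont.continuousOn
  set L : ℝ := max L0 0 with hLdef
  have hLnn : 0 ≤ L := le_max_right _ _
  have hLip : ∀ a ∈ Icc (0:ℝ) b, ∀ c ∈ Icc (0:ℝ) b, |deriv fm a - deriv fm c| ≤ L * |a - c| := by
    intro a ha c hc
    have h1 : ∀ x ∈ Icc (0:ℝ) b, DifferentiableAt ℝ (deriv fm) x :=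
      fun x _ => (hd1.differentiable one_ne_zero).differentiableAt
    have h2 : ∀ x ∈ Icc (0:ℝ) b, ‖deriv (deriv fm) x‖ ≤ L :=
      fun x hx => le_trans (hL0 x hx) (le_max_left _ _)
    have := Convex.norm_image_sub_le_of_norm_deriv_le h1 h2 (convex_Icc 0 b) hc ha
    simpa [Real.norm_eq_abs] using this
  -- noise lower bound near -ε
  set c0 : ℝ := p (-ε)/2 with hc0def
  have hc0pos : 0 < c0 := by rw [hc0def]; linarith
  have hpc : ContinuousWithinAt p (Icc (-ε) ε) (-ε) :=
    (hp.continuousOn).continuousWithinAt (by constructor <;> [linarith; linarith])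
  obtain ⟨dl, hdlpos, hdl⟩ := Metric.continuousWithinAt_iff.mp hpc c0 hc0pos
  have hplow : ∀ z ∈ Icc (-ε) ε, dist z (-ε) < dl → c0 ≤ p z := by
    intro z hz hzd
    have := hdl hz hzd
    rw [Real.dist_eq] at this
    have := abs_lt.mp this
    rw [hc0def]; linarith [this.1]
  -- the scale s; x₁ = fm s
  set s : ℝ := min b (min dl ε / 2) with hsdef
  have hspos : 0 < s := lt_min hbpos (by positivity)
  have hsb : s ≤ b := min_le_left _ _
  have hsd : s < dl := by
    have h1 : s ≤ min dl ε / 2 := min_le_right _ _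
    have h2 : min dl ε ≤ dl := min_le_left _ _
    linarith
  have hse : s ≤ ε / 2 := by
    have h1 : s ≤ min dl ε / 2 := min_le_right _ _
    have h2 : min dl ε ≤ ε := min_le_right _ _
    linarith
  have hsx : s ≤ x₀' := hsb.trans hbx
  -- basic bounds fm on (0, s]
  have hfm_bound : ∀ x : ℝ, 0 < x → x ≤ s → lm * x ≤ fm x ∧ fm x ≤ qb * x := by
    intro x hx0 hxs
    obtain ⟨ξ, hξ, hslope⟩ := exists_hasDerivAt_eq_slope fm (deriv fm) hx0
      hfm_cont.continuousOn (fun y _ => (hfm_diff y).hasDerivAt)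
    rw [hfm0, sub_zero, sub_zero] at hslope
    have hξb : ξ ∈ Icc (0:ℝ) b := ⟨hξ.1.le, hξ.2.le.trans (hxs.trans hsb)⟩
    obtain ⟨h1, h2⟩ := hderiv_bounds ξ hξb
    rw [hslope] at h1 h2
    rw [le_div_iff₀ hx0] at h1
    rw [div_le_iff₀ hx0] at h2
    exact ⟨h1, h2⟩
  have hfm_pos : ∀ x : ℝ, 0 < x → x ≤ s → 0 < fm x ∧ fm x < x ∧ fm x ≤ s := by
    intro x hx0 hxs
    obtain ⟨h1, h2⟩ := hfm_bound x hx0 hxs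
    have hq : qb * x < x := mul_lt_of_lt_one_left hx0 hqb1
    have hlt : fm x < x := lt_of_le_of_lt h2 hq
    exact ⟨lt_of_lt_of_le (mul_pos hlmpos hx0) h1, hlt, hlt.le.trans hxs⟩
  -- ## the sequence e n = fm^[n] x₁
  set x₁ : ℝ := fm s with hx1def
  obtain ⟨e, he0, hesucc⟩ : ∃ e : ℕ → ℝ, e 0 = x₁ ∧ ∀ n, e (n+1) = fm (e n) :=
    ⟨fun n => fm^[n] x₁, rfl, fun n => Function.iterate_succ_apply' fm n x₁⟩
  have hx₁_mem : 0 < x₁ ∧ x₁ < s ∧ x₁ ≤ s := by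
    obtain ⟨h1, h2, h3⟩ := hfm_pos s hspos le_rfl
    exact ⟨h1, h2, h3⟩
  have hemem : ∀ n, 0 < e n ∧ e n ≤ s := by
    intro n
    induction n with
    | zero => rw [he0]; exact ⟨hx₁_mem.1, hx₁_mem.2.2⟩
    | succ k ih =>
      rw [hesucc]
      obtain ⟨h1, h2, h3⟩ := hfm_pos (e k) ih.1 ih.2
      exact ⟨h1, h3⟩
  have hestep : ∀ n, lm * e n ≤ e (n+1) ∧ e (n+1) ≤ qb * e n := by
    intro n
    rw [hesucc]
    exact hfm_bound (e n) (hemem n).1 (hemem n).2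
  have hedec : ∀ n, e (n+1) < e n := by
    intro n
    exact lt_of_le_of_lt (hestep n).2 (mul_lt_of_lt_one_left (hemem n).1 hqb1)
  have hemono : ∀ {a b : ℕ}, a ≤ b → e b ≤ e a := by
    intro a b hab
    exact antitone_nat_of_succ_le (fun n => (hedec n).le) hab
  have heq : ∀ n, e n ≤ qb ^ n * x₁ := by
    intro n
    induction n with
    | zero => rw [he0]; simp
    | succ k ih =>
      have h1 := (hestep k).2
      calc e (k+1) ≤ qb * e k := h1
        _ ≤ qb * (qb ^ k * x₁) := mul_le_mul_of_nonneg_left ih hqb0.le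
        _ = qb ^ (k+1) * x₁ := by ring
  have hex1 : ∀ n, e n ≤ x₁ := fun n => le_of_le_of_eq (hemono (Nat.zero_le n)) he0
  have he_b : ∀ n, e n ∈ Icc (0:ℝ) b := fun n => ⟨(hemem n).1.le, (hemem n).2.trans hsb⟩
  have hfminv_e : ∀ n, fminv (e (n+1)) = e n := by
    intro n; rw [hesucc n, hLI]
  -- fminv maps (0, x₁] into (0, s], above identity
  have hfminv_facts : ∀ x : ℝ, 0 < x → x ≤ x₁ → 0 < fminv x ∧ fminv x ≤ s ∧ x < fminv x := by
    intro x hx0 hxx1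
    have h1 : 0 < fminv x := by
      have := hfminv_mono hx0
      rwa [hfminv0] at this
    have h2 : fminv x ≤ s := by
      have h := hfminv_mono.monotone hxx1
      rwa [hx1def, hLI] at h
    have h3 : x < fminv x := by
      have := (hfm_pos (fminv x) h1 h2).2.1
      rwa [hRI] at this
    exact ⟨h1, h2, h3⟩
  -- ## ψ and the basic integral inequality
  set ψ : ℝ → ℝ := fun t => ∫ y in (0:ℝ)..t, φ y with hψdef
  have hφint : ∀ a b : ℝ, IntervalIntegrable φ volume a b := fun a b => hφc.intervalIntegrable a b
  have hψsplit : ∀ a t : ℝ, 0 ≤ a → ψ t = ψ a + ∫ y in a..t, φ y := by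
    intro a t _
    rw [hψdef]
    exact (intervalIntegral.integral_add_adjacent_intervals (hφint 0 a) (hφint a t)).symm
  have hψmono : ∀ a t : ℝ, 0 ≤ a → a ≤ t → ψ a ≤ ψ t := by
    intro a t ha hat
    have h1 := hψsplit a t ha
    have h2 : 0 ≤ ∫ y in a..t, φ y := intervalIntegral.integral_nonneg hat (fun u _ => hφnn u)
    linarith
  have hψnn : ∀ t : ℝ, 0 ≤ t → 0 ≤ ψ t := by
    intro t ht
    have h1 := hψmono 0 t le_rfl ht
    have h2 : ψ 0 = 0 := by rw [hψdef]; simp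
    linarith
  set C : ℝ := c0 / ε with hCdef
  have hCpos : 0 < C := div_pos hc0pos hε
  set A : ℝ := ψ (e 1) with hAdef
  have hApos : 0 < A := by
    rw [hAdef, hψdef]
    apply intervalIntegral.intervalIntegral_pos_of_pos_on (hφint 0 (e 1))
    · intro u hu
      exact hφpos u ⟨hu.1, hu.2.le.trans ((hemem 1).2.trans hsx)⟩
    · exact (hemem 1).1
  -- the key pointwise integral inequality
  have hstar : ∀ x : ℝ, 0 < x → x ≤ x₁ → C * ψ (fminv x) ≤ φ x := by
    intro x hx0 hxx1
    obtain ⟨hi1, hi2, hi3⟩ := hfminv_facts x hx0 hxx1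
    have hxs' : x < s := lt_of_le_of_lt hxx1 hx₁_mem.2.1
    have hxe : x ≤ ε := by linarith [hse]
    have hmaps : ∀ y ∈ Icc (0:ℝ) (fminv x), x - f y ∈ Icc (-ε) ε ∧ dist (x - f y) (-ε) < dl := by
      intro y hy
      have hfy1 : ε ≤ f y := by
        rw [← hf0]
        exact hfmono.monotone hy.1
      have hfy2 : f y ≤ x + ε := by
        have h := hfmono.monotone hy.2
        have h2 := hRI x
        rw [hfm (fminv x)] at h2
        linarith
      constructor
      · constructor <;> linarith
      · rw [Real.dist_eq, abs_of_nonneg (by linarith)]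
        have : x - f y + ε ≤ x := by linarith
        linarith [hsd]
    have hkey : ∀ y ∈ Icc (0:ℝ) (fminv x), c0 * φ y ≤ p (x - f y) * φ y := by
      intro y hy
      obtain ⟨hm1, hm2⟩ := hmaps y hy
      exact mul_le_mul_of_nonneg_right (hplow _ hm1 hm2) (hφnn y)
    have hcontI : ContinuousOn (fun y => p (x - f y) * φ y) (Icc (0:ℝ) (fminv x)) := by
      apply ContinuousOn.mul _ hφc.continuousOn
      apply hp.continuousOn.comp ((continuous_const.sub hf.continuous).continuousOn)
      intro y hy
      exact (hmaps y hy).1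
    have hintRHS : IntervalIntegrable (fun y => p (x - f y) * φ y) volume 0 (fminv x) := by
      apply ContinuousOn.intervalIntegrable
      rwa [uIcc_of_le hi1.le]
    have hint : (∫ y in (0:ℝ)..(fminv x), c0 * φ y) ≤ ∫ y in (0:ℝ)..(fminv x), p (x - f y) * φ y :=
      intervalIntegral.integral_mono_on hi1.le ((hφint 0 _).const_mul c0) hintRHS hkey
    have hstat' := hstat x ⟨hx0.le, by linarith [hxs', hsx]⟩
    rw [hstat']
    have hL : C * ψ (fminv x) = (1/ε) * ∫ y in (0:ℝ)..(fminv x), c0 * φ y := by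
      rw [intervalIntegral.integral_const_mul, hψdef, hCdef]
      field_simp
    rw [hL]
    apply mul_le_mul_of_nonneg_left hint
    positivity
  -- ## rates and products
  obtain ⟨ρ, hρdef⟩ : ∃ ρ : ℕ → ℝ, ∀ k, ρ k = (deriv fm (e (k+1)) + L * e (k-1))⁻¹ :=
    ⟨_, fun k => rfl⟩
  have hDpos : ∀ k : ℕ, 0 < deriv fm (e (k+1)) + L * e (k-1) := by
    intro k
    have h1 := (hderiv_bounds _ (he_b (k+1))).1
    have h2 : 0 ≤ L * e (k-1) := mul_nonneg hLnn (hemem _).1.le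
    linarith
  have hρpos : ∀ k, 0 < ρ k := by
    intro k; rw [hρdef]; exact inv_pos.mpr (hDpos k)
  have hρinv : ∀ k, ρ k * (deriv fm (e (k+1)) + L * e (k-1)) = 1 := by
    intro k; rw [hρdef]; exact inv_mul_cancel₀ (hDpos k).ne'
  obtain ⟨V, hVdef⟩ : ∃ V : ℕ → ℝ, ∀ n, V n = ∏ k ∈ Finset.range (n-1), ρ (k+1) ^ (k+1) :=
    ⟨_, fun n => rfl⟩
  have hVpos : ∀ n, 0 < V n := by
    intro n; rw [hVdef]
    exact Finset.prod_pos (fun k _ => pow_pos (hρpos (k+1)) (k+1))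
  have hVsucc : ∀ n, 1 ≤ n → V (n+1) = V n * ρ n ^ n := by
    intro n hn
    rw [hVdef, hVdef, show (n+1)-1 = (n-1)+1 by omega, Finset.prod_range_succ,
      show (n-1)+1 = n by omega]
  have hfminv_e' : ∀ n, 1 ≤ n → fminv (e n) = e (n-1) := by
    intro n hn
    have h := hfminv_e (n-1)
    rwa [show n-1+1 = n by omega] at h
  -- ## the key induction
  have key : ∀ n, 1 ≤ n → ∀ t, e (n+1) ≤ t → t ≤ e (n-1) →
      A * C ^ n * V n * (t - e (n+1)) ^ n / (Nat.factorial n : ℝ) ≤ ψ t := by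
    intro n hn
    induction n, hn using Nat.le_induction with
    | base =>
      intro t ht1 ht2
      have ht2' : t ≤ e 0 := ht2
      have h00 : (0:ℝ) < e 2 := (hemem 2).1
      have hpt : ∀ u ∈ Icc (e 2) t, C * A ≤ φ u := by
        intro u hu
        have hu0 : 0 < u := lt_of_lt_of_le h00 hu.1
        have hux1 : u ≤ x₁ := le_of_le_of_eq (hu.2.trans ht2') he0
        have hs2 := hstar u hu0 hux1
        have hfl : e 1 ≤ fminv u := by
          have h := hfminv_mono.monotone hu.1
          rwa [hfminv_e 1] at h
        have hA2 : A ≤ ψ (fminv u) := by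
          rw [hAdef]; exact hψmono _ _ (hemem 1).1.le hfl
        have h6 := mul_le_mul_of_nonneg_left hA2 hCpos.le
        linarith
      have hint : ∫ u in (e 2)..t, (C * A : ℝ) ≤ ∫ u in (e 2)..t, φ u :=
        intervalIntegral.integral_mono_on ht1 intervalIntegrable_const (hφint _ _) hpt
      have hval : ∫ u in (e 2)..t, (C * A : ℝ) = C * A * (t - e 2) := by
        rw [intervalIntegral.integral_const, smul_eq_mul]; ring
      have hψt : ∫ u in (e 2)..t, φ u ≤ ψ t := by
        have h1 := hψsplit (e 2) t (hemem 2).1.le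
        have h2 : 0 ≤ ψ (e 2) := hψnn _ (hemem 2).1.le
        linarith
      calc A * C ^ 1 * V 1 * (t - e (1+1)) ^ 1 / (Nat.factorial 1 : ℝ)
          = C * A * (t - e 2) := by
            rw [hVdef]
            simp only [show (1:ℕ)-1 = 0 from rfl, Finset.range_zero, Finset.prod_empty,
              pow_one, Nat.factorial_one, Nat.cast_one, div_one, mul_one]
            ring
        _ = ∫ u in (e 2)..t, (C * A : ℝ) := hval.symm
        _ ≤ ∫ u in (e 2)..t, φ u := hint
        _ ≤ ψ t := hψt
    | succ n hn ih =>
      intro t ht1 ht2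
      have ht2' : t ≤ e n := ht2
      show A * C ^ (n+1) * V (n+1) * (t - e (n+2)) ^ (n+1) / (Nat.factorial (n+1) : ℝ) ≤ ψ t
      have hen2 : 0 < e (n+2) := (hemem _).1
      rcases eq_or_lt_of_le ht1 with heq | hlt
      · have hz : A * C ^ (n+1) * V (n+1) * (t - e (n+2)) ^ (n+1) / (Nat.factorial (n+1) : ℝ)
            = 0 := by
          rw [← heq, sub_self, zero_pow (Nat.succ_ne_zero n)]; ring
        rw [hz]
        exact hψnn t (by linarith)
      have hfactpos : (0:ℝ) < (Nat.factorial n : ℝ) := by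
        exact_mod_cast Nat.factorial_pos n
      set K : ℝ := C * (A * C ^ n * V n * ρ n ^ n) / (Nat.factorial n : ℝ) with hKdef
      have hpt : ∀ u ∈ Icc (e (n+2)) t, K * (u - e (n+2)) ^ n ≤ φ u := by
        intro u hu
        have hu0 : 0 < u := lt_of_lt_of_le hen2 hu.1
        have hux1 : u ≤ x₁ := le_of_le_of_eq ((hu.2.trans ht2').trans (hemono (Nat.zero_le n))) he0
        have hs2 := hstar u hu0 hux1
        have hfl : e (n+1) ≤ fminv u := by
          have h := hfminv_mono.monotone hu.1
          rwa [hfminv_e (n+1)] at h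
        have hfu : fminv u ≤ e (n-1) := by
          have h := hfminv_mono.monotone (hu.2.trans ht2')
          rwa [hfminv_e' n hn] at h
        have hih := ih (fminv u) hfl hfu
        have hmvt : ρ n * (u - e (n+2)) ≤ fminv u - e (n+1) := by
          rcases eq_or_lt_of_le hfl with hq | hq
          · have hu2 : u = e (n+2) := by
              rw [hesucc (n+1), hq, hRI]
            rw [← hq, hu2]; simp
          · obtain ⟨ξ, hξmem, hξ⟩ := exists_hasDerivAt_eq_slope fm (deriv fm) hq
              hfm_cont.continuousOn (fun y _ => (hfm_diff y).hasDerivAt)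
            rw [hRI, ← hesucc (n+1)] at hξ
            have hΔpos : (0:ℝ) < fminv u - e (n+1) := sub_pos.mpr hq
            have hξIcc : ξ ∈ Icc (0:ℝ) b := by
              constructor
              · linarith [hξmem.1, (hemem (n+1)).1]
              · have h1 : ξ ≤ fminv u := hξmem.2.le
                have h2 : fminv u ≤ e (n-1) := hfu
                have h3 : e (n-1) ≤ s := (hemem _).2
                linarith [hsb]
            have habs := hLip ξ hξIcc (e (n+1)) (he_b (n+1))
            have habs2 : |ξ - e (n+1)| ≤ e (n-1) := by
              rw [abs_of_nonneg (by linarith [hξmem.1])]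
              have h1 : ξ ≤ fminv u := hξmem.2.le
              linarith [(hemem (n+1)).1]
            have hd_bound : deriv fm ξ ≤ deriv fm (e (n+1)) + L * e (n-1) := by
              have h1 := (abs_le.mp habs).2
              have h2 : L * |ξ - e (n+1)| ≤ L * e (n-1) :=
                mul_le_mul_of_nonneg_left habs2 hLnn
              linarith
            rw [hξ, div_le_iff₀ hΔpos] at hd_bound
            calc ρ n * (u - e (n+2))
                ≤ ρ n * ((deriv fm (e (n+1)) + L * e (n-1)) * (fminv u - e (n+1))) :=
                  mul_le_mul_of_nonneg_left hd_bound (hρpos n).le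
              _ = (ρ n * (deriv fm (e (n+1)) + L * e (n-1))) * (fminv u - e (n+1)) := by ring
              _ = fminv u - e (n+1) := by rw [hρinv n]; ring
        have hpow : (ρ n * (u - e (n+2))) ^ n ≤ (fminv u - e (n+1)) ^ n :=
          pow_le_pow_left₀ (mul_nonneg (hρpos n).le (by linarith [hu.1])) hmvt n
        have hc1 : (0:ℝ) ≤ A * C ^ n * V n :=
          mul_nonneg (mul_nonneg hApos.le (pow_nonneg hCpos.le n)) (hVpos n).le
        have hmul : A * C ^ n * V n * (ρ n * (u - e (n+2))) ^ n / (Nat.factorial n : ℝ)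
            ≤ A * C ^ n * V n * (fminv u - e (n+1)) ^ n / (Nat.factorial n : ℝ) :=
          (div_le_div_iff_of_pos_right hfactpos).mpr (mul_le_mul_of_nonneg_left hpow hc1)
        calc K * (u - e (n+2)) ^ n
            = C * (A * C ^ n * V n * (ρ n * (u - e (n+2))) ^ n / (Nat.factorial n : ℝ)) := by
              rw [hKdef, mul_pow]; ring
          _ ≤ C * (A * C ^ n * V n * (fminv u - e (n+1)) ^ n / (Nat.factorial n : ℝ)) :=
              mul_le_mul_of_nonneg_left hmul hCpos.le
          _ ≤ C * ψ (fminv u) := mul_le_mul_of_nonneg_left hih hCpos.le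
          _ ≤ φ u := hs2
      have hgcont : Continuous (fun u : ℝ => K * (u - e (n+2)) ^ n) :=
        continuous_const.mul ((continuous_id.sub continuous_const).pow n)
      have hint : ∫ u in (e (n+2))..t, K * (u - e (n+2)) ^ n ≤ ∫ u in (e (n+2))..t, φ u :=
        intervalIntegral.integral_mono_on ht1 (hgcont.intervalIntegrable _ _) (hφint _ _) hpt
      have hval : ∫ u in (e (n+2))..t, K * (u - e (n+2)) ^ n
          = K * ((t - e (n+2)) ^ (n+1) / ((n:ℝ)+1)) := by
        rw [intervalIntegral.integral_const_mul]
        congr 1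
        rw [intervalIntegral.integral_comp_sub_right (fun x => x^n) (e (n+2))]
        simp [integral_pow]
      have hψt : ∫ u in (e (n+2))..t, φ u ≤ ψ t := by
        have h1 := hψsplit (e (n+2)) t hen2.le
        have h2 : 0 ≤ ψ (e (n+2)) := hψnn _ hen2.le
        linarith
      have hfact1 : (Nat.factorial (n+1) : ℝ) = ((n:ℝ)+1) * (Nat.factorial n : ℝ) := by
        rw [Nat.factorial_succ]; push_cast; ring
      have hnp1 : ((n:ℝ)+1) ≠ 0 := by positivity
      have heq2 : A * C ^ (n+1) * V (n+1) * (t - e (n+2)) ^ (n+1) / (Nat.factorial (n+1) : ℝ)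
          = K * ((t - e (n+2)) ^ (n+1) / ((n:ℝ)+1)) := by
        rw [hVsucc n hn, hfact1, hKdef]
        field_simp
        ring
      rw [heq2, ← hval]
      exact hint.trans hψt
  -- ## iterate facts
  have hiter_fm : ∀ r j : ℕ, fm^[j] (e r) = e (r + j) := by
    intro r j
    induction j with
    | zero => simp
    | succ k ih =>
      rw [Function.iterate_succ_apply', ih, ← hesucc (r+k)]
      exact congrArg e (by omega)
  have hLIfun : Function.LeftInverse fminv fm := hLI
  have hLIiter : ∀ j (z : ℝ), fminv^[j] (fm^[j] z) = z := fun j => hLIfun.iterate j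
  have hfminv_iter_e : ∀ j n : ℕ, j ≤ n → fminv^[j] (e n) = e (n - j) := by
    intro j n hjn
    have h := hiter_fm (n - j) j
    rw [show n - j + j = n by omega] at h
    rw [← h, hLIiter]
  have hfminv_iter_mono : ∀ j : ℕ, Monotone (fminv^[j]) :=
    fun j => (hfminv_mono.iterate j).monotone
  have hfminv_iter0 : ∀ j : ℕ, fminv^[j] (0:ℝ) = 0 := by
    intro j
    induction j with
    | zero => rfl
    | succ k ih => rw [Function.iterate_succ_apply', ih, hfminv0]
  -- ## comparison rates ρ'
  obtain ⟨ρ', hρ'def⟩ : ∃ r : ℕ → ℝ, ∀ k, r k = (max lm (deriv fm (e (k+1)) - L * e k))⁻¹ :=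
    ⟨_, fun k => rfl⟩
  have hD'pos : ∀ k : ℕ, 0 < max lm (deriv fm (e (k+1)) - L * e k) :=
    fun k => lt_max_of_lt_left hlmpos
  have hρ'pos : ∀ k, 0 < ρ' k := by
    intro k; rw [hρ'def]; exact inv_pos.mpr (hD'pos k)
  set cst : ℝ := 3 * L * x₁ / lm with hcstdef
  have hcstnn : 0 ≤ cst := by
    rw [hcstdef]
    have := hx₁_mem.1
    positivity
  have hcomp : ∀ k : ℕ, ρ' k ≤ (1 + cst * qb ^ k) * ρ (k+1) := by
    intro k
    set D : ℝ := max lm (deriv fm (e (k+1)) - L * e k) with hDdef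
    have hDpos' : 0 < D := hD'pos k
    have hN : ρ (k+1) = (deriv fm (e (k+2)) + L * e k)⁻¹ := hρdef (k+1)
    have hNpos : 0 < deriv fm (e (k+2)) + L * e k := by
      have h1 := (hderiv_bounds _ (he_b (k+2))).1
      have h2 : 0 ≤ L * e k := mul_nonneg hLnn (hemem _).1.le
      linarith
    -- |deriv fm (e (k+2)) - deriv fm (e (k+1))| ≤ L * e k
    have habs := hLip (e (k+2)) (he_b (k+2)) (e (k+1)) (he_b (k+1))
    have habs2 : |e (k+2) - e (k+1)| ≤ e k := by
      rw [abs_of_nonpos (by linarith [hedec (k+1)])]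
      have h1 : e (k+2) ≤ e (k+1) := (hedec (k+1)).le
      have h2 : e (k+1) ≤ e k := (hedec k).le
      have h3 : 0 < e (k+2) := (hemem _).1
      linarith
    have hd12 : deriv fm (e (k+2)) ≤ deriv fm (e (k+1)) + L * e k := by
      have h1 := (abs_le.mp habs).2
      have h2 : L * |e (k+2) - e (k+1)| ≤ L * e k := mul_le_mul_of_nonneg_left habs2 hLnn
      linarith
    have hd2D : deriv fm (e (k+1)) ≤ D + L * e k := by
      have h1 : deriv fm (e (k+1)) - L * e k ≤ D := le_max_right _ _
      linarith
    have hek : L * e k ≤ L * (qb ^ k * x₁) := mul_le_mul_of_nonneg_left (heq k) hLnn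
    have hDc : 3 * (L * (qb ^ k * x₁)) ≤ D * (cst * qb ^ k) := by
      have h1 : lm ≤ D := le_max_left _ _
      have h2 : lm * (cst * qb ^ k) = 3 * (L * (qb ^ k * x₁)) := by
        rw [hcstdef]; field_simp
      have h3 : lm * (cst * qb ^ k) ≤ D * (cst * qb ^ k) := by
        apply mul_le_mul_of_nonneg_right h1
        positivity
      linarith
    have hkey : deriv fm (e (k+2)) + L * e k ≤ D * (1 + cst * qb ^ k) := by
      have h0 : deriv fm (e (k+2)) + L * e k ≤ D + 3 * (L * e k) := by linarith
      have h4 : L * e k ≤ L * (qb ^ k * x₁) := hek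
      have h5 : D * (1 + cst * qb ^ k) = D + D * (cst * qb ^ k) := by ring
      linarith
    -- invert
    have h5 : D⁻¹ * (deriv fm (e (k+2)) + L * e k) ≤ 1 + cst * qb ^ k := by
      have h6 := mul_le_mul_of_nonneg_left hkey (inv_pos.mpr hDpos').le
      calc D⁻¹ * (deriv fm (e (k+2)) + L * e k) ≤ D⁻¹ * (D * (1 + cst * qb ^ k)) := h6
        _ = 1 + cst * qb ^ k := by field_simp
    have hgoal : D⁻¹ ≤ (1 + cst * qb ^ k) * (deriv fm (e (k+2)) + L * e k)⁻¹ := by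
      rw [show (1 + cst * qb ^ k) * (deriv fm (e (k+2)) + L * e k)⁻¹
          = (1 + cst * qb ^ k) / (deriv fm (e (k+2)) + L * e k) from (div_eq_mul_inv _ _).symm,
        le_div_iff₀ hNpos]
      exact h5
    rw [hρ'def, hρdef]
    exact hgoal
  -- ## exponential constant
  set B2 : ℝ := ((1 - qb)⁻¹) ^ 2 with hB2def
  have hB2nn : 0 ≤ B2 := by rw [hB2def]; positivity
  set κ : ℝ := Real.exp (cst * B2) with hκdef
  have hκ1 : 1 ≤ κ := by
    rw [hκdef]
    have h : (0:ℝ) ≤ cst * B2 := mul_nonneg hcstnn hB2nn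
    linarith [Real.add_one_le_exp (cst * B2)]
  have hκpos : 0 < κ := lt_of_lt_of_le one_pos hκ1
  have hprodκ : ∀ n : ℕ, ∏ k ∈ Finset.range (n-1), (1 + cst * qb ^ k) ^ (k+1) ≤ κ := by
    intro n
    have h1 : ∏ k ∈ Finset.range (n-1), (1 + cst * qb ^ k) ^ (k+1)
        ≤ ∏ k ∈ Finset.range (n-1), Real.exp (((k:ℝ)+1) * (cst * qb ^ k)) := by
      apply Finset.prod_le_prod
      · intro k _
        have : (0:ℝ) ≤ cst * qb ^ k := mul_nonneg hcstnn (pow_nonneg hqb0.le k)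
        positivity
      · intro k _
        have h2 : 1 + cst * qb ^ k ≤ Real.exp (cst * qb ^ k) := by
          linarith [Real.add_one_le_exp (cst * qb ^ k)]
        have hnn : (0:ℝ) ≤ 1 + cst * qb ^ k := by
          have : (0:ℝ) ≤ cst * qb ^ k := mul_nonneg hcstnn (pow_nonneg hqb0.le k)
          linarith
        calc (1 + cst * qb ^ k) ^ (k+1) ≤ Real.exp (cst * qb ^ k) ^ (k+1) :=
              pow_le_pow_left₀ hnn h2 (k+1)
          _ = Real.exp (((k:ℝ)+1) * (cst * qb ^ k)) := by
              rw [← Real.exp_nat_mul]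
              congr 1
              push_cast
              ring
    have h3 : ∏ k ∈ Finset.range (n-1), Real.exp (((k:ℝ)+1) * (cst * qb ^ k))
        = Real.exp (∑ k ∈ Finset.range (n-1), ((k:ℝ)+1) * (cst * qb ^ k)) :=
      (Real.exp_sum _ _).symm
    have h4 : ∑ k ∈ Finset.range (n-1), ((k:ℝ)+1) * (cst * qb ^ k)
        = cst * ∑ k ∈ Finset.range (n-1), ((k:ℝ)+1) * qb ^ k := by
      rw [Finset.mul_sum]
      apply Finset.sum_congr rfl
      intro k _
      ring
    have h5 := geom_weight_sum qb hqb0.le hqb1 (n-1)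
    have h6 : cst * ∑ k ∈ Finset.range (n-1), ((k:ℝ)+1) * qb ^ k ≤ cst * B2 := by
      rw [hB2def]
      exact mul_le_mul_of_nonneg_left h5 hcstnn
    calc ∏ k ∈ Finset.range (n-1), (1 + cst * qb ^ k) ^ (k+1)
        ≤ ∏ k ∈ Finset.range (n-1), Real.exp (((k:ℝ)+1) * (cst * qb ^ k)) := h1
      _ = Real.exp (∑ k ∈ Finset.range (n-1), ((k:ℝ)+1) * (cst * qb ^ k)) := h3
      _ ≤ Real.exp (cst * B2) := by
          rw [h4]
          exact Real.exp_le_exp.mpr h6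
      _ = κ := hκdef.symm
  -- ## final constants
  set Φ : ℝ := φ (e 2) with hΦdef
  have hΦpos : 0 < Φ := hφpos _ ⟨(hemem 2).1, (hemem 2).2.trans hsx⟩
  set M : ℝ := min 1 (A * C / (κ * Φ)) with hMdef
  have hMpos : 0 < M := by
    apply lt_min one_pos
    have h1 : 0 < A * C := mul_pos hApos hCpos
    have h2 : 0 < κ * Φ := mul_pos hκpos hΦpos
    positivity
  have hM1 : M ≤ 1 := min_le_left _ _
  have hM2 : M ≤ A * C / (κ * Φ) := min_le_right _ _
  set Ch : ℝ := C * (1 - qb) * M with hChdef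
  have hChpos : 0 < Ch := by
    rw [hChdef]
    have h1 : 0 < 1 - qb := by linarith
    positivity
  have he1s : e 1 < s := by
    have h := hedec 0
    rw [he0] at h
    linarith [hx₁_mem.2.1]
  refine ⟨e 1, ⟨(hemem 1).1, lt_of_lt_of_le he1s hsx⟩, ?_, Ch, hChpos, ?_⟩
  · intro x hx
    obtain ⟨h1, h2, _⟩ := hfm_pos x hx.1 (hx.2.trans he1s.le)
    exact ⟨h1, h2⟩
  intro x hx n hn
  obtain ⟨hx0, hxe1⟩ := hx
  have hxx1 : x ≤ x₁ := by
    have h := hedec 0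
    rw [he0] at h
    linarith
  -- hitting time facts
  have htrans : ∀ k : ℕ, fm^[k] (e 1) = e (k+1) := by
    intro k
    rw [hiter_fm 1 k, Nat.add_comm]
  have hSne : {k : ℕ | fm^[k] (e 1) < x}.Nonempty := by
    obtain ⟨K, hK⟩ := exists_pow_lt_of_lt_one (div_pos hx0 hx₁_mem.1) hqb1
    refine ⟨K, ?_⟩
    simp only [mem_setOf_eq, htrans]
    have h1 : e (K+1) ≤ qb^(K+1) * x₁ := heq (K+1)
    have h3 : qb^K * x₁ < x := (lt_div_iff₀ hx₁_mem.1).mp hK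
    have h4 : qb^(K+1) * x₁ ≤ qb^K * x₁ := by
      have h5 : qb^(K+1) ≤ qb^K := by
        rw [pow_succ]
        calc qb^K * qb ≤ qb^K * 1 := mul_le_mul_of_nonneg_left hqb1.le (pow_nonneg hqb0.le K)
          _ = qb^K := mul_one _
      exact mul_le_mul_of_nonneg_right h5 hx₁_mem.1.le
    linarith
  have hnS : e (n+1) < x := by
    have h := Nat.sInf_mem hSne
    rw [← hn] at h
    simpa only [mem_setOf_eq, htrans] using h
  have hn1 : 1 ≤ n := by
    by_contra hc
    push_neg at hc
    interval_cases n
    simp only [Nat.zero_add] at hnS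
    linarith
  have hupper : x ≤ e n := by
    have h : n - 1 ∉ {k : ℕ | fm^[k] (e 1) < x} := by
      apply Nat.notMem_of_lt_sInf
      rw [← hn]
      omega
    simp only [mem_setOf_eq, htrans] at h
    push_neg at h
    rwa [show n - 1 + 1 = n by omega] at h
  -- apply key at t = fminv x
  obtain ⟨hfi1, hfi2, hfi3⟩ := hfminv_facts x hx0 hxx1
  have hent : e n ≤ fminv x := by
    have h := hfminv_mono.monotone hnS.le
    rwa [hfminv_e n] at h
  have ht1 : e (n+1) ≤ fminv x := (hedec n).le.trans hent
  have ht2 : fminv x ≤ e (n-1) := by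
    have h := hfminv_mono.monotone hupper
    rwa [hfminv_e' n hn1] at h
  have hkey := key n hn1 (fminv x) ht1 ht2
  have hφx := hstar x hx0 hxx1
  have hlow : (1 - qb) * x ≤ fminv x - e (n+1) := by
    have h1 : e (n+1) ≤ qb * e n := (hestep n).2
    have h2 : qb * e n ≤ qb * fminv x := mul_le_mul_of_nonneg_left hent hqb0.le
    have h3 : (1-qb)*x ≤ (1-qb)*fminv x := mul_le_mul_of_nonneg_left hfi3.le (by linarith)
    linarith
  have hfactpos : (0:ℝ) < (Nat.factorial n : ℝ) := by exact_mod_cast Nat.factorial_pos n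
  have hlb : A * C^(n+1) * V n * ((1-qb)*x)^n / (Nat.factorial n : ℝ) ≤ φ x := by
    have hpow : ((1-qb)*x)^n ≤ (fminv x - e (n+1))^n :=
      pow_le_pow_left₀ (mul_nonneg (by linarith) hx0.le) hlow n
    have hc1 : (0:ℝ) ≤ A * C ^ n * V n :=
      mul_nonneg (mul_nonneg hApos.le (pow_nonneg hCpos.le n)) (hVpos n).le
    have h3 : A * C^n * V n * ((1-qb)*x)^n / (Nat.factorial n : ℝ) ≤ ψ (fminv x) := by
      refine le_trans ?_ hkey
      exact (div_le_div_iff_of_pos_right hfactpos).mpr (mul_le_mul_of_nonneg_left hpow hc1)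
    have h4 := mul_le_mul_of_nonneg_left h3 hCpos.le
    calc A * C^(n+1) * V n * ((1-qb)*x)^n / (Nat.factorial n : ℝ)
        = C * (A * C^n * V n * ((1-qb)*x)^n / (Nat.factorial n : ℝ)) := by ring
      _ ≤ C * ψ (fminv x) := h4
      _ ≤ φ x := hφx
  -- bound each factor of the double product
  have hyfacts : ∀ j : ℕ, j ≤ n → 0 < deriv fm (fminv^[j] x) ∧
      (1:ℝ) / deriv fm (fminv^[j] x) ≤ ρ' (n - j) := by
    intro j hjn
    have hy0 : 0 ≤ fminv^[j] x := by
      rw [← hfminv_iter0 j]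
      exact hfminv_iter_mono j hx0.le
    have hyub : fminv^[j] x ≤ e (n - j) := by
      rw [← hfminv_iter_e j n hjn]
      exact hfminv_iter_mono j hupper
    have hyIcc : fminv^[j] x ∈ Icc (0:ℝ) b := ⟨hy0, hyub.trans ((hemem _).2.trans hsb)⟩
    have hdy_lm : lm ≤ deriv fm (fminv^[j] x) := (hderiv_bounds _ hyIcc).1
    have hdypos : 0 < deriv fm (fminv^[j] x) := lt_of_lt_of_le hlmpos hdy_lm
    refine ⟨hdypos, ?_⟩
    have habs := hLip (fminv^[j] x) hyIcc (e (n-j+1)) (he_b (n-j+1))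
    have habs2 : |fminv^[j] x - e (n-j+1)| ≤ e (n-j) := by
      rw [abs_le]
      have h1 : e (n-j+1) ≤ e (n-j) := (hedec _).le
      have h2 : 0 < e (n-j+1) := (hemem _).1
      constructor <;> linarith
    have hdlow : max lm (deriv fm (e (n-j+1)) - L * e (n-j)) ≤ deriv fm (fminv^[j] x) := by
      apply max_le hdy_lm
      have h1 := (abs_le.mp habs).1
      have h2 : L * |fminv^[j] x - e (n-j+1)| ≤ L * e (n-j) :=
        mul_le_mul_of_nonneg_left habs2 hLnn
      linarith
    rw [hρ'def, one_div]
    exact inv_anti₀ (hD'pos _) hdlow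
  have hPnn : (0:ℝ) ≤ ∏ m ∈ Finset.Icc 2 n, ∏ j ∈ Finset.Icc 2 m, 1 / deriv fm (fminv^[j] x) := by
    apply Finset.prod_nonneg
    intro m hm
    apply Finset.prod_nonneg
    intro j hj
    have hj2 := (Finset.mem_Icc.mp hj).2
    have hm2 := (Finset.mem_Icc.mp hm).2
    have := (hyfacts j (hj2.trans hm2)).1
    positivity
  have hPbound : (∏ m ∈ Finset.Icc 2 n, ∏ j ∈ Finset.Icc 2 m, 1 / deriv fm (fminv^[j] x))
      ≤ κ * V n := by
    have h1 : (∏ m ∈ Finset.Icc 2 n, ∏ j ∈ Finset.Icc 2 m, 1 / deriv fm (fminv^[j] x))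
        ≤ ∏ m ∈ Finset.Icc 2 n, ∏ j ∈ Finset.Icc 2 m, ρ' (n - j) := by
      apply Finset.prod_le_prod
      · intro m hm
        apply Finset.prod_nonneg
        intro j hj
        have hj2 := (Finset.mem_Icc.mp hj).2
        have hm2 := (Finset.mem_Icc.mp hm).2
        have := (hyfacts j (hj2.trans hm2)).1
        positivity
      · intro m hm
        apply Finset.prod_le_prod
        · intro j hj
          have hj2 := (Finset.mem_Icc.mp hj).2
          have hm2 := (Finset.mem_Icc.mp hm).2
          have := (hyfacts j (hj2.trans hm2)).1
          positivity
        · intro j hj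
          have hj2 := (Finset.mem_Icc.mp hj).2
          have hm2 := (Finset.mem_Icc.mp hm).2
          exact (hyfacts j (hj2.trans hm2)).2
    have h2 : ∏ m ∈ Finset.Icc 2 n, ∏ j ∈ Finset.Icc 2 m, ρ' (n-j)
        = ∏ k ∈ Finset.range (n-1), ρ' k ^ (k+1) := by
      rw [double_prod_swap (fun j => ρ' (n-j)) n]
      exact prod_reindex ρ' n
    have h3 : ∏ k ∈ Finset.range (n-1), ρ' k ^ (k+1)
        ≤ ∏ k ∈ Finset.range (n-1), ((1 + cst * qb ^ k) * ρ (k+1)) ^ (k+1) := by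
      apply Finset.prod_le_prod
      · intro k _; exact pow_nonneg (hρ'pos k).le _
      · intro k _; exact pow_le_pow_left₀ (hρ'pos k).le (hcomp k) _
    have h4 : ∏ k ∈ Finset.range (n-1), ((1 + cst * qb ^ k) * ρ (k+1)) ^ (k+1)
        = (∏ k ∈ Finset.range (n-1), (1 + cst * qb ^ k) ^ (k+1)) * V n := by
      rw [hVdef, ← Finset.prod_mul_distrib]
      apply Finset.prod_congr rfl
      intro k _
      rw [mul_pow]
    have h5 : (∏ k ∈ Finset.range (n-1), (1 + cst * qb ^ k) ^ (k+1)) * V n ≤ κ * V n :=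
      mul_le_mul_of_nonneg_right (hprodκ n) (hVpos n).le
    calc (∏ m ∈ Finset.Icc 2 n, ∏ j ∈ Finset.Icc 2 m, 1 / deriv fm (fminv^[j] x))
        ≤ ∏ m ∈ Finset.Icc 2 n, ∏ j ∈ Finset.Icc 2 m, ρ' (n-j) := h1
      _ = ∏ k ∈ Finset.range (n-1), ρ' k ^ (k+1) := h2
      _ ≤ ∏ k ∈ Finset.range (n-1), ((1 + cst * qb ^ k) * ρ (k+1)) ^ (k+1) := h3
      _ = (∏ k ∈ Finset.range (n-1), (1 + cst * qb ^ k) ^ (k+1)) * V n := h4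
      _ ≤ κ * V n := h5
  -- final chain
  rw [← hesucc 1]
  have hann : (0:ℝ) ≤ Ch ^ n * x ^ n / (Nat.factorial n : ℝ) :=
    div_nonneg (mul_nonneg (pow_nonneg hChpos.le n) (pow_nonneg hx0.le n)) hfactpos.le
  have hChn : Ch ^ n ≤ (C * (1 - qb))^n * M := by
    rw [hChdef, mul_pow]
    apply mul_le_mul_of_nonneg_left (pow_le_of_le_one hMpos.le hM1 (by omega))
    exact pow_nonneg (mul_nonneg hCpos.le (by linarith)) n
  have hrest : (0:ℝ) ≤ x ^ n / (Nat.factorial n : ℝ) * (κ * V n) * Φ := by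
    apply mul_nonneg (mul_nonneg _ (mul_nonneg hκpos.le (hVpos n).le)) hΦpos.le
    exact div_nonneg (pow_nonneg hx0.le n) hfactpos.le
  calc Ch ^ n * x ^ n / (Nat.factorial n : ℝ)
        * (∏ m ∈ Finset.Icc 2 n, ∏ j ∈ Finset.Icc 2 m, 1 / deriv fm (fminv^[j] x)) * Φ
      ≤ Ch ^ n * x ^ n / (Nat.factorial n : ℝ) * (κ * V n) * Φ :=
        mul_le_mul_of_nonneg_right (mul_le_mul_of_nonneg_left hPbound hann) hΦpos.le
    _ = Ch ^ n * (x ^ n / (Nat.factorial n : ℝ) * (κ * V n) * Φ) := by ring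
    _ ≤ ((C * (1 - qb))^n * M) * (x ^ n / (Nat.factorial n : ℝ) * (κ * V n) * Φ) :=
        mul_le_mul_of_nonneg_right hChn hrest
    _ ≤ ((C * (1 - qb))^n * (A * C / (κ * Φ))) * (x ^ n / (Nat.factorial n : ℝ) * (κ * V n) * Φ) := by
        apply mul_le_mul_of_nonneg_right _ hrest
        apply mul_le_mul_of_nonneg_left hM2
        exact pow_nonneg (mul_nonneg hCpos.le (by linarith)) n
    _ = A * C^(n+1) * V n * ((1-qb)*x)^n / (Nat.factorial n : ℝ) := by
        have halg : ∀ u q AA kk PP vv xx FF : ℝ, kk ≠ 0 → PP ≠ 0 → FF ≠ 0 →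
            ((u*q)^n * (AA*u/(kk*PP))) * (xx^n/FF*(kk*vv)*PP) = AA*u^(n+1)*vv*(q*xx)^n/FF := by
          intro u q AA kk PP vv xx FF hkk hPP hFF
          rw [mul_pow, mul_pow, pow_succ]
          field_simp
        exact halg C (1-qb) A κ Φ (V n) x (Nat.factorial n : ℝ) hκpos.ne' hΦpos.ne'
          hfactpos.ne' 
    _ ≤ φ x := hlb
end
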